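/- arXiv:2107.12935 — 2 statements merged into one kernel-verified Lean document; each statement's English description precedes it below -/
import Mathlib

section
/- Let D be a rooted digraph, v ∈ V−r, S ∈ 𝔖_D(v) and I ∈ 𝒢_D(v). Then there is a path-system ℛ ∈ 𝔓_D(v,S) with I − rv ⊆ E⁺(ℛ). -/
/-!
Common framework: a digraph on a vertex type `V` is given by its edge set
`D : Set (V × V)` (this automatically makes it simple in the sense of having
no parallel edges; absence of loops is the predicate `NoLoops`).
Paths are nonempty duplicate-free lists of vertices.
-/

universe u

variable {V : Type u}

/-- A (directed) path: a nonempty list of pairwise distinct vertices. -/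
structure DiPath (V : Type u) where
  verts : List V
  ne : verts ≠ []
  nodup : verts.Nodup

namespace DiPath

/-- The first vertex of a path. -/
def first (p : DiPath V) : V := p.verts.head p.ne

/-- The last vertex of a path. -/
def last (p : DiPath V) : V := p.verts.getLast p.ne

/-- The set of vertices of a path. -/
def vertexSet (p : DiPath V) : Set V := {x | x ∈ p.verts}

/-- The set of (directed) edges of a path. -/
def edges (p : DiPath V) : Set (V × V) := {e | e ∈ p.verts.zip p.verts.tail}

/-- The last edge of a path (`none` for a trivial path). -/
def lastEdge (p : DiPath V) : Option (V × V) := (p.verts.zip p.verts.tail).getLast?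

/-- The internal vertices of a path. -/
def internal (p : DiPath V) : Set V :=
  {x | x ∈ p.verts ∧ x ≠ p.first ∧ x ≠ p.last}

end DiPath

/-- `p` is a path of the digraph with edge set `D`: consecutive vertices are joined by
edges of `D`. -/
def IsPathIn (D : Set (V × V)) (p : DiPath V) : Prop :=
  List.Chain' (fun a b => (a, b) ∈ D) p.verts

/-- `V⁻(𝒫)`: the set of first vertices of the paths of a path-system. -/
def Vminus (P : Set (DiPath V)) : Set V := DiPath.first '' P

/-- `V⁺(𝒫)`: the set of last vertices of the paths of a path-system. -/
def Vplus (P : Set (DiPath V)) : Set V := DiPath.last '' P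

/-- `E⁺(𝒫)`: the set of last edges of the paths of a path-system. -/
def Eplus (P : Set (DiPath V)) : Set (V × V) := {e | ∃ p ∈ P, p.lastEdge = some e}

/-- `V(𝒫)`: the union of the vertex sets of the paths of a path-system. -/
def vertsOf (P : Set (DiPath V)) : Set V := ⋃ p ∈ P, p.vertexSet

/-- The union of the edge sets of the paths of a path-system. -/
def edgesOf (P : Set (DiPath V)) : Set (V × V) := ⋃ p ∈ P, p.edges

/-- `in_D(v)`: the ingoing edges of `v` in `D`. -/
def inEdges (D : Set (V × V)) (v : V) : Set (V × V) := {e ∈ D | e.2 = v}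

/-- `out_D(v)`: the outgoing edges of `v` in `D`. -/
def outEdges (D : Set (V × V)) (v : V) : Set (V × V) := {e ∈ D | e.1 = v}

/-- `N⁻_D(v)`: the in-neighbours of `v` in `D`. -/
def Nminus (D : Set (V × V)) (v : V) : Set V := {u | (u, v) ∈ D}

/-- A digraph is simple: it has no loops. -/
def NoLoops (D : Set (V × V)) : Prop := ∀ x, (x, x) ∉ D

/-- `r` is a root of `D`: it has no ingoing edges. -/
def IsRoot (D : Set (V × V)) (r : V) : Prop := ∀ u, (u, r) ∉ D

/-- An internally disjoint system of `r → v` paths in `D`. -/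
def IntDisjSys (D : Set (V × V)) (r v : V) (P : Set (DiPath V)) : Prop :=
  (∀ p ∈ P, IsPathIn D p ∧ p.first = r ∧ p.last = v) ∧
  (∀ p ∈ P, ∀ q ∈ P, p ≠ q → p.vertexSet ∩ q.vertexSet ⊆ {r, v})

/-- `𝒢_D(v)` (w.r.t. root `r`): the family of those `I ⊆ in_D(v)` for which some
internally disjoint system `𝒫` of `r → v` paths in `D` satisfies `E⁺(𝒫) = I`. -/
def GSet (D : Set (V × V)) (r v : V) : Set (Set (V × V)) :=
  {I | I ⊆ inEdges D v ∧ ∃ P, IntDisjSys D r v P ∧ Eplus P = I}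

/-- `D` has the vertex-flame property at `v`. -/
def FlameAt (D : Set (V × V)) (r v : V) : Prop := inEdges D v ∈ GSet D r v

/-- `D` has the quasi-vertex-flame property at `v`. -/
def QuasiFlameAt (D : Set (V × V)) (r v : V) : Prop :=
  ∀ I ⊆ inEdges D v, I.Finite → I ∈ GSet D r v

/-- `D` is a quasi-vertex-flame. -/
def QuasiFlame (D : Set (V × V)) (r : V) : Prop := ∀ v, v ≠ r → QuasiFlameAt D r v

/-- A strongly maximal internally disjoint system of `r → v` paths in `D`. -/
def StronglyMaximal (D : Set (V × V)) (r v : V) (P : Set (DiPath V)) : Prop :=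
  IntDisjSys D r v P ∧
  ∀ Q, IntDisjSys D r v Q → Cardinal.mk ↥(Q \ P) ≤ Cardinal.mk ↥(P \ Q)

/-- `L` is large w.r.t. `D` (rooted at `r`): for every `v ≠ r` some strongly maximal
internally disjoint `r → v` path-system of `D` lies in `L`. -/
def IsLarge (D L : Set (V × V)) (r : V) : Prop :=
  ∀ v, v ≠ r → ∃ P, StronglyMaximal D r v P ∧ ∀ p ∈ P, IsPathIn L p

/-- A `v`-fan: a system of paths of `D` starting at `v` and pairwise sharing only `v`. -/
def Fan (D : Set (V × V)) (v : V) (P : Set (DiPath V)) : Prop :=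
  (∀ p ∈ P, IsPathIn D p ∧ p.first = v) ∧
  (∀ p ∈ P, ∀ q ∈ P, p ≠ q → p.vertexSet ∩ q.vertexSet = {v})

/-- A `v`-infan: a system of paths of `D` ending at `v` and pairwise sharing only `v`. -/
def Infan (D : Set (V × V)) (v : V) (P : Set (DiPath V)) : Prop :=
  (∀ p ∈ P, IsPathIn D p ∧ p.last = v) ∧
  (∀ p ∈ P, ∀ q ∈ P, p ≠ q → p.vertexSet ∩ q.vertexSet = {v})

/-- `X` is linked from `v` in `D`. -/
def LinkedFrom (D : Set (V × V)) (v : V) (X : Set V) : Prop :=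
  ∃ P, Fan D v P ∧ Vplus P = X

/-- `X` is linked to `v` in `D`. -/
def LinkedTo (D : Set (V × V)) (v : V) (X : Set V) : Prop :=
  ∃ P, Infan D v P ∧ Vminus P = X

/-- A path-system `P` is orthogonal to `S`: `S` is obtained by choosing exactly one
internal vertex from each path of `P`. -/
def Orthogonal (P : Set (DiPath V)) (S : Set V) : Prop :=
  ∃ f : DiPath V → V, (∀ p ∈ P, f p ∈ p.internal) ∧ Set.InjOn f P ∧ f '' P = S

/-- `𝔓_D(v,S)`: internally disjoint `r → v` path-systems in `D` orthogonal to `S`. -/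
def EMsys (D : Set (V × V)) (r v : V) (S : Set V) : Set (Set (DiPath V)) :=
  {P | IntDisjSys D r v P ∧ Orthogonal P S}

/-- `S` separates `v` from `r` in `D`: every `r → v` path of `D` meets `S`. -/
def SeparatesRV (D : Set (V × V)) (r v : V) (S : Set V) : Prop :=
  ∀ p : DiPath V, IsPathIn D p → p.first = r → p.last = v → ∃ s ∈ S, s ∈ p.verts

/-- `𝔖_D(v)`: the Erdős–Menger separations between `r` and `v`. -/
def EMSep (D : Set (V × V)) (r v : V) : Set (Set V) :=
  {S | S ⊆ {x | x ≠ r ∧ x ≠ v} ∧ SeparatesRV (D \ {(r, v)}) r v S ∧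
    (EMsys D r v S).Nonempty}

/-- `D ↾_v I`: delete the ingoing edges of `v` that are neither in `I` nor equal to `rv`. -/
def restrictIn (D : Set (V × V)) (r v : V) (I : Set (V × V)) : Set (V × V) :=
  {e ∈ D | e.2 = v → (e ∈ I ∨ e = (r, v))}

/-- `ent_D(X)`: the entrance of `X`. -/
def ent (D : Set (V × V)) (X : Set V) : Set V :=
  {v ∈ X | ∃ u, u ∉ X ∧ (u, v) ∈ D}

/-- `int_D(X)`: the interior of `X`. -/
def intD (D : Set (V × V)) (X : Set V) : Set V := X \ ent D X

/-- The edge set of the induced subdigraph `D[B]`. -/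
def induceE (D : Set (V × V)) (B : Set V) : Set (V × V) :=
  {e ∈ D | e.1 ∈ B ∧ e.2 ∈ B}

/-- `B ⊆ V − r` is a `v`-bubble in `D`: there is a `v`-infan `{P_u : u ∈ ent_D(B) − v}`
in `D[B]` where `P_u` starts at `u`. -/
def IsBubble (D : Set (V × V)) (r v : V) (B : Set V) : Prop :=
  B ⊆ {x | x ≠ r} ∧ ∃ P, Infan (induceE D B) v P ∧ Vminus P = ent D B \ {v}

/-- `B_{D,v}`: the union of all `v`-bubbles of `D` (the largest `v`-bubble, when it exists). -/
def maxBubble (D : Set (V × V)) (r v : V) : Set V := ⋃₀ {B | IsBubble D r v B}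

/-- An anti-bubble of `D`: a set `A ⊆ V − r` whose entrance is linked from `r` in `D`. -/
def AntiBubble (D : Set (V × V)) (r : V) (A : Set V) : Prop :=
  A ⊆ {x | x ≠ r} ∧ LinkedFrom D r (ent D A)

/-- `A_{D,v}`: the intersection of all anti-bubbles of `D` containing `{v} ∪ N⁻_{D−rv}(v)`. -/
def Acap (D : Set (V × V)) (r v : V) : Set V :=
  ⋂₀ {A | AntiBubble D r A ∧ insert v (Nminus (D \ {(r, v)}) v) ⊆ A}

/-- `T_{D,v} := ent_{D−rv}(A_{D,v})`. -/
def Tsep (D : Set (V × V)) (r v : V) : Set V := ent (D \ {(r, v)}) (Acap D r v)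

/-- `S_{L,v} := ent_{L−rv}(B_{L,v})`. -/
def Ssep (L : Set (V × V)) (r v : V) : Set V := ent (L \ {(r, v)}) (maxBubble L r v)

/-- An `X → Y` path: exactly its first vertex lies in `X` and exactly its last vertex in `Y`. -/
def XYPath (X Y : Set V) (p : DiPath V) : Prop :=
  p.vertexSet ∩ X = {p.first} ∧ p.vertexSet ∩ Y = {p.last}

/-- A system of pairwise vertex-disjoint `X → Y` paths in `D`. -/
def DisjSys (D : Set (V × V)) (X Y : Set V) (P : Set (DiPath V)) : Prop :=
  (∀ p ∈ P, IsPathIn D p ∧ XYPath X Y p) ∧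
  (∀ p ∈ P, ∀ q ∈ P, p ≠ q → Disjoint p.vertexSet q.vertexSet)

/-- The vertex list of `P v Q`: the initial segment of `P` up to `v` followed by the
terminal segment of `Q` from `v`. -/
def spliceVerts [DecidableEq V] (p q : DiPath V) (v : V) : List V :=
  p.verts.takeWhile (fun x => decide (x ≠ v)) ++ q.verts.dropWhile (fun x => decide (x ≠ v))

namespace EMCov
variable {V : Type u}

lemma exists_last_split (P : V → Prop) (l : List V) (h : ∃ x ∈ l, P x) :
    ∃ u x w, l = u ++ x :: w ∧ P x ∧ ∀ y ∈ w, ¬ P y := by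
  induction l with
  | nil => simp at h
  | cons a l ih =>
    by_cases h' : ∃ x ∈ l, P x
    · obtain ⟨u, x, w, rfl, hx, hw⟩ := ih h'
      exact ⟨a :: u, x, w, rfl, hx, hw⟩
    · have ha : P a := by
        obtain ⟨x, hx, hPx⟩ := h
        rcases List.mem_cons.1 hx with rfl | hx
        · exact hPx
        · exact absurd ⟨x, hx, hPx⟩ h'
      exact ⟨[], a, l, rfl, ha, fun y hy hPy => h' ⟨y, hy, hPy⟩⟩

lemma exists_first_split (P : V → Prop) (l : List V) (h : ∃ x ∈ l, P x) :
    ∃ u x w, l = u ++ x :: w ∧ P x ∧ ∀ y ∈ u, ¬ P y := by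
  induction l with
  | nil => simp at h
  | cons a l ih =>
    by_cases ha : P a
    · exact ⟨[], a, l, rfl, ha, by simp⟩
    · have h' : ∃ x ∈ l, P x := by
        obtain ⟨x, hx, hPx⟩ := h
        rcases List.mem_cons.1 hx with rfl | hx
        · exact absurd hPx ha
        · exact ⟨x, hx, hPx⟩
      obtain ⟨u, x, w, rfl, hx, hu⟩ := ih h'
      exact ⟨a :: u, x, w, rfl, hx, by
        intro y hy
        rcases List.mem_cons.1 hy with rfl | hy
        · exact ha
        · exact hu y hy⟩

lemma getLast?_cons_of_some {α : Type*} (x : α) {L : List α} {e : α}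
    (h : L.getLast? = some e) : (x :: L).getLast? = some e := by
  cases L with
  | nil => simp at h
  | cons y t => rw [List.getLast?_cons_cons]; exact h

/-- the "last edge" of a list of vertices. -/
def lastE (l : List V) : Option (V × V) := (l.zip l.tail).getLast?

lemma lastE_append_pair (u : List V) (a b : V) : lastE (u ++ [a, b]) = some (a, b) := by
  induction u with
  | nil => rfl
  | cons c u ih =>
    cases u with
    | nil => rfl
    | cons d u' =>
      have : lastE (c :: d :: (u' ++ [a, b])) =
          ((c, d) :: ((d :: (u' ++ [a, b])).zip (u' ++ [a, b]))).getLast? := rfl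
      show lastE (c :: d :: (u' ++ [a, b])) = _
      rw [this]
      exact getLast?_cons_of_some _ ih

lemma lastE_eq_some_iff (l : List V) (e : V × V) :
    lastE l = some e ↔ ∃ u, l = u ++ [e.1, e.2] := by
  constructor
  · intro h
    induction l with
    | nil => simp [lastE] at h
    | cons a l ih =>
      cases l with
      | nil => simp [lastE] at h
      | cons b m =>
        cases m with
        | nil =>
          simp only [lastE, List.zip_cons_cons, List.tail_cons, List.zip_nil_right,
            List.getLast?_singleton, Option.some.injEq] at h
          subst h
          exact ⟨[], rfl⟩
        | cons c m' =>
          have h' : lastE (b :: c :: m') = some e := by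
            have : lastE (a :: b :: c :: m') = ((a, b) :: (b :: c :: m').zip (c :: m')).getLast? := rfl
            rw [this] at h
            rcases hz : ((b :: c :: m').zip (c :: m')) with _ | ⟨z, zs⟩
            · simp [List.zip_cons_cons] at hz
            · rw [hz, List.getLast?_cons_cons] at h
              show ((b :: c :: m').zip (c :: m')).getLast? = some e
              rw [hz]
              exact h
          obtain ⟨u, hu⟩ := ih h'
          exact ⟨a :: u, by rw [List.cons_append, ← hu]⟩
  · rintro ⟨u, rfl⟩
    exact lastE_append_pair u e.1 e.2

end EMCov

namespace EMCov
variable {V : Type u}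

lemma chain'_iff_mem_zip {R : V → V → Prop} : ∀ (l : List V),
    l.Chain' R ↔ ∀ e ∈ l.zip l.tail, R e.1 e.2
  | [] => by simp [List.Chain']
  | [a] => by simp [List.Chain']
  | a :: b :: l => by
    rw [show List.Chain' R (a :: b :: l) ↔ R a b ∧ List.Chain' R (b :: l) from List.isChain_cons_cons]
    have : (a :: b :: l).zip (a :: b :: l).tail = (a, b) :: (b :: l).zip (b :: l).tail := rfl
    rw [this]
    rw [chain'_iff_mem_zip (b :: l)]
    constructor
    · rintro ⟨hab, h⟩ e he
      rcases List.mem_cons.1 he with rfl | he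
      · exact hab
      · exact h e he
    · intro h
      exact ⟨h (a, b) (List.mem_cons_self), fun e he => h e (List.mem_cons_of_mem _ he)⟩

lemma head?_of_prefix {l₁ l₂ : List V} (h : l₁ <+: l₂) (hne : l₁ ≠ []) : l₂.head? = l₁.head? := by
  obtain ⟨r, rfl⟩ := h
  exact List.head?_append_of_ne_nil _ hne

lemma eq_drop_of_suffix {l₁ l₂ : List V} (h : l₁ <:+ l₂) :
    l₁ = l₂.drop (l₂.length - l₁.length) := by
  obtain ⟨u, rfl⟩ := h
  simp [List.drop_left']

lemma suffix_of_suffix_length_le {l₁ l₂ l₃ : List V} (h1 : l₁ <:+ l₃) (h2 : l₂ <:+ l₃)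
    (h : l₁.length ≤ l₂.length) : l₁ <:+ l₂ := by
  have e1 := eq_drop_of_suffix h1
  have e2 := eq_drop_of_suffix h2
  have hl2 : l₂.length ≤ l₃.length := h2.length_le
  have key : l₂.drop (l₂.length - l₁.length) = l₁ := by
    set k := l₂.length - l₁.length with hk
    conv_lhs => rw [e2]
    rw [List.drop_drop,
      show l₃.length - l₂.length + k = l₃.length - l₁.length from by omega,
      ← e1]
  rw [← key]
  exact List.drop_suffix _ _

lemma suffix_comparable {l₁ l₂ l₃ : List V} (h1 : l₁ <:+ l₃) (h2 : l₂ <:+ l₃) :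
    l₁ <:+ l₂ ∨ l₂ <:+ l₁ := by
  rcases le_total l₁.length l₂.length with h | h
  · exact Or.inl (suffix_of_suffix_length_le h1 h2 h)
  · exact Or.inr (suffix_of_suffix_length_le h2 h1 h)

lemma exists_last_two (l : List V) (h2 : 2 ≤ l.length) : ∃ u a b, l = u ++ [a, b] := by
  induction l with
  | nil => simp at h2
  | cons a l ih =>
    cases l with
    | nil => simp at h2
    | cons b m =>
      cases m with
      | nil => exact ⟨[], a, b, rfl⟩
      | cons c m' =>
        obtain ⟨u, x, y, hu⟩ := ih (by simp)
        exact ⟨a :: u, x, y, by rw [List.cons_append, ← hu]⟩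

lemma lastE_of_suffix {m l : List V} (h : m <:+ l) (h2 : 2 ≤ m.length) : lastE l = lastE m := by
  obtain ⟨u, rfl⟩ := h
  obtain ⟨w, a, b, rfl⟩ := exists_last_two m h2
  rw [lastE_append_pair, ← List.append_assoc, lastE_append_pair]

lemma length_two_of_head_last {l : List V} {a b : V} (h1 : l.head? = some a)
    (h2 : l.getLast? = some b) (hab : a ≠ b) : 2 ≤ l.length := by
  cases l with
  | nil => simp at h1
  | cons x m =>
    cases m with
    | nil =>
      simp at h1 h2
      subst h1; subst h2
      exact absurd rfl hab
    | cons y m' => simp [List.length_cons]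

lemma mem_zip_tail {l : List V} {e : V × V} :
    e ∈ l.zip l.tail ↔ ∃ u w, l = u ++ e.1 :: e.2 :: w := by
  constructor
  · intro h
    induction l with
    | nil => simp at h
    | cons a l ih =>
      cases l with
      | nil => simp at h
      | cons b m =>
        have : (a :: b :: m).zip (a :: b :: m).tail = (a, b) :: (b :: m).zip (b :: m).tail := rfl
        rw [this] at h
        rcases List.mem_cons.1 h with rfl | h
        · exact ⟨[], m, rfl⟩
        · obtain ⟨u, w, hu⟩ := ih h
          exact ⟨a :: u, w, by rw [List.cons_append, ← hu]⟩
  · rintro ⟨u, w, rfl⟩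
    induction u with
    | nil => exact List.mem_cons_self
    | cons c u ih =>
      cases u with
      | nil => exact List.mem_cons_of_mem _ ih
      | cons d u' => exact List.mem_cons_of_mem _ ih

lemma mem_of_getLast?' {l : List V} {x : V} (h : l.getLast? = some x) : x ∈ l := by
  have hx : x ∈ l.getLast? := by rw [Option.mem_def]; exact h
  obtain ⟨hne, hx'⟩ := List.mem_getLast?_eq_getLast hx
  rw [hx']
  exact List.getLast_mem hne

lemma prefix_whole_of_getLast_mem {l₁ l₂ : List V} {x : V} (h : l₁ <+: l₂) (hnd : l₂.Nodup)
    (hl : l₂.getLast? = some x) (hx : x ∈ l₁) : l₁ = l₂ := by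
  obtain ⟨r, rfl⟩ := h
  cases r with
  | nil => simp
  | cons c r' =>
    exfalso
    have hx2 : x ∈ c :: r' := by
      have := List.getLast?_append_of_ne_nil (l₂ := c :: r') l₁ (by simp)
      rw [this] at hl
      obtain ⟨hne, hx'⟩ := List.mem_getLast?_eq_getLast hl
      rw [hx']
      exact List.getLast_mem hne
    rw [List.nodup_append] at hnd
    exact hnd.2.2 _ hx _ hx2 rfl

end EMCov

namespace EMCov
variable {V : Type u}

/-- The instance data for the abstract path-rerouting (Pym-style) argument:
`A i` are internally disjoint paths from `emb i` to `v`, `t p` are internally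
disjoint paths from `emb (src p)` to `v`. -/
structure CInst (V : Type u) : Type (u + 1) where
  D : Set (V × V)
  v : V
  ι : Type u
  κ : Type u
  A : ι → List V
  t : κ → List V
  src : κ → ι
  emb : ι → V
  hAhead : ∀ i, (A i).head? = some (emb i)
  hAlast : ∀ i, (A i).getLast? = some v
  hAnd : ∀ i, (A i).Nodup
  hAch : ∀ i, (A i).Chain' (fun a b => (a, b) ∈ D)
  hthead : ∀ p, (t p).head? = some (emb (src p))
  htlast : ∀ p, (t p).getLast? = some v
  htnd : ∀ p, (t p).Nodup
  htch : ∀ p, (t p).Chain' (fun a b => (a, b) ∈ D)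
  hvne : ∀ i, emb i ≠ v
  hAA : ∀ i j, i ≠ j → ∀ x, x ∈ A i → x ∈ A j → x = v
  htt : ∀ p q, p ≠ q → ∀ x, x ∈ t p → x ∈ t q → x = v

variable {C : CInst V}

/-- A configuration of the rerouting process. -/
structure Conf (C : CInst V) where
  pref : C.ι → List V
  asg : C.ι → Option C.κ
  ban : C.κ → List V

def tailpart (γ : Conf C) (i : C.ι) : List V :=
  match γ.asg i with
  | none => []
  | some p => (γ.ban p).tail

def sig (γ : Conf C) (i : C.ι) : List V := γ.pref i ++ tailpart γ i

lemma tailpart_none {γ : Conf C} {i} (h : γ.asg i = none) : tailpart γ i = [] := by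
  unfold tailpart; rw [h]

lemma tailpart_some {γ : Conf C} {i p} (h : γ.asg i = some p) :
    tailpart γ i = (γ.ban p).tail := by
  unfold tailpart; rw [h]

structure IsValid (γ : Conf C) : Prop where
  v1 : ∀ i, γ.pref i ≠ [] ∧ γ.pref i <+: C.A i
  v2 : ∀ i, γ.asg i = none → γ.pref i = C.A i
  v3 : ∀ i p, γ.asg i = some p → ∃ u z tl, C.t p = u ++ z :: tl ∧
        (γ.pref i).getLast? = some z ∧ z ≠ C.v ∧ γ.ban p = z :: tl
  v4 : ∀ p, γ.ban p <:+ C.t p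
  v5 : ∀ p x, x ∈ γ.ban p → x ≠ C.v → ∀ i, γ.asg i ≠ some p → x ∉ γ.pref i
  v6 : ∀ i j, i ≠ j → ∀ x, x ∈ sig γ i → x ∈ sig γ j → x = C.v
  v7 : ∀ i p, γ.asg i = some p → ∀ x, x ∈ (γ.ban p).tail → x ≠ C.v → x ∉ γ.pref i

def nus (γ : Conf C) (i : C.ι) : ℕ := (C.A i).length - (γ.pref i).length
def nup (γ : Conf C) (p : C.κ) : ℕ := (γ.ban p).length

def CLe (γ δ : Conf C) : Prop :=
  (∀ i, (γ.pref i = δ.pref i ∧ γ.asg i = δ.asg i) ∨ nus γ i < nus δ i) ∧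
  (∀ p, γ.ban p = δ.ban p ∨ nup γ p < nup δ p)

lemma CLe.refl (γ : Conf C) : CLe γ γ :=
  ⟨fun _ => Or.inl ⟨rfl, rfl⟩, fun _ => Or.inl rfl⟩

lemma CLe.trans {γ δ ε : Conf C} (h1 : CLe γ δ) (h2 : CLe δ ε) : CLe γ ε := by
  constructor
  · intro i
    rcases h1.1 i with ⟨hp, ha⟩ | hlt
    · rcases h2.1 i with ⟨hp', ha'⟩ | hlt'
      · exact Or.inl ⟨hp.trans hp', ha.trans ha'⟩
      · exact Or.inr (by unfold nus at *; rw [hp]; exact hlt')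
    · rcases h2.1 i with ⟨hp', _⟩ | hlt'
      · exact Or.inr (by unfold nus at *; rw [← hp']; exact hlt)
      · exact Or.inr (hlt.trans hlt')
  · intro p
    rcases h1.2 p with hb | hlt
    · rcases h2.2 p with hb' | hlt'
      · exact Or.inl (hb.trans hb')
      · exact Or.inr (by unfold nup at *; rw [hb]; exact hlt')
    · rcases h2.2 p with hb' | hlt'
      · exact Or.inr (by unfold nup at *; rw [← hb']; exact hlt)
      · exact Or.inr (hlt.trans hlt')

/-- The initial configuration. -/
def conf0 (C : CInst V) : Conf C := ⟨fun i => C.A i, fun _ => none, fun _ => []⟩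

lemma isValid_conf0 : IsValid (conf0 C) := by
  constructor
  · intro i
    refine ⟨?_, List.prefix_refl _⟩
    intro h
    have := C.hAhead i
    rw [show (conf0 C).pref i = C.A i from rfl] at h
    rw [h] at this; simp at this
  · intro i _; rfl
  · intro i p h; simp [conf0] at h
  · intro p; exact List.nil_suffix
  · intro p x hx; simp [conf0] at hx
  · intro i j hij x hx hy
    have hx' : x ∈ C.A i := by
      simpa [sig, conf0, tailpart] using hx
    have hy' : x ∈ C.A j := by
      simpa [sig, conf0, tailpart] using hy
    exact C.hAA i j hij x hx' hy'
  · intro i p h; simp [conf0] at h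

lemma nus_le (γ : Conf C) (i : C.ι) : nus γ i ≤ (C.A i).length := Nat.sub_le _ _

lemma nup_le_of_valid {γ : Conf C} (h : IsValid γ) (p : C.κ) : nup γ p ≤ (C.t p).length :=
  (h.v4 p).length_le

end EMCov

namespace EMCov
variable {V : Type u} {C : CInst V}

def VConf (C : CInst V) := {γ : Conf C // IsValid γ}

def VLe (γ δ : VConf C) : Prop := CLe γ.1 δ.1

lemma chains_bounded (c : Set (VConf C)) (hc : IsChain VLe c) :
    ∃ ub : VConf C, ∀ a ∈ c, VLe a ub := by
  rcases c.eq_empty_or_nonempty with rfl | hne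
  · exact ⟨⟨conf0 C, isValid_conf0⟩, by simp⟩
  have cmp : ∀ γ ∈ c, ∀ δ ∈ c, CLe γ.1 δ.1 ∨ CLe δ.1 γ.1 := by
    intro γ hγ δ hδ
    rcases eq_or_ne γ δ with rfl | hne'
    · exact Or.inl (CLe.refl _)
    · exact hc hγ hδ hne'
  have above_list : ∀ L : List (VConf C), (∀ γ ∈ L, γ ∈ c) →
      ∃ ε ∈ c, ∀ γ ∈ L, CLe γ.1 ε.1 := by
    intro L
    induction L with
    | nil => exact fun _ => ⟨hne.choose, hne.choose_spec, by simp⟩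
    | cons a L ih =>
      intro hL
      obtain ⟨ε, hε, hεL⟩ := ih (fun γ hγ => hL γ (List.mem_cons_of_mem _ hγ))
      have ha := hL a (List.mem_cons_self)
      rcases cmp a ha ε hε with h | h
      · exact ⟨ε, hε, fun γ hγ => by
          rcases List.mem_cons.1 hγ with rfl | hγ
          · exact h
          · exact hεL γ hγ⟩
      · exact ⟨a, ha, fun γ hγ => by
          rcases List.mem_cons.1 hγ with rfl | hγ
          · exact CLe.refl _
          · exact (hεL γ hγ).trans h⟩
  -- maximizers
  have hmax_s : ∀ i, ∃ γ, γ ∈ c ∧ ∀ δ ∈ c, nus δ.1 i ≤ nus γ.1 i := by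
    intro i
    have hbdd : BddAbove ((fun γ : VConf C => nus γ.1 i) '' c) :=
      ⟨(C.A i).length, by rintro n ⟨γ, _, rfl⟩; exact nus_le _ _⟩
    have hmem := Nat.sSup_mem (hne.image _) hbdd
    obtain ⟨γ, hγ, hγeq⟩ := hmem
    refine ⟨γ, hγ, fun δ hδ => ?_⟩
    calc nus δ.1 i ≤ sSup ((fun γ : VConf C => nus γ.1 i) '' c) := le_csSup hbdd ⟨δ, hδ, rfl⟩
      _ = nus γ.1 i := hγeq.symm
  have hmax_p : ∀ p, ∃ γ, γ ∈ c ∧ ∀ δ ∈ c, nup δ.1 p ≤ nup γ.1 p := by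
    intro p
    have hbdd : BddAbove ((fun γ : VConf C => nup γ.1 p) '' c) :=
      ⟨(C.t p).length, by rintro n ⟨γ, _, rfl⟩; exact nup_le_of_valid γ.2 p⟩
    have hmem := Nat.sSup_mem (hne.image _) hbdd
    obtain ⟨γ, hγ, hγeq⟩ := hmem
    refine ⟨γ, hγ, fun δ hδ => ?_⟩
    calc nup δ.1 p ≤ sSup ((fun γ : VConf C => nup γ.1 p) '' c) := le_csSup hbdd ⟨δ, hδ, rfl⟩
      _ = nup γ.1 p := hγeq.symm
  choose gi hgi hgimax using hmax_s
  choose gp hgp hgpmax using hmax_p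
  set lim : Conf C :=
    ⟨fun i => (gi i).1.pref i, fun i => (gi i).1.asg i, fun p => (gp p).1.ban p⟩ with hlim
  have pull_s : ∀ i, ∀ δ ∈ c, CLe (gi i).1 δ.1 →
      δ.1.pref i = lim.pref i ∧ δ.1.asg i = lim.asg i := by
    intro i δ hδ h
    rcases h.1 i with ⟨hp, ha⟩ | hlt
    · exact ⟨hp.symm, ha.symm⟩
    · exact absurd hlt (not_lt.2 (hgimax i δ hδ))
  have pull_p : ∀ p, ∀ δ ∈ c, CLe (gp p).1 δ.1 → δ.1.ban p = lim.ban p := by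
    intro p δ hδ h
    rcases h.2 p with hb | hlt
    · exact hb.symm
    · exact absurd hlt (not_lt.2 (hgpmax p δ hδ))
  have coord_s : ∀ i, ∀ γ ∈ c,
      (γ.1.pref i = lim.pref i ∧ γ.1.asg i = lim.asg i) ∨ nus γ.1 i < nus lim i := by
    intro i γ hγ
    have hlimnus : nus lim i = nus (gi i).1 i := rfl
    rcases cmp γ hγ (gi i) (hgi i) with h | h
    · rcases h.1 i with ⟨hp, ha⟩ | hlt
      · exact Or.inl ⟨hp, ha⟩
      · exact Or.inr (by rw [hlimnus]; exact hlt)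
    · exact Or.inl (pull_s i γ hγ h)
  have coord_p : ∀ p, ∀ γ ∈ c, γ.1.ban p = lim.ban p ∨ nup γ.1 p < nup lim p := by
    intro p γ hγ
    have hlimnup : nup lim p = nup (gp p).1 p := rfl
    rcases cmp γ hγ (gp p) (hgp p) with h | h
    · rcases h.2 p with hb | hlt
      · exact Or.inl hb
      · exact Or.inr (by rw [hlimnup]; exact hlt)
    · exact Or.inl (pull_p p γ hγ h)
  -- helper: sig agreement
  have sig_agree : ∀ i, ∀ ε ∈ c, CLe (gi i).1 ε.1 →
      (∀ p, lim.asg i = some p → ε.1.ban p = lim.ban p) → sig ε.1 i = sig lim i := by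
    intro i ε hε hle hban
    obtain ⟨hp, ha⟩ := pull_s i ε hε hle
    have htp : tailpart ε.1 i = tailpart lim i := by
      cases hasg : lim.asg i with
      | none => rw [tailpart_none (ha.trans hasg), tailpart_none hasg]
      | some p => rw [tailpart_some (ha.trans hasg), tailpart_some hasg, hban p hasg]
    unfold sig
    rw [hp, htp]
  -- validity of lim
  have hval : IsValid lim := by
    constructor
    · intro i; exact (gi i).2.v1 i
    · intro i h; exact (gi i).2.v2 i h
    · intro i p h
      obtain ⟨ε, hε, hεL⟩ := above_list [gi i, gp p] (by
        intro γ hγ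
        rcases List.mem_cons.1 hγ with rfl | hγ
        · exact hgi i
        · simp at hγ; subst hγ; exact hgp p)
      have h1 := pull_s i ε hε (hεL _ (by simp))
      have h2 := pull_p p ε hε (hεL _ (by simp))
      have := ε.2.v3 i p (by rw [h1.2]; exact h)
      rw [h1.1, h2] at this
      exact this
    · intro p; exact (gp p).2.v4 p
    · intro p x hx hxv i hasg
      obtain ⟨ε, hε, hεL⟩ := above_list [gi i, gp p] (by
        intro γ hγ
        rcases List.mem_cons.1 hγ with rfl | hγ
        · exact hgi i
        · simp at hγ; subst hγ; exact hgp p)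
      have h1 := pull_s i ε hε (hεL _ (by simp))
      have h2 := pull_p p ε hε (hεL _ (by simp))
      have := ε.2.v5 p x (by rw [h2]; exact hx) hxv i (by rw [h1.2]; exact hasg)
      rw [h1.1] at this
      exact this
    · intro i j hij x hxi hxj
      set Li : List (VConf C) := match lim.asg i with | none => [] | some p => [gp p] with hLi
      set Lj : List (VConf C) := match lim.asg j with | none => [] | some p => [gp p] with hLj
      obtain ⟨ε, hε, hεL⟩ := above_list ([gi i, gi j] ++ Li ++ Lj) (by
        intro γ hγ
        simp only [List.mem_append, List.mem_cons] at hγ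
        rcases hγ with ((rfl | rfl | h) | hγ) | hγ
        · exact hgi i
        · exact hgi j
        · simp at h
        · rcases hasg : lim.asg i with _ | p
          · rw [hLi, hasg] at hγ; simp at hγ
          · rw [hLi, hasg] at hγ; simp at hγ; subst hγ; exact hgp p
        · rcases hasg : lim.asg j with _ | p
          · rw [hLj, hasg] at hγ; simp at hγ
          · rw [hLj, hasg] at hγ; simp at hγ; subst hγ; exact hgp p)
      have hsi : sig ε.1 i = sig lim i := by
        refine sig_agree i ε hε (hεL _ (by simp)) ?_
        intro p hp
        refine pull_p p ε hε (hεL _ ?_)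
        simp only [List.mem_append]
        left; right
        rw [hLi, hp]; simp
      have hsj : sig ε.1 j = sig lim j := by
        refine sig_agree j ε hε (hεL _ (by simp)) ?_
        intro p hp
        refine pull_p p ε hε (hεL _ ?_)
        simp only [List.mem_append]
        right
        rw [hLj, hp]; simp
      exact ε.2.v6 i j hij x (by rw [hsi]; exact hxi) (by rw [hsj]; exact hxj)
    · intro i p hasg x hx hxv
      obtain ⟨ε, hε, hεL⟩ := above_list [gi i, gp p] (by
        intro γ hγ
        rcases List.mem_cons.1 hγ with rfl | hγ
        · exact hgi i
        · simp at hγ; subst hγ; exact hgp p)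
      have h1 := pull_s i ε hε (hεL _ (by simp))
      have h2 := pull_p p ε hε (hεL _ (by simp))
      have := ε.2.v7 i p (by rw [h1.2]; exact hasg) x (by rw [h2]; exact hx) hxv
      rw [h1.1] at this
      exact this
  exact ⟨⟨lim, hval⟩, fun γ hγ => ⟨fun i => coord_s i γ hγ, fun p => coord_p p γ hγ⟩⟩

end EMCov

namespace EMCov
variable {V : Type u} {C : CInst V}

lemma pref_nodup {γ : Conf C} (hγ : IsValid γ) (i : C.ι) : (γ.pref i).Nodup :=
  ((hγ.v1 i).2.sublist).nodup (C.hAnd i)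

lemma mem_ban_sub {γ : Conf C} (hγ : IsValid γ) {p : C.κ} {x : V} (hx : x ∈ γ.ban p) :
    x ∈ C.t p := (hγ.v4 p).sublist.subset hx

lemma pref_head? {γ : Conf C} (hγ : IsValid γ) (i : C.ι) :
    (γ.pref i).head? = some (C.emb i) := by
  rw [← head?_of_prefix (hγ.v1 i).2 (hγ.v1 i).1]
  exact C.hAhead i

lemma emb_mem_pref {γ : Conf C} (hγ : IsValid γ) (i : C.ι) : C.emb i ∈ γ.pref i :=
  List.mem_of_mem_head? (by rw [pref_head? hγ i]; rfl)

lemma mem_pref_sub {γ : Conf C} (hγ : IsValid γ) {i : C.ι} {x : V} (hx : x ∈ γ.pref i) :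
    x ∈ C.A i := (hγ.v1 i).2.sublist.subset hx

lemma mem_tailpart_sub {γ : Conf C} {i : C.ι} {p : C.κ} (h : γ.asg i = some p)
    {x : V} (hx : x ∈ tailpart γ i) : x ∈ (γ.ban p) := by
  rw [tailpart_some h] at hx
  exact List.mem_of_mem_tail hx

/-- The key step: any unseated `p₀` can be seated, strictly increasing the configuration. -/
lemma exists_step (γ : Conf C) (hγ : IsValid γ) (p₀ : C.κ) (hp : ∀ i, γ.asg i ≠ some p₀) :
    ∃ δ : Conf C, IsValid δ ∧ CLe γ δ ∧ ¬ CLe δ γ := by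
  classical
  set P : V → Prop := fun x => x ≠ C.v ∧ ∃ i, x ∈ sig γ i with hP
  have hKne : ∃ x ∈ C.t p₀, P x := by
    refine ⟨C.emb (C.src p₀), List.mem_of_mem_head? (by rw [C.hthead p₀]; rfl),
      C.hvne _, C.src p₀, ?_⟩
    exact List.mem_append_left _ (emb_mem_pref hγ _)
  obtain ⟨u, z, w, htp0, hzP, hw⟩ := exists_last_split P (C.t p₀) hKne
  obtain ⟨hzv, i₀, hzi₀⟩ := hzP
  -- z lies in the prefix part of i₀
  have hzpref : z ∈ γ.pref i₀ := by
    rcases List.mem_append.1 hzi₀ with h | h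
    · exact h
    · exfalso
      cases hasg : γ.asg i₀ with
      | none => rw [tailpart_none hasg] at h; simp at h
      | some p' =>
        have hzt : z ∈ C.t p' := mem_ban_sub hγ (mem_tailpart_sub hasg h)
        have hne' : p' ≠ p₀ := fun he => hp i₀ (by rw [hasg, he])
        have : z ∈ C.t p₀ := htp0 ▸ (by simp)
        exact hzv (C.htt p' p₀ hne' z hzt this)
  have hztp0 : z ∈ C.t p₀ := htp0 ▸ (by simp)
  obtain ⟨a, b, hab⟩ := List.append_of_mem hzpref
  have hprefnd := pref_nodup hγ i₀
  -- b is nonempty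
  have hbne : b ≠ [] := by
    intro hb
    subst hb
    have hlast : (γ.pref i₀).getLast? = some z := by
      rw [hab]
      rw [List.getLast?_append_of_ne_nil _ (l₂ := [z]) (by simp)]
      rfl
    cases hasg : γ.asg i₀ with
    | none =>
      have := hγ.v2 i₀ hasg
      rw [this] at hlast
      rw [C.hAlast i₀] at hlast
      exact hzv (by injection hlast with h; exact h.symm)
    | some p' =>
      obtain ⟨u', z', tl', ht', hlast', hz'v, hban'⟩ := hγ.v3 i₀ p' hasg
      have hzz' : z = z' := by
        rw [hlast] at hlast'; injection hlast'
      have hne' : p' ≠ p₀ := fun he => hp i₀ (by rw [hasg, he])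
      have hz't : z' ∈ C.t p' := by rw [ht']; simp
      exact hzv (hzz' ▸ C.htt p' p₀ hne' z' hz't (hzz' ▸ hztp0))
  -- the new configuration
  set δ : Conf C := ⟨Function.update γ.pref i₀ (a ++ [z]),
    Function.update γ.asg i₀ (some p₀), Function.update γ.ban p₀ (z :: w)⟩ with hδ
  have hδpref : δ.pref i₀ = a ++ [z] := by
    show Function.update γ.pref i₀ (a ++ [z]) i₀ = a ++ [z]
    exact Function.update_self _ _ _
  have hδasg : δ.asg i₀ = some p₀ := by
    show Function.update γ.asg i₀ (some p₀) i₀ = some p₀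
    exact Function.update_self _ _ _
  have hδban : δ.ban p₀ = z :: w := by
    show Function.update γ.ban p₀ (z :: w) p₀ = z :: w
    exact Function.update_self _ _ _
  have hδprefne : ∀ j, j ≠ i₀ → δ.pref j = γ.pref j := by
    intro j hj
    show Function.update γ.pref i₀ (a ++ [z]) j = γ.pref j
    exact Function.update_of_ne hj _ _
  have hδasgne : ∀ j, j ≠ i₀ → δ.asg j = γ.asg j := by
    intro j hj
    show Function.update γ.asg i₀ (some p₀) j = γ.asg j
    exact Function.update_of_ne hj _ _
  have hδbanne : ∀ p, p ≠ p₀ → δ.ban p = γ.ban p := by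
    intro p hq
    show Function.update γ.ban p₀ (z :: w) p = γ.ban p
    exact Function.update_of_ne hq _ _
  -- new pref is a sub-prefix of the old
  have hsubpref : ∀ x, x ∈ a ++ [z] → x ∈ γ.pref i₀ := by
    intro x hx
    rw [hab]
    rcases List.mem_append.1 hx with h | h
    · exact List.mem_append_left _ h
    · simp at h; subst h; simp
  have hppref : (a ++ [z]) <+: γ.pref i₀ := by
    rw [hab]
    exact ⟨b, by simp⟩
  -- tailparts away from i₀ don't change
  have htp_eq : ∀ j, j ≠ i₀ → tailpart δ j = tailpart γ j := by
    intro j hj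
    cases hasg : γ.asg j with
    | none => rw [tailpart_none (by rw [hδasgne j hj]; exact hasg), tailpart_none hasg]
    | some p =>
      have hne' : p ≠ p₀ := fun he => hp j (by rw [hasg, he])
      rw [tailpart_some (by rw [hδasgne j hj]; exact hasg), tailpart_some hasg,
        hδbanne p hne']
  have hsig_eq : ∀ j, j ≠ i₀ → sig δ j = sig γ j := by
    intro j hj
    unfold sig
    rw [hδprefne j hj, htp_eq j hj]
  have hsigδi₀ : sig δ i₀ = (a ++ [z]) ++ w := by
    unfold sig
    rw [hδpref, tailpart_some hδasg, hδban]
    rfl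
  -- elements of w are clean
  have hwclean : ∀ y ∈ w, y ≠ C.v → ∀ j, y ∉ sig γ j := by
    intro y hy hyv j hyj
    exact hw y hy ⟨hyv, j, hyj⟩
  -- key: new sig of i₀ doesn't meet old sigs
  have hkey : ∀ x, x ∈ sig δ i₀ → x ≠ C.v → ∀ j, j ≠ i₀ → x ∉ sig γ j := by
    intro x hx hxv j hj hxj
    rw [hsigδi₀] at hx
    rcases List.mem_append.1 hx with h | h
    · have hxi₀ : x ∈ sig γ i₀ := List.mem_append_left _ (hsubpref x h)
      exact hxv (hγ.v6 i₀ j (fun he => hj he.symm) x hxi₀ hxj)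
    · exact hwclean x h hxv j hxj
  refine ⟨δ, ?_, ?_, ?_⟩
  · constructor
    · -- v1
      intro i
      rcases eq_or_ne i i₀ with rfl | hi
      · rw [hδpref]
        exact ⟨by simp, hppref.trans (hγ.v1 i).2⟩
      · rw [hδprefne i hi]; exact hγ.v1 i
    · -- v2
      intro i h
      rcases eq_or_ne i i₀ with rfl | hi
      · rw [hδasg] at h; exact absurd h (by simp)
      · rw [hδprefne i hi]; exact hγ.v2 i (by rw [← hδasgne i hi]; exact h)
    · -- v3
      intro i p h
      rcases eq_or_ne i i₀ with rfl | hi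
      · rw [hδasg] at h
        injection h with h
        subst h
        refine ⟨u, z, w, htp0, ?_, hzv, hδban⟩
        rw [hδpref, List.getLast?_append_of_ne_nil _ (l₂ := [z]) (by simp)]
        rfl
      · rw [hδasgne i hi] at h
        have hne' : p ≠ p₀ := fun he => hp i (by rw [h, he])
        rw [hδprefne i hi, hδbanne p hne']
        exact hγ.v3 i p h
    · -- v4
      intro p
      rcases eq_or_ne p p₀ with rfl | hq
      · rw [hδban]; exact ⟨u, htp0.symm⟩
      · rw [hδbanne p hq]; exact hγ.v4 p
    · -- v5
      intro p x hx hxv i hasg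
      rcases eq_or_ne p p₀ with rfl | hq
      · -- p = p₀ : x ∈ z :: w
        rw [hδban] at hx
        have hii₀ : i ≠ i₀ := by
          intro he; subst he
          exact hasg hδasg
        rw [hδprefne i hii₀]
        rcases List.mem_cons.1 hx with rfl | hx
        · -- x = z
          intro hmem
          have : x ∈ sig γ i := List.mem_append_left _ hmem
          exact hxv (hγ.v6 i i₀ hii₀ x this hzi₀)
        · -- x ∈ w
          intro hmem
          exact hwclean x hx hxv i (List.mem_append_left _ hmem)
      · -- p ≠ p₀
        rw [hδbanne p hq] at hx
        rcases eq_or_ne i i₀ with rfl | hi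
        · -- i = i₀
          rw [hδpref]
          cases hasg₀ : γ.asg i with
          | none =>
            have := hγ.v5 p x hx hxv i (by rw [hasg₀]; simp)
            intro hmem
            exact this (hsubpref x hmem)
          | some p' =>
            rcases eq_or_ne p p' with rfl | hpp'
            · -- p previously seated at i₀, being displaced
              obtain ⟨u', z', tl', ht', hlast', hz'v, hban'⟩ := hγ.v3 i p hasg₀
              rw [hban'] at hx
              rcases List.mem_cons.1 hx with rfl | hx
              · -- x = z' = old junction, is not in a ++ [z]
                intro hmem
                have hz'b : x ∈ b := by
                  rw [hab] at hlast'
                  rw [List.getLast?_append_of_ne_nil _ (l₂ := z :: b) (by simp)] at hlast'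
                  cases b with
                  | nil => exact absurd rfl hbne
                  | cons c b' =>
                    rw [List.getLast?_cons_cons] at hlast'
                    exact mem_of_getLast?' hlast'
                have hnd := hprefnd
                rw [hab, List.nodup_append] at hnd
                rcases List.mem_append.1 hmem with h | h
                · exact hnd.2.2 _ h _ (List.mem_cons_of_mem _ hz'b) rfl
                · simp at h
                  subst h
                  exact (List.nodup_cons.1 hnd.2.1).1 hz'b
              · -- x in the old tail tl'
                have := hγ.v7 i p hasg₀ x (by rw [hban']; exact hx) hxv
                intro hmem
                exact this (hsubpref x hmem)
            · have := hγ.v5 p x hx hxv i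
                (by rw [hasg₀]; exact fun he => hpp' (by injection he with h; exact h.symm))
              intro hmem
              exact this (hsubpref x hmem)
        · rw [hδprefne i hi]
          exact hγ.v5 p x hx hxv i (by rw [← hδasgne i hi]; exact hasg)
    · -- v6
      intro i j hij x hxi hxj
      rcases eq_or_ne i i₀ with rfl | hi
      · have hji : j ≠ i := hij.symm
        by_contra hxv
        rw [hsig_eq j hij.symm] at hxj
        exact hkey x hxi hxv j hij.symm hxj
      · rcases eq_or_ne j i₀ with rfl | hj
        · by_contra hxv
          rw [hsig_eq i hi] at hxi
          exact hkey x hxj hxv i hi hxi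
        · rw [hsig_eq i hi] at hxi
          rw [hsig_eq j hj] at hxj
          exact hγ.v6 i j hij x hxi hxj
    · -- v7
      intro i p hasg x hx hxv
      rcases eq_or_ne i i₀ with rfl | hi
      · rw [hδasg] at hasg
        injection hasg with hasg
        subst hasg
        rw [hδban] at hx
        rw [hδpref]
        intro hmem
        exact hwclean x hx hxv i (List.mem_append_left _ (hsubpref x hmem))
      · rw [hδasgne i hi] at hasg
        have hne' : p ≠ p₀ := fun he => hp i (by rw [hasg, he])
        rw [hδbanne p hne'] at hx
        rw [hδprefne i hi]
        exact hγ.v7 i p hasg x hx hxv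
  · -- CLe γ δ
    constructor
    · intro i
      rcases eq_or_ne i i₀ with rfl | hi
      · right
        unfold nus
        rw [hδpref]
        have h1 : (γ.pref i).length ≤ (C.A i).length := (hγ.v1 i).2.length_le
        have h2 : (a ++ [z]).length < (γ.pref i).length := by
          rw [hab]
          simp
          cases b with
          | nil => exact absurd rfl hbne
          | cons c b' => simp
        omega
      · left
        rw [hδprefne i hi, hδasgne i hi]
        exact ⟨rfl, rfl⟩
    · intro p
      rcases eq_or_ne p p₀ with rfl | hq
      · right
        unfold nup
        rw [hδban]
        -- γ.ban p₀ is a proper suffix of z :: w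
        have h1 : γ.ban p ∉ ({z :: w} : Set (List V)) → True := fun _ => trivial
        have hzb : z ∉ γ.ban p := by
          intro hzb
          exact hγ.v5 p z hzb hzv i₀ (hp i₀) hzpref
        have hsuf : γ.ban p <:+ z :: w ∨ z :: w <:+ γ.ban p :=
          suffix_comparable (hγ.v4 p) ⟨u, htp0.symm⟩
        rcases hsuf with h | h
        · rcases Nat.lt_or_ge (γ.ban p).length (z :: w).length with h' | h'
          · exact h'
          · exact absurd (h.eq_of_length (le_antisymm h.length_le h')) (by
              intro he; rw [he] at hzb; simp at hzb)
        · exact absurd (h.subset (by simp)) hzb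
      · left
        exact (hδbanne p hq).symm
  · -- ¬ CLe δ γ
    intro hle
    rcases hle.1 i₀ with ⟨hpeq, _⟩ | hlt
    · rw [hδpref, hab] at hpeq
      have := congrArg List.length hpeq
      simp at this
      cases b with
      | nil => exact hbne rfl
      | cons c b' => simp at this
    · unfold nus at hlt
      rw [hδpref] at hlt
      have h1 : (γ.pref i₀).length ≤ (C.A i₀).length := (hγ.v1 i₀).2.length_le
      have h2 : (a ++ [z]).length < (γ.pref i₀).length := by
        rw [hab]
        simp
        cases b with
        | nil => exact absurd rfl hbne
        | cons c b' => simp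
      omega

end EMCov

namespace EMCov
variable {V : Type u} {C : CInst V}

lemma getLast?_suffix_eq {m l : List V} (h : m <:+ l) (hne : m ≠ []) :
    l.getLast? = m.getLast? := by
  obtain ⟨u, rfl⟩ := h
  exact List.getLast?_append_of_ne_nil _ hne

lemma exists_append_singleton {l : List V} {z : V} (h : l.getLast? = some z) :
    ∃ a, l = a ++ [z] := by
  induction l with
  | nil => simp at h
  | cons c l ih =>
    cases l with
    | nil =>
      simp at h
      subst h
      exact ⟨[], rfl⟩
    | cons d l' =>
      rw [List.getLast?_cons_cons] at h
      obtain ⟨a, ha⟩ := ih h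
      exact ⟨c :: a, by rw [List.cons_append, ← ha]⟩

lemma ban_tail_ne_nil {γ : Conf C} (hγ : IsValid γ) {p : C.κ} {u : List V} {z : V}
    {tl : List V} (ht : C.t p = u ++ z :: tl) (hzv : z ≠ C.v) (hban : γ.ban p = z :: tl) :
    tl ≠ [] := by
  intro h
  subst h
  have h1 : (γ.ban p).getLast? = (C.t p).getLast? :=
    (EMCov.getLast?_suffix_eq (hγ.v4 p) (by rw [hban]; simp)).symm
  rw [hban, C.htlast] at h1
  simp at h1
  exact hzv h1

theorem claim_main (C : CInst V) : ∃ σ : C.ι → List V,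
    (∀ i, (σ i).head? = some (C.emb i)) ∧
    (∀ i, (σ i).getLast? = some C.v) ∧
    (∀ i, (σ i).Nodup) ∧
    (∀ i, (σ i).Chain' (fun a b => (a, b) ∈ C.D)) ∧
    (∀ i j, i ≠ j → ∀ x, x ∈ σ i → x ∈ σ j → x = C.v) ∧
    (∀ p, ∃ i, lastE (σ i) = lastE (C.t p)) ∧
    (∀ i x, x ∈ σ i → x ∈ C.A i ∨ ∃ p, x ∈ (C.t p).tail) := by
  obtain ⟨m, hm⟩ := exists_maximal_of_chains_bounded (r := VLe (C := C)) chains_bounded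
    (fun hab hbc => CLe.trans hab hbc)
  have hmax : ∀ p, ∃ i, m.1.asg i = some p := by
    intro p
    by_contra h
    push_neg at h
    obtain ⟨δ, hδval, hle, hnle⟩ := exists_step m.1 m.2 p h
    exact hnle (hm ⟨δ, hδval⟩ hle)
  set γ := m.1 with hγdef
  have hγ := m.2
  refine ⟨sig γ, ?_, ?_, ?_, ?_, ?_, ?_, ?_⟩
  · -- head?
    intro i
    unfold sig
    rw [List.head?_append_of_ne_nil _ (hγ.v1 i).1]
    exact pref_head? hγ i
  · -- getLast?
    intro i
    cases hasg : γ.asg i with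
    | none =>
      unfold sig
      rw [tailpart_none hasg, List.append_nil, hγ.v2 i hasg]
      exact C.hAlast i
    | some p =>
      obtain ⟨u, z, tl, ht, hlast, hzv, hban⟩ := hγ.v3 i p hasg
      have htl : tl ≠ [] := ban_tail_ne_nil hγ ht hzv hban
      unfold sig
      rw [tailpart_some hasg, hban]
      show (γ.pref i ++ tl).getLast? = some C.v
      rw [List.getLast?_append_of_ne_nil _ htl]
      have h1 : (γ.ban p).getLast? = (C.t p).getLast? :=
        (EMCov.getLast?_suffix_eq (hγ.v4 p) (by rw [hban]; simp)).symm
      rw [hban, C.htlast] at h1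
      cases tl with
      | nil => exact absurd rfl htl
      | cons d tl' =>
        rw [List.getLast?_cons_cons] at h1
        exact h1
  · -- Nodup
    intro i
    cases hasg : γ.asg i with
    | none =>
      unfold sig
      rw [tailpart_none hasg, List.append_nil]
      exact pref_nodup hγ i
    | some p =>
      obtain ⟨u, z, tl, ht, hlast, hzv, hban⟩ := hγ.v3 i p hasg
      unfold sig
      rw [tailpart_some hasg, hban]
      show (γ.pref i ++ tl).Nodup
      rw [List.nodup_append]
      refine ⟨pref_nodup hγ i, ?_, ?_⟩
      · have : (C.t p).Nodup := C.htnd p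
        rw [ht] at this
        exact ((List.nodup_append.1 this).2.1).of_cons
      · intro x hx y hx' hxy
        subst hxy
        rcases eq_or_ne x C.v with rfl | hxv
        · -- v ∈ pref i is impossible
          have hwhole := prefix_whole_of_getLast_mem (hγ.v1 i).2 (C.hAnd i) (C.hAlast i) hx
          rw [hwhole] at hlast
          rw [C.hAlast i] at hlast
          exact hzv (by injection hlast with h; exact h.symm)
        · exact hγ.v7 i p hasg x (by rw [hban]; exact hx') hxv hx
  · -- Chain'
    intro i
    cases hasg : γ.asg i with
    | none =>
      unfold sig
      rw [tailpart_none hasg, List.append_nil, hγ.v2 i hasg]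
      exact C.hAch i
    | some p =>
      obtain ⟨u, z, tl, ht, hlast, hzv, hban⟩ := hγ.v3 i p hasg
      unfold sig
      rw [tailpart_some hasg, hban]
      show ((γ.pref i ++ tl).Chain' _)
      rw [List.Chain', List.isChain_append]
      have hchsuf : (z :: tl).Chain' (fun a b => (a, b) ∈ C.D) :=
        (C.htch p).suffix (by rw [ht]; exact ⟨u, rfl⟩)
      refine ⟨(C.hAch i).prefix (hγ.v1 i).2, hchsuf.tail, ?_⟩
      intro x hx y hy
      rw [hlast] at hx
      simp at hx
      subst hx
      exact (List.isChain_cons.1 hchsuf).1 y hy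
  · -- pairwise
    exact hγ.v6
  · -- lastE coverage
    intro p
    obtain ⟨i, hasg⟩ := hmax p
    refine ⟨i, ?_⟩
    obtain ⟨u, z, tl, ht, hlast, hzv, hban⟩ := hγ.v3 i p hasg
    have htl : tl ≠ [] := ban_tail_ne_nil hγ ht hzv hban
    have hlen : 2 ≤ (z :: tl).length := by
      cases tl with
      | nil => exact absurd rfl htl
      | cons d tl' => simp
    have h1 : lastE (C.t p) = lastE (z :: tl) :=
      lastE_of_suffix (by rw [ht]; exact ⟨u, rfl⟩) hlen
    obtain ⟨a, ha⟩ := exists_append_singleton hlast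
    have h2 : sig γ i = a ++ (z :: tl) := by
      unfold sig
      rw [tailpart_some hasg, hban, ha]
      simp
    have h3 : lastE (sig γ i) = lastE (z :: tl) := by
      rw [h2]
      exact lastE_of_suffix ⟨a, rfl⟩ hlen
    rw [h1, h3]
  · -- membership decomposition
    intro i x hx
    rcases List.mem_append.1 hx with h | h
    · exact Or.inl (mem_pref_sub hγ h)
    · cases hasg : γ.asg i with
      | none => rw [tailpart_none hasg] at h; simp at h
      | some p =>
        obtain ⟨u, z, tl, ht, hlast, hzv, hban⟩ := hγ.v3 i p hasg
        rw [tailpart_some hasg, hban] at h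
        refine Or.inr ⟨p, ?_⟩
        rw [ht]
        cases u with
        | nil => exact h
        | cons c u' =>
          show x ∈ u' ++ z :: tl
          exact List.mem_append_right _ (List.mem_cons_of_mem _ h)

end EMCov

namespace EMCov
variable {V : Type u}

lemma no_rv_edge {l : List V} {r v : V} (hnd : l.Nodup) (hl : l.getLast? = some v)
    (hlast : lastE l ≠ some (r, v)) : ∀ e ∈ l.zip l.tail, e ≠ (r, v) := by
  intro e he heq
  subst heq
  obtain ⟨u, w, hw⟩ := mem_zip_tail.1 he
  cases w with
  | nil =>
    exact hlast (by rw [hw]; exact lastE_append_pair u r v)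
  | cons c w' =>
    have hsuf : (v :: c :: w') <:+ l := ⟨u ++ [r], by rw [hw]; simp⟩
    have h1 : l.getLast? = (v :: c :: w').getLast? := EMCov.getLast?_suffix_eq hsuf (by simp)
    rw [hl, List.getLast?_cons_cons] at h1
    have hv : v ∈ c :: w' := mem_of_getLast?' h1.symm
    have hnd' : (v :: c :: w').Nodup := hsuf.sublist.nodup hnd
    exact (List.nodup_cons.1 hnd').1 hv

lemma first_eq_of_head? {p : DiPath V} {x : V} (h : p.verts.head? = some x) : p.first = x := by
  have := List.head?_eq_head p.ne
  rw [h] at this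
  injection this with h'
  exact h'.symm

lemma head?_eq_of_first {p : DiPath V} : p.verts.head? = some p.first :=
  List.head?_eq_head p.ne

lemma last_eq_of_getLast? {p : DiPath V} {x : V} (h : p.verts.getLast? = some x) : p.last = x := by
  have := List.getLast?_eq_getLast_of_ne_nil p.ne
  rw [h] at this
  injection this with h'
  exact h'.symm

lemma getLast?_eq_of_last {p : DiPath V} : p.verts.getLast? = some p.last :=
  List.getLast?_eq_getLast_of_ne_nil p.ne

lemma lastEdge_eq_lastE (p : DiPath V) : p.lastEdge = lastE p.verts := rfl

end EMCov


/-- For `S ∈ 𝔖_D(v)` and `I ∈ 𝒢_D(v)` there is an `R ∈ 𝔓_D(v,S)` with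
`I − rv ⊆ E⁺(R)`. -/
theorem em_system_covering (D : Set (V × V)) (r : V)
    (hsimple : NoLoops D) (hroot : IsRoot D r)
    (v : V) (hv : v ≠ r) (S : Set V) (hS : S ∈ EMSep D r v)
    (I : Set (V × V)) (hI : I ∈ GSet D r v) :
    ∃ R ∈ EMsys D r v S, I \ {(r, v)} ⊆ Eplus R := by
  classical
  obtain ⟨hIsub, Ps, ⟨hPprop, hPdisj⟩, hPE⟩ := hI
  obtain ⟨hSsub, hsep, Qs, ⟨hQprop, hQdisj⟩, f, hf1, hf2, hf3⟩ := hS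
  -- the Q-family indexed by S
  have hQex : ∀ i : ↥S, ∃ q, q ∈ Qs ∧ f q = ↑i := by
    intro i
    have : (i : V) ∈ f '' Qs := hf3 ▸ i.2
    obtain ⟨q, hq, hfq⟩ := this
    exact ⟨q, hq, hfq⟩
  choose Q hQm hQf using hQex
  have hqch : ∀ i, IsPathIn D (Q i) := fun i => (hQprop _ (hQm i)).1
  have hqfst : ∀ i, (Q i).first = r := fun i => (hQprop _ (hQm i)).2.1
  have hqlst : ∀ i, (Q i).last = v := fun i => (hQprop _ (hQm i)).2.2
  have hqhead : ∀ i, (Q i).verts.head? = some r := fun i => by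
    rw [EMCov.head?_eq_of_first, hqfst]
  have hqlast : ∀ i, (Q i).verts.getLast? = some v := fun i => by
    rw [EMCov.getLast?_eq_of_last, hqlst]
  have hqnd : ∀ i, (Q i).verts.Nodup := fun i => (Q i).nodup
  have hint : ∀ i : ↥S, (↑i : V) ∈ (Q i).verts ∧ (↑i : V) ≠ r ∧ (↑i : V) ≠ v := by
    intro i
    have h := hf1 (Q i) (hQm i)
    rw [hQf i] at h
    exact ⟨h.1, (hqfst i) ▸ h.2.1, (hqlst i) ▸ h.2.2⟩
  have hQS : ∀ i : ↥S, ∀ x ∈ (Q i).verts, x ∈ S → x = ↑i := by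
    intro i x hx hxS
    rw [← hf3] at hxS
    obtain ⟨q', hq', rfl⟩ := hxS
    by_cases hqq : q' = Q i
    · rw [hqq, hQf]
    · exfalso
      have hint' := hf1 q' hq'
      have h1 : f q' ∈ (Q i).vertexSet ∩ q'.vertexSet := ⟨hx, hint'.1⟩
      have h2 := hQdisj (Q i) (hQm i) q' hq' (fun h => hqq h.symm) h1
      rcases h2 with h2 | h2
      · exact hint'.2.1 ((hQprop _ hq').2.1 ▸ h2)
      · exact hint'.2.2 ((hQprop _ hq').2.2 ▸ h2)
  have hQQ : ∀ i j : ↥S, i ≠ j → ∀ x, x ∈ (Q i).verts → x ∈ (Q j).verts → x = r ∨ x = v := by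
    intro i j hij x hxi hxj
    have hne : Q i ≠ Q j := by
      intro h
      exact hij (Subtype.ext (by rw [← hQf i, ← hQf j, h]))
    have := hQdisj (Q i) (hQm i) (Q j) (hQm j) hne ⟨hxi, hxj⟩
    rcases this with h | h
    · exact Or.inl h
    · exact Or.inr h
  -- split each Q i at i
  choose preQ postQ hsplitQ using fun i : ↥S => List.append_of_mem (hint i).1
  set Av : ↥S → List V := fun i => (↑i : V) :: postQ i with hAvdef
  have hAvsuf : ∀ i, Av i <:+ (Q i).verts := fun i => ⟨preQ i, (hsplitQ i).symm⟩
  have hprend : ∀ i, (preQ i).Nodup := by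
    intro i
    have := hqnd i
    rw [hsplitQ i, List.nodup_append] at this
    exact this.1
  have hAvnd : ∀ i, (Av i).Nodup := fun i => (hAvsuf i).sublist.nodup (hqnd i)
  have hpredisj : ∀ i, ∀ x ∈ preQ i, x ∉ Av i := by
    intro i x hx
    have := hqnd i
    rw [hsplitQ i, List.nodup_append] at this
    exact fun h => this.2.2 _ hx _ h rfl
  have hprene : ∀ i, preQ i ≠ [] := by
    intro i h
    have hh := hqhead i
    rw [hsplitQ i, h] at hh
    simp at hh
    exact (hint i).2.1 hh
  have hprehead : ∀ i, (preQ i).head? = some r := by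
    intro i
    have := hqhead i
    rw [hsplitQ i, List.head?_append_of_ne_nil _ (hprene i)] at this
    exact this
  have hrpre : ∀ i, r ∈ preQ i := fun i =>
    List.mem_of_mem_head? (by rw [hprehead i]; rfl)
  have hAvlast : ∀ i, (Av i).getLast? = some v := by
    intro i
    have := hqlast i
    rw [hsplitQ i, List.getLast?_append_of_ne_nil _ (l₂ := Av i) (by simp [hAvdef])] at this
    exact this
  have hAvhead : ∀ i, (Av i).head? = some (↑i : V) := fun i => rfl
  have hAvch : ∀ i, (Av i).Chain' (fun a b => (a, b) ∈ D) := fun i =>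
    (hqch i).suffix (hAvsuf i)
  have hrAv : ∀ i, r ∉ Av i := fun i h => hpredisj i r (hrpre i) h
  have hvpre : ∀ i, v ∉ preQ i := by
    intro i h
    exact hpredisj i v h (EMCov.mem_of_getLast?' (hAvlast i))
  have hipre : ∀ i : ↥S, (↑i : V) ∉ preQ i := by
    intro i h
    exact hpredisj i _ h (List.mem_cons_self)
  -- the κ-family of paths witnessing I (minus the rv edge)
  have hpch : ∀ p : {p : DiPath V // p ∈ Ps ∧ p.lastEdge ≠ some (r, v)}, IsPathIn D p.1 :=
    fun p => (hPprop p.1 p.2.1).1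
  have hphead : ∀ p : {p : DiPath V // p ∈ Ps ∧ p.lastEdge ≠ some (r, v)},
      p.1.verts.head? = some r := fun p => by
    rw [EMCov.head?_eq_of_first, (hPprop p.1 p.2.1).2.1]
  have hplast : ∀ p : {p : DiPath V // p ∈ Ps ∧ p.lastEdge ≠ some (r, v)},
      p.1.verts.getLast? = some v := fun p => by
    rw [EMCov.getLast?_eq_of_last, (hPprop p.1 p.2.1).2.2]
  have hpedges : ∀ p : {p : DiPath V // p ∈ Ps ∧ p.lastEdge ≠ some (r, v)},
      ∀ e ∈ p.1.verts.zip p.1.verts.tail, e ≠ (r, v) := fun p =>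
    EMCov.no_rv_edge p.1.nodup (hplast p) p.2.2
  have hpchain' : ∀ p : {p : DiPath V // p ∈ Ps ∧ p.lastEdge ≠ some (r, v)},
      IsPathIn (D \ {(r, v)}) p.1 := by
    intro p
    refine (EMCov.chain'_iff_mem_zip _).2 (fun e he => ?_)
    exact ⟨(EMCov.chain'_iff_mem_zip _).1 (hpch p) e he, by
      simpa using hpedges p e he⟩
  have hpsep : ∀ p : {p : DiPath V // p ∈ Ps ∧ p.lastEdge ≠ some (r, v)},
      ∃ s ∈ p.1.verts, s ∈ S := by
    intro p
    obtain ⟨s, hsS, hsm⟩ := hsep p.1 (hpchain' p) (hPprop p.1 p.2.1).2.1 (hPprop p.1 p.2.1).2.2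
    exact ⟨s, hsm, hsS⟩
  choose uP sP wP hsplitP hsPS hwPS using fun p => EMCov.exists_last_split (· ∈ S) _ (hpsep p)
  set tL : {p : DiPath V // p ∈ Ps ∧ p.lastEdge ≠ some (r, v)} → List V :=
    fun p => sP p :: wP p with htLdef
  have htsuf : ∀ p, tL p <:+ p.1.verts := fun p => ⟨uP p, (hsplitP p).symm⟩
  have hthead : ∀ p, (tL p).head? = some (sP p) := fun p => rfl
  have htlast : ∀ p, (tL p).getLast? = some v := by
    intro p
    have := hplast p
    rw [hsplitP p, List.getLast?_append_of_ne_nil _ (l₂ := sP p :: wP p) (by simp)] at this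
    exact this
  have htnd : ∀ p, (tL p).Nodup := fun p => (htsuf p).sublist.nodup p.1.nodup
  have htch : ∀ p, (tL p).Chain' (fun a b => (a, b) ∈ D) := fun p => (hpch p).suffix (htsuf p)
  have hrt : ∀ p, r ∉ tL p := by
    intro p hr
    have hsPr : sP p ≠ r := (hSsub (hsPS p)).1
    have huPne : uP p ≠ [] := by
      intro h
      have hh := hphead p
      rw [hsplitP p, h] at hh
      simp at hh
      exact hsPr hh
    have hruP : r ∈ uP p := by
      have := hphead p
      rw [hsplitP p, List.head?_append_of_ne_nil _ huPne] at this
      exact List.mem_of_mem_head? (by rw [this]; rfl)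
    have := p.1.nodup
    rw [hsplitP p, List.nodup_append] at this
    exact this.2.2 _ hruP _ hr rfl
  have htt : ∀ p q, p ≠ q → ∀ x, x ∈ tL p → x ∈ tL q → x = v := by
    intro p q hpq x hxp hxq
    have hne : p.1 ≠ q.1 := fun h => hpq (Subtype.ext h)
    have := hPdisj p.1 p.2.1 q.1 q.2.1 hne
      ⟨(htsuf p).sublist.subset hxp, (htsuf q).sublist.subset hxq⟩
    rcases this with h | h
    · exact absurd (h ▸ hxp) (hrt p)
    · exact h
  have hAA : ∀ i j : ↥S, i ≠ j → ∀ x, x ∈ Av i → x ∈ Av j → x = v := by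
    intro i j hij x hxi hxj
    rcases hQQ i j hij x ((hAvsuf i).sublist.subset hxi) ((hAvsuf j).sublist.subset hxj) with
      h | h
    · exact absurd (h ▸ hxi) (hrAv i)
    · exact h
  have hvne : ∀ i : ↥S, (↑i : V) ≠ v := fun i => (hSsub i.2).2
  -- KEY FACT: initial segments of the Q-paths avoid all tails
  have hFACT3 : ∀ i : ↥S, ∀ x ∈ preQ i, ∀ p, x ∉ tL p := by
    intro i x hxpre p hxt
    set TT : V → Prop := fun y => y ≠ v ∧ y ∉ S ∧ ∃ q, y ∈ tL q with hTTdef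
    have hxv : x ≠ v := fun h => hvpre i (h ▸ hxpre)
    have hxS : x ∉ S := by
      intro hxS
      have hxq : x ∈ (Q i).verts := by rw [hsplitQ i]; exact List.mem_append_left _ hxpre
      have : x = ↑i := hQS i x hxq hxS
      exact hipre i (this ▸ hxpre)
    have hex : ∃ y ∈ (Q i).verts, TT y :=
      ⟨x, by rw [hsplitQ i]; exact List.mem_append_left _ hxpre, hxv, hxS, p, hxt⟩
    obtain ⟨c, w₀, d, hcd, hTTw₀, hc⟩ := EMCov.exists_first_split TT (Q i).verts hex
    obtain ⟨hw₀v, hw₀S, p₁, hw₀t⟩ := hTTw₀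
    obtain ⟨e, w₁, hew⟩ := List.append_of_mem hw₀t
    have hwsuf : (w₀ :: w₁) <:+ tL p₁ := ⟨e, hew.symm⟩
    -- c is a prefix of preQ i
    have hcpre : c <+: preQ i := by
      rcases List.prefix_or_prefix_of_prefix (⟨w₀ :: d, hcd.symm⟩ : c <+: (Q i).verts)
        (⟨(↑i : V) :: postQ i, (hsplitQ i).symm⟩ : preQ i <+: (Q i).verts) with h | h
      · exact h
      · exfalso
        exact hc x (h.sublist.subset hxpre) ⟨hxv, hxS, p, hxt⟩
    have hcq : ∀ y ∈ c, y ∈ preQ i := fun y hy => hcpre.sublist.subset hy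
    have hvnc : v ∉ c := fun h => hvpre i (hcq v h)
    have hSnc : ∀ y ∈ c, y ∉ S := by
      intro y hy hyS
      have hyq : y ∈ (Q i).verts := by rw [hcd]; exact List.mem_append_left _ hy
      have : y = ↑i := hQS i y hyq hyS
      exact hipre i (this ▸ hcq y hy)
    have hw₁ne : w₁ ≠ [] := by
      intro h
      subst h
      have h1 := htlast p₁
      have h2 := EMCov.getLast?_suffix_eq (m := [w₀]) (l := tL p₁) hwsuf (by simp)
      rw [h1] at h2
      simp at h2
      exact hw₀v h2.symm
    have hc_ne : c ≠ [] := by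
      intro h
      have hh := hqhead i
      rw [hcd, h] at hh
      simp at hh
      exact hrt p₁ (hh ▸ hw₀t)
    have hρnd : (c ++ w₀ :: w₁).Nodup := by
      rw [List.nodup_append]
      refine ⟨hcpre.sublist.nodup (hprend i), hwsuf.sublist.nodup (htnd p₁), ?_⟩
      intro y hy y' hy' hyy
      subst hyy
      have hyt : y ∈ tL p₁ := hwsuf.sublist.subset hy'
      exact hc y hy ⟨fun h => hvnc (h ▸ hy), hSnc y hy, p₁, hyt⟩
    have hρne : (c ++ w₀ :: w₁) ≠ [] := by simp
    have hρlast : (c ++ w₀ :: w₁).getLast? = some v := by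
      rw [List.getLast?_append_of_ne_nil _ (l₂ := w₀ :: w₁) (by simp)]
      rw [← EMCov.getLast?_suffix_eq hwsuf (by simp)]
      exact htlast p₁
    have hρhead : (c ++ w₀ :: w₁).head? = some r := by
      rw [List.head?_append_of_ne_nil _ hc_ne]
      have := hqhead i
      rw [hcd, List.head?_append_of_ne_nil _ hc_ne] at this
      exact this
    have hlen2 : 2 ≤ (w₀ :: w₁).length := by
      cases w₁ with
      | nil => exact absurd rfl hw₁ne
      | cons a b => simp
    have hρlastE : EMCov.lastE (c ++ w₀ :: w₁) = p₁.1.lastEdge := by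
      have h1 : EMCov.lastE (c ++ w₀ :: w₁) = EMCov.lastE (w₀ :: w₁) :=
        EMCov.lastE_of_suffix ⟨c, rfl⟩ hlen2
      have h2 : EMCov.lastE p₁.1.verts = EMCov.lastE (w₀ :: w₁) :=
        EMCov.lastE_of_suffix (hwsuf.trans (htsuf p₁)) hlen2
      rw [h1, EMCov.lastEdge_eq_lastE, h2]
    have hchD : (c ++ w₀ :: w₁).Chain' (fun a b => (a, b) ∈ D) := by
      rw [List.Chain', List.isChain_append]
      refine ⟨(hqch i).prefix ⟨w₀ :: d, hcd.symm⟩, (htch p₁).suffix hwsuf, ?_⟩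
      intro y hy z hz
      have hch : ((Q i).verts).Chain' (fun a b => (a, b) ∈ D) := hqch i
      rw [show (Q i).verts = c ++ w₀ :: d from hcd, List.Chain', List.isChain_append] at hch
      have := hch.2.2 y hy w₀ rfl
      have hzw : z = w₀ := by
        simp at hz
        exact hz.symm
      rw [hzw]
      exact this
    have hedges : ∀ e' ∈ (c ++ w₀ :: w₁).zip (c ++ w₀ :: w₁).tail, e' ≠ (r, v) :=
      EMCov.no_rv_edge hρnd hρlast (by rw [hρlastE]; exact p₁.2.2)
    set ρ : DiPath V := ⟨c ++ w₀ :: w₁, hρne, hρnd⟩ with hρdef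
    have hρch : IsPathIn (D \ {(r, v)}) ρ := by
      refine (EMCov.chain'_iff_mem_zip _).2 (fun e' he' => ?_)
      exact ⟨(EMCov.chain'_iff_mem_zip _).1 hchD e' he', by simpa using hedges e' he'⟩
    obtain ⟨s₀, hs₀S, hs₀m⟩ := hsep ρ hρch (EMCov.first_eq_of_head? hρhead)
      (EMCov.last_eq_of_getLast? hρlast)
    have hs₀m' : s₀ ∈ c ++ w₀ :: w₁ := hs₀m
    rcases List.mem_append.1 hs₀m' with h | h
    · exact hSnc s₀ h hs₀S
    · rcases List.mem_cons.1 h with rfl | h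
      · exact hw₀S hs₀S
      · -- s₀ ∈ w₁ ⊆ wP p₁
        cases he : e with
        | nil =>
          rw [he] at hew
          simp only [htLdef, List.nil_append] at hew
          injection hew with h1 h2
          exact hw₀S (h1 ▸ hsPS p₁)
        | cons c' e' =>
          have hwp : wP p₁ = e' ++ w₀ :: w₁ := by
            have h' := hew
            rw [he] at h'
            simp only [htLdef, List.cons_append] at h'
            injection h' with h1 h2
          have hs₀w : s₀ ∈ wP p₁ := by
            rw [hwp]
            exact List.mem_append_right _ (List.mem_cons_of_mem _ h)
          exact hwPS p₁ s₀ hs₀w hs₀S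
  -- apply the abstract rerouting theorem
  obtain ⟨σ, hσ1, hσ2, hσ3, hσ4, hσ5, hσ6, hσ7⟩ := EMCov.claim_main (V := V)
    ⟨D, v, ↥S, {p : DiPath V // p ∈ Ps ∧ p.lastEdge ≠ some (r, v)}, Av, tL,
      fun p => ⟨sP p, hsPS p⟩, fun i => ↑i,
      hAvhead, hAvlast, hAvnd, hAvch, hthead, htlast, htnd, htch, hvne, hAA, htt⟩
  have hσhead : ∀ i : ↥S, (σ i).head? = some ↑i := hσ1
  have hσlast : ∀ i : ↥S, (σ i).getLast? = some v := hσ2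
  have hσnd : ∀ i : ↥S, (σ i).Nodup := hσ3
  have hσch : ∀ i : ↥S, (σ i).Chain' (fun a b => (a, b) ∈ D) := hσ4
  have hσpair : ∀ i j : ↥S, i ≠ j → ∀ x, x ∈ σ i → x ∈ σ j → x = v := hσ5
  have hσcov : ∀ p, ∃ i, EMCov.lastE (σ i) = EMCov.lastE (tL p) := hσ6
  have hσdec : ∀ (i : ↥S) (x : V), x ∈ σ i → x ∈ Av i ∨ ∃ p, x ∈ (tL p).tail := hσ7
  have hσne : ∀ i : ↥S, σ i ≠ [] := by
    intro i h
    have := hσhead i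
    rw [h] at this
    simp at this
  have hσlen2 : ∀ i : ↥S, 2 ≤ (σ i).length := fun i =>
    EMCov.length_two_of_head_last (hσhead i) (hσlast i) (hvne i)
  have hiσ : ∀ i : ↥S, (↑i : V) ∈ σ i := fun i =>
    List.mem_of_mem_head? (by rw [hσhead i]; rfl)
  -- the final path system
  set Rv : ↥S → List V := fun i => preQ i ++ σ i with hRvdef
  have hRnd : ∀ i, (Rv i).Nodup := by
    intro i
    rw [List.nodup_append]
    refine ⟨hprend i, hσnd i, ?_⟩
    intro y hy y' hy' hyy
    subst hyy
    rcases hσdec i y hy' with h | ⟨p, h⟩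
    · exact hpredisj i y hy h
    · exact hFACT3 i y hy p (List.mem_of_mem_tail h)
  have hRne : ∀ i, Rv i ≠ [] := by
    intro i
    simp [hRvdef, hprene i]
  set RP : ↥S → DiPath V := fun i => ⟨Rv i, hRne i, hRnd i⟩ with hRPdef
  have hRhead : ∀ i, (Rv i).head? = some r := by
    intro i
    rw [show Rv i = preQ i ++ σ i from rfl, List.head?_append_of_ne_nil _ (hprene i)]
    exact hprehead i
  have hRlastq : ∀ i, (Rv i).getLast? = some v := by
    intro i
    rw [show Rv i = preQ i ++ σ i from rfl, List.getLast?_append_of_ne_nil _ (hσne i)]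
    exact hσlast i
  have hRfirst : ∀ i, (RP i).first = r := fun i => EMCov.first_eq_of_head? (hRhead i)
  have hRlast : ∀ i, (RP i).last = v := fun i => EMCov.last_eq_of_getLast? (hRlastq i)
  have hRch : ∀ i, IsPathIn D (RP i) := by
    intro i
    show ((preQ i ++ σ i).Chain' (fun a b => (a, b) ∈ D))
    rw [List.Chain', List.isChain_append]
    refine ⟨(hqch i).prefix ⟨Av i, (hsplitQ i).symm⟩, hσch i, ?_⟩
    intro y hy z hz
    have hch : ((Q i).verts).Chain' (fun a b => (a, b) ∈ D) := hqch i
    rw [hsplitQ i, List.Chain', List.isChain_append] at hch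
    have hji := hch.2.2 y hy (↑i : V) rfl
    have hz' : z = ↑i := by
      rw [hσhead i] at hz
      simp at hz
      exact hz.symm
    rw [hz']
    exact hji
  have hRS : ∀ (i : ↥S) (x : V), x ∈ Rv i → x ∈ S → x = ↑i := by
    intro i x hx hxS
    rcases List.mem_append.1 hx with h | h
    · exact hQS i x (by rw [hsplitQ i]; exact List.mem_append_left _ h) hxS
    · rcases hσdec i x h with h' | ⟨p, h'⟩
      · exact hQS i x ((hAvsuf i).sublist.subset h') hxS
      · exact absurd hxS (hwPS p x h')
  have hRR : ∀ i j : ↥S, i ≠ j → ∀ x, x ∈ Rv i → x ∈ Rv j → x = r ∨ x = v := by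
    intro i j hij x hxi hxj
    have hQmem : ∀ (k : ↥S) (y : V), y ∈ preQ k → y ∈ (Q k).verts := fun k y hy => by
      rw [hsplitQ k]; exact List.mem_append_left _ hy
    rcases List.mem_append.1 hxi with hi1 | hi1 <;> rcases List.mem_append.1 hxj with hj1 | hj1
    · exact hQQ i j hij x (hQmem i x hi1) (hQmem j x hj1)
    · rcases hσdec j x hj1 with h' | ⟨p, h'⟩
      · exact hQQ i j hij x (hQmem i x hi1) ((hAvsuf j).sublist.subset h')
      · exact absurd (List.mem_of_mem_tail h') (hFACT3 i x hi1 p)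
    · rcases hσdec i x hi1 with h' | ⟨p, h'⟩
      · exact hQQ i j hij x ((hAvsuf i).sublist.subset h') (hQmem j x hj1)
      · exact absurd (List.mem_of_mem_tail h') (hFACT3 j x hj1 p)
    · exact Or.inr (hσpair i j hij x hi1 hj1)
  -- the orthogonality choice function
  set g : DiPath V → V := fun q => if h : ∃ s, s ∈ S ∧ s ∈ q.vertexSet then h.choose else v
    with hgdef
  have hgR : ∀ i : ↥S, g (RP i) = ↑i := by
    intro i
    have hex : ∃ s, s ∈ S ∧ s ∈ (RP i).vertexSet :=
      ⟨↑i, i.2, show (↑i : V) ∈ Rv i from List.mem_append_right _ (hiσ i)⟩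
    simp only [hgdef]
    rw [dif_pos hex]
    exact hRS i _ hex.choose_spec.2 hex.choose_spec.1
  refine ⟨Set.range RP, ⟨⟨?_, ?_⟩, g, ?_, ?_, ?_⟩, ?_⟩
  · rintro q ⟨i, rfl⟩
    exact ⟨hRch i, hRfirst i, hRlast i⟩
  · rintro q ⟨i, rfl⟩ q' ⟨j, rfl⟩ hne x hx
    have hij : i ≠ j := fun h => hne (by rw [h])
    rcases hRR i j hij x hx.1 hx.2 with h | h
    · exact Or.inl h
    · exact Or.inr h
  · rintro q ⟨i, rfl⟩
    rw [hgR i]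
    exact ⟨List.mem_append_right _ (hiσ i), by rw [hRfirst i]; exact (hSsub i.2).1,
      by rw [hRlast i]; exact hvne i⟩
  · rintro q ⟨i, rfl⟩ q' ⟨j, rfl⟩ hgq
    rw [hgR i, hgR j] at hgq
    rw [Subtype.ext hgq]
  · ext x
    constructor
    · rintro ⟨q, ⟨i, rfl⟩, rfl⟩
      rw [hgR i]
      exact i.2
    · intro hx
      exact ⟨RP ⟨x, hx⟩, ⟨⟨x, hx⟩, rfl⟩, hgR ⟨x, hx⟩⟩
  · intro e he
    have heI : e ∈ I := he.1
    have hne : e ≠ (r, v) := fun h => he.2 (by rw [h]; rfl)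
    rw [← hPE] at heI
    obtain ⟨p, hpP, hpE⟩ := heI
    set pk : {p : DiPath V // p ∈ Ps ∧ p.lastEdge ≠ some (r, v)} :=
      ⟨p, hpP, by rw [hpE]; exact fun h => hne (by injection h)⟩ with hpkdef
    have h2 : 2 ≤ (tL pk).length :=
      EMCov.length_two_of_head_last (hthead pk) (htlast pk) ((hSsub (hsPS pk)).2)
    have hlt : EMCov.lastE (tL pk) = some e := by
      rw [← EMCov.lastE_of_suffix (htsuf pk) h2, ← EMCov.lastEdge_eq_lastE]
      exact hpE
    obtain ⟨i, hi⟩ := hσcov pk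
    have hRE : (RP i).lastEdge = some e := by
      rw [EMCov.lastEdge_eq_lastE]
      show EMCov.lastE (Rv i) = some e
      rw [EMCov.lastE_of_suffix (⟨preQ i, rfl⟩ : σ i <:+ Rv i) (hσlen2 i), hi, hlt]
    exact ⟨RP i, ⟨i, rfl⟩, hRE⟩
end

section
/- Let D be a rooted digraph, w ∈ V−r with in_D(w) ∈ 𝒢_D(w), and suppose there is an edge uv ∈ E(D) with u ≠ r and v ≠ w such that in_D(w) ∉ 𝒢_{D−uv}(w). Then there exists a set S ⊆ V−r with v ∈ S which is linked from r in D by a path-system 𝒫, such that S separates N⁻_D(v) − u from r (every path from r to a vertex of N⁻_D(v) − u meets S); in particular, uv is the last edge of some path P_{u,v} ∈ 𝒫. -/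
/-!
Common framework: a digraph on a vertex type `V` is given by its edge set
`D : Set (V × V)` (this automatically makes it simple in the sense of having
no parallel edges; absence of loops is the predicate `NoLoops`).
Paths are nonempty duplicate-free lists of vertices.
-/

universe u

variable {V : Type u}

namespace FPD

open List

lemma mem_zip_iff {l : List V} {a b : V} :
    (a, b) ∈ l.zip l.tail ↔ ∃ xs ys, l = xs ++ a :: b :: ys := by
  induction l with
  | nil => simp
  | cons x t ih =>
    cases t with
    | nil =>
      constructor
      · intro hm; simp at hm
      · rintro ⟨xs, ys, h⟩
        rcases xs with _ | ⟨x', xs'⟩ <;> simp_all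
    | cons y t' =>
      constructor
      · intro hm
        simp only [List.tail_cons, List.zip_cons_cons, List.mem_cons] at hm
        rcases hm with h | h
        · exact ⟨[], t', by simp [Prod.ext_iff] at h; simp [h.1, h.2]⟩
        · obtain ⟨xs, ys, hxy⟩ := ih.mp (by simpa using h)
          exact ⟨x :: xs, ys, by simp [hxy]⟩
      · rintro ⟨xs, ys, hxy⟩
        rcases xs with _ | ⟨x', xs'⟩
        · simp at hxy
          simp [hxy.1, hxy.2.1]
        · simp only [List.cons_append, List.cons.injEq] at hxy
          have : (a, b) ∈ (y :: t').zip t' := ih.mpr ⟨xs', ys, hxy.2⟩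
          simp only [List.tail_cons, List.zip_cons_cons, List.mem_cons]
          right; simpa using this

lemma chain'_iff_zip {R : V → V → Prop} {l : List V} :
    List.Chain' R l ↔ ∀ a b, (a, b) ∈ l.zip l.tail → R a b := by
  induction l with
  | nil => simp [List.Chain']
  | cons x t ih =>
    cases t with
    | nil => simp [List.Chain']
    | cons y t' =>
      rw [show List.Chain' R (x :: y :: t') ↔ R x y ∧ List.Chain' R (y :: t') from
        List.isChain_cons_cons, ih]
      constructor
      · rintro ⟨h1, h2⟩ a b hm
        simp only [List.tail_cons, List.zip_cons_cons, List.mem_cons] at hm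
        rcases hm with h | h
        · simp only [Prod.mk.injEq] at h; obtain ⟨rfl, rfl⟩ := h; exact h1
        · exact h2 a b (by simpa using h)
      · intro h
        refine ⟨h x y (by simp), fun a b hm => h a b ?_⟩
        simp only [List.tail_cons, List.zip_cons_cons, List.mem_cons]
        right; simpa using hm

lemma zip_getLast?_iff {l : List V} {a b : V} :
    (l.zip l.tail).getLast? = some (a, b) ↔ ∃ xs, l = xs ++ [a, b] := by
  induction l with
  | nil => simp
  | cons x t ih =>
    cases t with
    | nil =>
      constructor
      · intro h; simp at h
      · rintro ⟨xs, h⟩; rcases xs with _ | ⟨x', xs'⟩ <;> simp_all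
    | cons y t' =>
      rcases t' with _ | ⟨z, t''⟩
      · simp only [List.tail_cons, List.zip_cons_cons, List.zip_nil_right,
          List.getLast?_singleton]
        constructor
        · intro h
          have : x = a ∧ y = b := by
            have := Option.some.inj h
            exact ⟨congrArg Prod.fst this, congrArg Prod.snd this⟩
          exact ⟨[], by simp [this.1, this.2]⟩
        · rintro ⟨xs, h⟩
          rcases xs with _ | ⟨x', xs'⟩
          · simp at h; simp [h.1, h.2]
          · simp only [List.cons_append, List.cons.injEq] at h
            rcases xs' with _ | ⟨x'', xs''⟩ <;> simp_all
      · -- l = x :: y :: z :: t''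
        have key : (x :: y :: z :: t'').zip (x :: y :: z :: t'').tail
            = (x, y) :: (y, z) :: ((z :: t'').zip t'') := by simp
        have key2 : (y :: z :: t'').zip (y :: z :: t'').tail
            = (y, z) :: ((z :: t'').zip t'') := by simp
        constructor
        · intro h
          rw [key, List.getLast?_cons_cons, ← key2] at h
          obtain ⟨xs, hxs⟩ := ih.mp h
          exact ⟨x :: xs, by simp [hxs]⟩
        · rintro ⟨xs, hxs⟩
          rcases xs with _ | ⟨x', xs'⟩
          · simp at hxs
          · simp only [List.cons_append, List.cons.injEq] at hxs
            have := ih.mpr ⟨xs', hxs.2⟩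
            rw [key, List.getLast?_cons_cons, ← key2]
            exact this

lemma nodup_split_unique {l xs ys xs' ys' : List V} {z : V} (h : l.Nodup)
    (h1 : l = xs ++ z :: ys) (h2 : l = xs' ++ z :: ys') : xs = xs' ∧ ys = ys' := by
  induction xs generalizing xs' l with
  | nil =>
    subst h1
    rcases xs' with _ | ⟨a, t⟩
    · simp_all
    · simp only [List.nil_append, List.cons_append, List.cons.injEq] at h2
      exfalso
      have hz : z ∈ t ++ z :: ys' := by simp
      rw [← h2.2] at hz
      exact (List.nodup_cons.mp h).1 hz
  | cons a t ih =>
    subst h1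
    rcases xs' with _ | ⟨a', t'⟩
    · simp only [List.nil_append, List.cons_append, List.cons.injEq] at h2
      exfalso
      obtain ⟨rfl, hrest⟩ := h2
      exact (List.nodup_cons.mp h).1 (by simp)
    · simp only [List.cons_append, List.cons.injEq] at h2
      obtain ⟨rfl, hrest⟩ := h2
      have hn : (t ++ z :: ys).Nodup := (List.nodup_cons.mp h).2
      obtain ⟨hxs, hys⟩ := ih hn rfl hrest
      exact ⟨by rw [hxs], hys⟩

lemma two_split {l as₁ bs₁ as₂ bs₂ : List V} {z₁ z₂ : V} (h : l.Nodup)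
    (h1 : l = as₁ ++ z₁ :: bs₁) (h2 : l = as₂ ++ z₂ :: bs₂) (hz : z₁ ≠ z₂) :
    (z₁ ∈ as₂ ∧ z₂ ∈ bs₁) ∨ (z₂ ∈ as₁ ∧ z₁ ∈ bs₂) := by
  induction as₁ generalizing as₂ l with
  | nil =>
    subst h1
    rcases as₂ with _ | ⟨a, t⟩
    · simp only [List.nil_append, List.cons.injEq] at h2
      exact absurd h2.1 hz
    · simp only [List.nil_append, List.cons_append, List.cons.injEq] at h2
      left
      exact ⟨by simp [h2.1], by rw [h2.2]; simp⟩
  | cons a t ih =>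
    subst h1
    rcases as₂ with _ | ⟨a', t'⟩
    · simp only [List.nil_append, List.cons_append, List.cons.injEq] at h2
      right
      exact ⟨by simp [h2.1], by rw [← h2.2]; simp⟩
    · simp only [List.cons_append, List.cons.injEq] at h2
      rcases ih (List.nodup_cons.mp h).2 rfl h2.2 with ⟨ha, hb⟩ | ⟨ha, hb⟩
      · exact Or.inl ⟨by simp [ha], hb⟩
      · exact Or.inr ⟨by simp [ha], hb⟩

lemma succ_unique {l : List V} {σ τ₁ τ₂ : V} (h : l.Nodup)
    (h1 : (σ, τ₁) ∈ l.zip l.tail) (h2 : (σ, τ₂) ∈ l.zip l.tail) : τ₁ = τ₂ := by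
  obtain ⟨x₁, y₁, e₁⟩ := mem_zip_iff.mp h1
  obtain ⟨x₂, y₂, e₂⟩ := mem_zip_iff.mp h2
  have := nodup_split_unique h e₁ e₂
  have : τ₁ :: y₁ = τ₂ :: y₂ := this.2
  exact (List.cons.injEq _ _ _ _ ▸ this).1

lemma pred_of_mem {l : List V} {σ h₀ : V} (hm : σ ∈ l) (hh : l.head? = some h₀)
    (hne : σ ≠ h₀) : ∃ τ, (τ, σ) ∈ l.zip l.tail := by
  obtain ⟨s, t, rfl⟩ := List.append_of_mem hm
  rcases s with _ | ⟨a, s'⟩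
  · exfalso; apply hne; simp at hh; exact hh
  · -- s = a :: s'; σ has a predecessor: last of (a :: s')
    clear hh hne hm
    induction s' generalizing a with
    | nil => exact ⟨a, mem_zip_iff.mpr ⟨[], t, rfl⟩⟩
    | cons b s'' ih =>
      obtain ⟨τ, hτ⟩ := ih b
      refine ⟨τ, ?_⟩
      obtain ⟨xs, ys, hxy⟩ := mem_zip_iff.mp hτ
      exact mem_zip_iff.mpr ⟨a :: xs, ys, by simp [hxy]⟩


lemma succ_of_mem {l : List V} {σ g : V} (hm : σ ∈ l) (hl : l.getLast? = some g)
    (hne : σ ≠ g) : ∃ τ, (σ, τ) ∈ l.zip l.tail := by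
  obtain ⟨xs, ys, rfl⟩ := List.append_of_mem hm
  rcases ys with _ | ⟨c, ys'⟩
  · exfalso
    rw [List.getLast?_concat] at hl
    exact hne (Option.some.inj hl)
  · exact ⟨c, mem_zip_iff.mpr ⟨xs, ys', rfl⟩⟩

lemma mem_tail_of_split {l xs ys : List V} {τ σ : V} (h : l = xs ++ τ :: σ :: ys) :
    σ ∈ l.tail := by
  subst h
  rcases xs with _ | ⟨a, t⟩ <;> simp

lemma head_no_pred {l : List V} {σ τ : V} (hn : l.Nodup) (hh : l.head? = some σ)
    (hm : (τ, σ) ∈ l.zip l.tail) : False := by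
  obtain ⟨xs, ys, e⟩ := mem_zip_iff.mp hm
  have hσt : σ ∈ l.tail := mem_tail_of_split e
  rcases l with _ | ⟨a, t⟩
  · simp at hh
  · simp only [List.head?_cons, Option.some.injEq] at hh
    subst hh
    exact (List.nodup_cons.mp hn).1 (by simpa using hσt)

lemma last_no_succ {l : List V} {σ τ : V} (hn : l.Nodup) (hl : l.getLast? = some σ)
    (hm : (σ, τ) ∈ l.zip l.tail) : False := by
  obtain ⟨xs, ys, e⟩ := mem_zip_iff.mp hm
  subst e
  rw [List.getLast?_append] at hl
  have h2 : (σ :: τ :: ys).getLast? = some σ := by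
    cases h3 : (σ :: τ :: ys).getLast? with
    | none => simp at h3
    | some b => rw [h3] at hl; simpa using hl
  have : σ ∈ τ :: ys := by
    have := List.getLast?_eq_getLast (l := σ :: τ :: ys) (by simp)
    rw [this] at h2
    have h4 := List.getLast_mem (l := σ :: τ :: ys) (by simp)
    rw [Option.some.inj h2] at h4
    -- getLast (σ :: τ :: ys) = getLast (τ :: ys) ∈ τ :: ys
    have h5 : (σ :: τ :: ys).getLast (by simp) = (τ :: ys).getLast (by simp) := by
      simp [List.getLast_cons]
    rw [← Option.some.inj h2, h5]
    exact List.getLast_mem _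
  have hnd : (σ :: τ :: ys).Nodup := (List.nodup_append.mp hn).2.1
  exact (List.nodup_cons.mp hnd).1 this

lemma chain'_ind {R : V → V → Prop} {P : V → Prop} {l : List V} (hc : List.Chain' R l)
    (hh : ∀ x ∈ l.head?, P x) (hs : ∀ a b, R a b → P a → P b) : ∀ σ ∈ l, P σ := by
  induction l with
  | nil => simp
  | cons a t ih =>
    have hPa : P a := hh a (by simp)
    intro σ hσ
    rcases List.mem_cons.mp hσ with rfl | hσ
    · exact hPa
    · have h1 := List.isChain_cons.mp hc
      exact ih h1.2 (fun x hx => hs a x (h1.1 x hx) hPa) σ hσ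

lemma exists_last_sat {P : V → Prop} {l : List V} (h : ∃ z ∈ l, P z) :
    ∃ as z bs, l = as ++ z :: bs ∧ P z ∧ ∀ y ∈ bs, ¬ P y := by
  induction l using List.reverseRecOn with
  | nil => simp at h
  | append_singleton l' a ih =>
    by_cases hPa : P a
    · exact ⟨l', a, [], rfl, hPa, by simp⟩
    · obtain ⟨z, hz, hPz⟩ := h
      have hz' : z ∈ l' := by
        rcases List.mem_append.mp hz with h1 | h1
        · exact h1
        · simp at h1; subst h1; exact absurd hPz hPa
      obtain ⟨as, z', bs, e, hp, hnone⟩ := ih ⟨z, hz', hPz⟩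
      exact ⟨as, z', bs ++ [a], by simp [e], hp, by
        intro y hy
        rcases List.mem_append.mp hy with h1 | h1
        · exact hnone y h1
        · simp at h1; subst h1; exact hPa⟩

lemma decomp_last_two {l : List V} (h : 2 ≤ l.length) : ∃ Z a b, l = Z ++ [a, b] := by
  induction l using List.reverseRecOn with
  | nil => simp at h
  | append_singleton l' b ih =>
    induction l' using List.reverseRecOn with
    | nil => simp at h
    | append_singleton l'' a _ => exact ⟨l'', a, b, by simp⟩

lemma suffix_last_two {l₁ l₂ X : List V} {a b : V} (hs : l₂ <:+ l₁)
    (he : l₁ = X ++ [a, b]) (hl : 2 ≤ l₂.length) : ∃ Z, l₂ = Z ++ [a, b] := by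
  obtain ⟨Z, c, d, rfl⟩ := decomp_last_two hl
  obtain ⟨pre, hpre⟩ := hs
  refine ⟨Z, ?_⟩
  have : pre ++ Z ++ [c, d] = X ++ [a, b] := by rw [← he, ← hpre]; simp
  have h2 : (pre ++ Z ++ [c, d]).reverse = (X ++ [a, b]).reverse := by rw [this]
  simp only [List.reverse_append] at h2
  simp only [show ([c,d] : List V).reverse = [d,c] by rfl,
    show ([a,b] : List V).reverse = [b,a] by rfl] at h2
  have hd : d = b := by
    have := congrArg List.head? h2; simpa using this
  have hc : c = a := by
    have := congrArg (fun l => List.head? (List.tail l)) h2; simpa using this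
  rw [hc, hd]

end FPD

lemma head_eq_of_head? {l : List V} {a : V} (hne : l ≠ []) (h : l.head? = some a) :
    l.head hne = a := by
  rw [List.head?_eq_head hne] at h
  exact Option.some.inj h

lemma getLast_eq_of_getLast? {l : List V} {a : V} (hne : l ≠ [])
    (h : l.getLast? = some a) : l.getLast hne = a := by
  rw [List.getLast?_eq_getLast hne] at h
  exact Option.some.inj h

lemma getLast?_split {l : List V} {a : V} (h : l.getLast? = some a) :
    ∃ Z, l = Z ++ [a] := by
  have hne : l ≠ [] := by rintro rfl; simp at h
  refine ⟨l.dropLast, ?_⟩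
  conv_lhs => rw [← List.dropLast_append_getLast hne]
  rw [getLast_eq_of_getLast? hne h]

lemma dipath_eq {p q : DiPath V} (h : p.verts = q.verts) : p = q := by
  cases p
  cases q
  simp only at h
  subst h
  rfl

namespace FPD

structure Ctx (V : Type u) where
  D : Set (V × V)
  r : V
  u : V
  v : V
  w : V
  Q0 : Set (DiPath V)
  q0 : DiPath V
  A0 : List V
  T : List V
  hsimple : NoLoops D
  hroot : IsRoot D r
  huv : (u, v) ∈ D
  hur : u ≠ r
  hvw : v ≠ w
  hwr : w ≠ r
  hnot : inEdges D w ∉ GSet (D \ {(u, v)}) r w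
  hQ0 : IntDisjSys D r w Q0
  hEp : Eplus Q0 = inEdges D w
  hq0 : q0 ∈ Q0
  hverts : q0.verts = A0 ++ u :: v :: T
  hT : T ≠ []

namespace Ctx

variable {V : Type u} (C : Ctx V)

/-- Vertices of `q₀` at or after `v` (the protected suffix, including `w`). -/
def ExclS : Set V := {x | x ∈ C.v :: C.T}

/-- `z` is an internal vertex of a system path other than `q₀`. -/
def Used (z : V) : Prop :=
  ∃ p ∈ C.Q0, p ≠ C.q0 ∧ z ∈ p.verts ∧ z ≠ C.r ∧ z ≠ C.w

/-- Arcs of the system paths other than `q₀`. -/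
def F : Set (V × V) :=
  {e | ∃ p ∈ C.Q0, p ≠ C.q0 ∧ e ∈ p.verts.zip p.verts.tail}

/-- One step of the residual digraph. -/
def Step (σ τ : Bool × V) : Prop :=
  (σ.1 = true ∧ τ.1 = false ∧ (σ.2, τ.2) ∈ C.D ∧ (σ.2, τ.2) ≠ (C.u, C.v) ∧
      τ.2 ∉ C.ExclS) ∨
  (σ.1 = false ∧ τ.1 = true ∧ σ.2 = τ.2 ∧ ¬ C.Used σ.2) ∨
  (σ.1 = false ∧ τ.1 = true ∧ (τ.2, σ.2) ∈ C.F) ∨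
  (σ.1 = true ∧ τ.1 = false ∧ σ.2 = τ.2 ∧ C.Used σ.2)

/-- A residual walk. -/
def Walk (W : List (Bool × V)) : Prop :=
  W ≠ [] ∧ W.head? = some (true, C.r) ∧ List.Chain' C.Step W ∧ W.Nodup

/-- Residual reachability. -/
def Reach (b : Bool) (z : V) : Prop :=
  ∃ W, C.Walk W ∧ W.getLast? = some (b, z)

/-- Targets: `v` and the internal vertices of the protected suffix. -/
def Tar (s : V) : Prop := ∃ pre suf, C.v :: C.T = pre ++ s :: suf ∧ suf ≠ []

/- ### Basic facts about the path system -/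

lemma path_props {p : DiPath V} (hp : p ∈ C.Q0) :
    IsPathIn C.D p ∧ p.first = C.r ∧ p.last = C.w := C.hQ0.1 p hp

lemma verts_ne {p : DiPath V} (_ : p ∈ C.Q0) : p.verts ≠ [] := p.ne

lemma verts_head? {p : DiPath V} (hp : p ∈ C.Q0) : p.verts.head? = some C.r := by
  have h := (C.path_props hp).2.1
  rw [DiPath.first] at h
  rw [← h, List.head?_eq_head]

lemma verts_getLast? {p : DiPath V} (hp : p ∈ C.Q0) :
    p.verts.getLast? = some C.w := by
  have h := (C.path_props hp).2.2
  rw [DiPath.last] at h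
  rw [← h, List.getLast?_eq_getLast]

lemma verts_chain {p : DiPath V} (hp : p ∈ C.Q0) :
    ∀ a b, (a, b) ∈ p.verts.zip p.verts.tail → (a, b) ∈ C.D := by
  have h := (C.path_props hp).1
  rw [IsPathIn] at h
  exact fun a b hm => chain'_iff_zip.mp h a b hm

lemma path_unique {p₁ p₂ : DiPath V} (h1 : p₁ ∈ C.Q0) (h2 : p₂ ∈ C.Q0) {z : V}
    (hz1 : z ∈ p₁.verts) (hz2 : z ∈ p₂.verts) (hr : z ≠ C.r) (hw : z ≠ C.w) :
    p₁ = p₂ := by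
  by_contra hne
  have := C.hQ0.2 p₁ h1 p₂ h2 hne ⟨hz1, hz2⟩
  simp only [Set.mem_insert_iff, Set.mem_singleton_iff] at this
  tauto

/- ### Facts about `q₀` and the suffix -/

lemma r_ne_v : C.r ≠ C.v := fun h => C.hroot C.u (h ▸ C.huv)

lemma q0_head? : (C.q0).verts.head? = some C.r := C.verts_head? C.hq0

lemma q0_getLast? : (C.q0).verts.getLast? = some C.w := C.verts_getLast? C.hq0

lemma q0_nodup : (C.q0).verts.Nodup := C.q0.nodup

lemma excl_sub_q0 {x : V} (hx : x ∈ C.ExclS) : x ∈ (C.q0).verts := by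
  rw [C.hverts]
  simp only [ExclS, Set.mem_setOf_eq] at hx
  simp only [List.mem_append, List.mem_cons]
  rcases List.mem_cons.mp hx with h | h
  · right; right; left; exact h
  · right; right; right; exact h

lemma r_not_excl : C.r ∉ C.ExclS := by
  intro hx
  have h1 : C.r ∈ C.v :: C.T := hx
  have hh := C.q0_head?
  have hnd := C.q0_nodup
  rw [C.hverts] at hh hnd
  have hmem : C.r ∈ C.A0 ++ C.u :: C.v :: C.T := by
    simp only [List.mem_append, List.mem_cons]
    rcases List.mem_cons.mp h1 with h | h
    · right; right; left; exact h
    · right; right; right; exact h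
  rcases A0eq : C.A0 with _ | ⟨a, t⟩ <;> rw [A0eq] at hh hnd hmem
  · simp only [List.nil_append, List.head?_cons, Option.some.injEq] at hh
    exact C.hur hh
  · simp only [List.cons_append, List.head?_cons, Option.some.injEq] at hh
    subst hh
    simp only [List.cons_append, List.nodup_cons] at hnd
    apply hnd.1
    simp only [List.mem_append, List.mem_cons]
    rcases List.mem_cons.mp h1 with h | h
    · right; right; left; exact h
    · right; right; right; exact h

lemma w_in_excl : C.w ∈ C.ExclS := by
  have hgl := C.q0_getLast?
  rw [C.hverts] at hgl
  rw [List.getLast?_append_of_ne_nil _ (by simp : C.u :: C.v :: C.T ≠ []),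
    show (C.u :: C.v :: C.T).getLast? = (C.v :: C.T).getLast? from
      List.getLast?_cons_cons] at hgl
  have : C.w ∈ C.v :: C.T := List.mem_of_mem_getLast? (by rw [hgl]; simp)
  exact this

lemma excl_on_other_path {p : DiPath V} (hp : p ∈ C.Q0) (hne : p ≠ C.q0) {z : V}
    (hz : z ∈ p.verts) (hx : z ∈ C.ExclS) : z = C.w := by
  have h1 : z ∈ (C.q0).verts := C.excl_sub_q0 hx
  by_contra hzw
  have hzr : z ≠ C.r := fun h => C.r_not_excl (h ▸ hx)
  exact hne (C.path_unique hp C.hq0 hz h1 hzr hzw)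

end Ctx
end FPD

namespace FPD
namespace Ctx

variable {V : Type u} (C : Ctx V)

/- ### Facts about `F` -/

lemma F_sub_D {a b : V} (h : (a, b) ∈ C.F) : (a, b) ∈ C.D := by
  obtain ⟨p, hp, _, hm⟩ := h
  exact C.verts_chain hp a b hm

lemma F_tail_ne_w {a b : V} (h : (a, b) ∈ C.F) : a ≠ C.w := by
  obtain ⟨p, hp, hne, hm⟩ := h
  intro haw
  subst haw
  exact last_no_succ p.nodup (C.verts_getLast? hp) hm

lemma F_head_ne_r {a b : V} (h : (a, b) ∈ C.F) : b ≠ C.r :=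
  fun hbr => C.hroot a (hbr ▸ C.F_sub_D h)

lemma F_ne {a b : V} (h : (a, b) ∈ C.F) : a ≠ b :=
  fun hab => C.hsimple b (by rw [hab] at h; exact C.F_sub_D h)

lemma F_mem_tail {a b : V} (h : (a, b) ∈ C.F) :
    ∃ p ∈ C.Q0, p ≠ C.q0 ∧ a ∈ p.verts ∧ b ∈ p.verts := by
  obtain ⟨p, hp, hne, hm⟩ := h
  obtain ⟨xs, ys, hxy⟩ := mem_zip_iff.mp hm
  exact ⟨p, hp, hne, by rw [hxy]; simp, by rw [hxy]; simp⟩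

lemma F_tail_used {a b : V} (h : (a, b) ∈ C.F) (hr : a ≠ C.r) : C.Used a := by
  obtain ⟨p, hp, hne, ha, _⟩ := C.F_mem_tail h
  exact ⟨p, hp, hne, ha, hr, C.F_tail_ne_w h⟩

lemma F_head_cases {a b : V} (h : (a, b) ∈ C.F) : b = C.w ∨ C.Used b := by
  by_cases hbw : b = C.w
  · exact Or.inl hbw
  · obtain ⟨p, hp, hne, _, hb⟩ := C.F_mem_tail h
    exact Or.inr ⟨p, hp, hne, hb, C.F_head_ne_r h, hbw⟩

lemma F_out_unique {a b₁ b₂ : V} (h1 : (a, b₁) ∈ C.F) (h2 : (a, b₂) ∈ C.F)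
    (hr : a ≠ C.r) : b₁ = b₂ := by
  obtain ⟨p₁, hp₁, hne₁, hm₁⟩ := h1
  obtain ⟨p₂, hp₂, hne₂, hm₂⟩ := h2
  have haw : a ≠ C.w := C.F_tail_ne_w ⟨p₁, hp₁, hne₁, hm₁⟩
  obtain ⟨x₁, y₁, e₁⟩ := mem_zip_iff.mp hm₁
  obtain ⟨x₂, y₂, e₂⟩ := mem_zip_iff.mp hm₂
  have hpp : p₁ = p₂ := C.path_unique hp₁ hp₂ (by rw [e₁]; simp) (by rw [e₂]; simp) hr haw
  subst hpp
  exact succ_unique p₁.nodup hm₁ hm₂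

lemma F_in_unique {a₁ a₂ b : V} (h1 : (a₁, b) ∈ C.F) (h2 : (a₂, b) ∈ C.F)
    (hw : b ≠ C.w) : a₁ = a₂ := by
  obtain ⟨p₁, hp₁, hne₁, hm₁⟩ := h1
  obtain ⟨p₂, hp₂, hne₂, hm₂⟩ := h2
  have hbr : b ≠ C.r := C.F_head_ne_r ⟨p₁, hp₁, hne₁, hm₁⟩
  obtain ⟨x₁, y₁, e₁⟩ := mem_zip_iff.mp hm₁
  obtain ⟨x₂, y₂, e₂⟩ := mem_zip_iff.mp hm₂
  have hpp : p₁ = p₂ := C.path_unique hp₁ hp₂ (by rw [e₁]; simp) (by rw [e₂]; simp) hbr hw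
  subst hpp
  have e₁' : p₁.verts = (x₁ ++ [a₁]) ++ b :: y₁ := by rw [e₁]; simp
  have e₂' : p₁.verts = (x₂ ++ [a₂]) ++ b :: y₂ := by rw [e₂]; simp
  have := (nodup_split_unique p₁.nodup e₁' e₂').1
  have h3 : (x₁ ++ [a₁]).getLast? = (x₂ ++ [a₂]).getLast? := by rw [this]
  rw [List.getLast?_concat, List.getLast?_concat] at h3
  exact Option.some.inj h3

lemma F_pred_exists {z : V} (hz : C.Used z) : ∃ a, (a, z) ∈ C.F := by
  obtain ⟨p, hp, hne, hm, hzr, hzw⟩ := hz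
  obtain ⟨a, ha⟩ := pred_of_mem hm (C.verts_head? hp) hzr
  exact ⟨a, p, hp, hne, ha⟩

lemma F_tail_not_excl {a b : V} (h : (a, b) ∈ C.F) : a ∉ C.ExclS := by
  intro hx
  obtain ⟨p, hp, hne, ha, _⟩ := C.F_mem_tail h
  exact C.F_tail_ne_w h (C.excl_on_other_path hp hne ha hx)

lemma used_not_excl {z : V} (hz : C.Used z) : z ∉ C.ExclS := by
  intro hx
  obtain ⟨p, hp, hne, hm, _, hzw⟩ := hz
  exact hzw (C.excl_on_other_path hp hne hm hx)

/- ### Reachability -/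

lemma not_used_r : ¬ C.Used C.r := by rintro ⟨p, _, _, _, h, _⟩; exact h rfl

lemma reach_out_r : C.Reach true C.r :=
  ⟨[(true, C.r)], ⟨by simp, by simp, List.isChain_singleton _, by simp⟩, by simp⟩

lemma reach_step {b : Bool} {z : V} {b' : Bool} {z' : V} (h : C.Reach b z)
    (hs : C.Step (b, z) (b', z')) : C.Reach b' z' := by
  obtain ⟨W, ⟨hne, hh, hc, hn⟩, hl⟩ := h
  by_cases hmem : (b', z') ∈ W
  · obtain ⟨s, t, rfl⟩ := List.append_of_mem hmem
    refine ⟨s ++ [(b', z')], ⟨by simp, ?_, ?_, ?_⟩, by rw [List.getLast?_concat]⟩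
    · rcases s with _ | ⟨a, s'⟩
      · simpa using hh
      · simpa using hh
    · exact hc.prefix ⟨t, by simp⟩
    · exact hn.sublist (by simpa using (List.prefix_append (s ++ [(b', z')]) t).sublist)
  · refine ⟨W ++ [(b', z')], ⟨by simp, ?_, ?_, ?_⟩, by rw [List.getLast?_concat]⟩
    · rw [List.head?_append_of_ne_nil _ hne]; exact hh
    · refine (List.isChain_append (R := C.Step)).mpr ?_
      refine ⟨hc, by simp, ?_⟩
      intro x hx y hy
      simp only [List.head?_cons, Option.mem_def, Option.some.injEq] at hy
      rw [Option.mem_def, hl] at hx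
      rw [← hy, ← Option.some.inj hx]
      exact hs
    · exact hn.append (by simp) (by simpa using fun h => hmem h)

lemma reach_R1 {y z : V} (h : C.Reach true y) (hD : (y, z) ∈ C.D)
    (huv' : (y, z) ≠ (C.u, C.v)) (hex : z ∉ C.ExclS) : C.Reach false z :=
  C.reach_step h (Or.inl ⟨rfl, rfl, hD, huv', hex⟩)

lemma reach_R2 {z : V} (h : C.Reach false z) (hf : ¬ C.Used z) : C.Reach true z :=
  C.reach_step h (Or.inr (Or.inl ⟨rfl, rfl, rfl, hf⟩))

lemma reach_R3 {y z : V} (h : C.Reach false z) (hF : (y, z) ∈ C.F) :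
    C.Reach true y :=
  C.reach_step h (Or.inr (Or.inr (Or.inl ⟨rfl, rfl, hF⟩)))

lemma reach_R4 {z : V} (h : C.Reach true z) (hu : C.Used z) : C.Reach false z :=
  C.reach_step h (Or.inr (Or.inr (Or.inr ⟨rfl, rfl, rfl, hu⟩)))

lemma walk_not_excl {W : List (Bool × V)} (hW : C.Walk W) :
    ∀ σ ∈ W, σ.2 ∉ C.ExclS := by
  obtain ⟨hne, hh, hc, _⟩ := hW
  refine chain'_ind hc (fun x hx => ?_) (fun a b hab ha => ?_)
  · rw [Option.mem_def, hh] at hx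
    rw [← Option.some.inj hx]
    exact C.r_not_excl
  · rcases hab with ⟨_, _, _, _, hb⟩ | ⟨_, _, he, _⟩ | ⟨_, _, hF⟩ | ⟨_, _, he, _⟩
    · exact hb
    · rw [← he]; exact ha
    · exact C.F_tail_not_excl hF
    · rw [← he]; exact ha

lemma reach_not_excl {b : Bool} {z : V} (h : C.Reach b z) : z ∉ C.ExclS := by
  obtain ⟨W, hW, hl⟩ := h
  exact C.walk_not_excl hW (b, z) (List.mem_of_mem_getLast? (by rw [hl]; simp))

lemma not_reach_in_r : ¬ C.Reach false C.r := by
  rintro ⟨W, hW, hl⟩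
  obtain ⟨hne, hh, hc, hn⟩ := hW
  have hmem : ((false, C.r) : Bool × V) ∈ W :=
    List.mem_of_mem_getLast? (by rw [hl]; simp)
  have hneq : ((false, C.r) : Bool × V) ≠ (true, C.r) := by simp
  obtain ⟨τ, hτ⟩ := pred_of_mem hmem hh hneq
  have hstep : C.Step τ (false, C.r) := chain'_iff_zip.mp hc τ _ hτ
  rcases hstep with ⟨h1, h2, h3, h4, h5⟩ | ⟨h1, h2, h3, h4⟩ | ⟨h1, h2, h3⟩ | ⟨h1, h2, h3, h4⟩
  · exact C.hroot τ.2 h3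
  · simp at h2
  · simp at h2
  · rw [h3] at h4; exact C.not_used_r h4

/- ### Backwards propagation along a system path -/

lemma back_prop {p : DiPath V} (hp : p ∈ C.Q0) (hne : p ≠ C.q0) :
    ∀ (as : List V) (z : V) (bs : List V), p.verts = as ++ z :: bs →
      C.Reach false z → ∀ y ∈ as, C.Reach true y := by
  intro as
  induction as using List.reverseRecOn with
  | nil => intro z bs _ _ y hy; simp at hy
  | append_singleton as' a ih =>
    intro z bs he hz y hy
    have hF : (a, z) ∈ C.F := ⟨p, hp, hne, mem_zip_iff.mpr ⟨as', bs, by simpa using he⟩⟩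
    have hra : C.Reach true a := C.reach_R3 hz hF
    rcases List.mem_append.mp hy with hy' | hy'
    · -- y ∈ as' : need Reach false a first
      have har : a ≠ C.r := by
        rcases as' with _ | ⟨b, t⟩
        · simp at hy'
        · intro harr
          have hh := C.verts_head? hp
          rw [he] at hh
          simp only [List.cons_append, List.head?_cons, Option.some.injEq] at hh
          have hnd := p.nodup
          rw [he] at hnd
          simp only [List.cons_append, List.nodup_cons] at hnd
          apply hnd.1
          rw [hh, ← harr]
          simp
      have hua : C.Used a := C.F_tail_used hF har
      exact ih a (z :: bs) (by simpa using he) (C.reach_R4 hra hua) y hy'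
    · simp only [List.mem_singleton] at hy'
      subst hy'
      exact hra

end Ctx
end FPD

namespace FPD
namespace Ctx

variable {V : Type u} (C : Ctx V)

/-- Forward arcs of a residual walk. -/
def Fwd (W : List (Bool × V)) : Set (V × V) :=
  {e | e.1 ≠ e.2 ∧ ((true, e.1), (false, e.2)) ∈ W.zip W.tail}

/-- Reversed (cancelled) arcs of a residual walk. -/
def Rev (W : List (Bool × V)) : Set (V × V) :=
  {e | e.1 ≠ e.2 ∧ ((false, e.2), (true, e.1)) ∈ W.zip W.tail}

/-- The arcs of the protected suffix of `q₀`, starting at `s`. -/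
def SufA (s : V) (suf : List V) : Set (V × V) :=
  {e | e ∈ (s :: suf).zip suf}

/-- The rerouted arc set. -/
def G (W : List (Bool × V)) (y s : V) (suf : List V) : Set (V × V) :=
  (C.F \ Rev W) ∪ Fwd W ∪ {(y, s)} ∪ SufA s suf

section Walk

variable {W : List (Bool × V)} {y s : V} {pre suf : List V}

lemma WP_step (hW : C.Walk W) {σ τ : Bool × V} (h : (σ, τ) ∈ W.zip W.tail) :
    C.Step σ τ := chain'_iff_zip.mp hW.2.2.1 σ τ h

lemma WP_mem_left {σ τ : Bool × V} (h : (σ, τ) ∈ W.zip W.tail) : σ ∈ W := by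
  obtain ⟨xs, ys, e⟩ := mem_zip_iff.mp h
  rw [e]; simp

lemma WP_mem_right {σ τ : Bool × V} (h : (σ, τ) ∈ W.zip W.tail) : τ ∈ W := by
  obtain ⟨xs, ys, e⟩ := mem_zip_iff.mp h
  rw [e]; simp

lemma Fwd_spec (hW : C.Walk W) {a b : V} (h : (a, b) ∈ Fwd W) :
    (a, b) ∈ C.D ∧ (a, b) ≠ (C.u, C.v) ∧ b ∉ C.ExclS ∧ (true, a) ∈ W ∧
      (false, b) ∈ W := by
  obtain ⟨hne, hm⟩ := h
  have hst := C.WP_step hW hm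
  rcases hst with ⟨_, _, h3, h4, h5⟩ | ⟨_, h2, _, _⟩ | ⟨h1, _, _⟩ | ⟨_, _, h3, _⟩
  · exact ⟨h3, h4, h5, WP_mem_left hm, WP_mem_right hm⟩
  · simp at h2
  · simp at h1
  · exact absurd h3 hne

lemma Rev_sub_F (hW : C.Walk W) {a b : V} (h : (a, b) ∈ Rev W) : (a, b) ∈ C.F := by
  obtain ⟨hne, hm⟩ := h
  have hst := C.WP_step hW hm
  rcases hst with ⟨h1, _, _⟩ | ⟨_, _, h3, _⟩ | ⟨_, _, h3⟩ | ⟨h1, _, _⟩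
  · simp at h1
  · exact absurd h3.symm hne
  · exact h3
  · simp at h1

lemma walk_state_not_excl (hW : C.Walk W) {σ : Bool × V} (h : σ ∈ W) :
    σ.2 ∉ C.ExclS := C.walk_not_excl hW σ h

lemma last_state_mem (hW : C.Walk W) (hlast : W.getLast? = some (true, y)) :
    ((true, y) : Bool × V) ∈ W :=
  List.mem_of_mem_getLast? (by rw [hlast]; simp)

/-- Entry analysis for an out-state `(true, c)`, `c ≠ r`. -/
lemma ent_true (hW : C.Walk W) {c : V} (h : ((true, c) : Bool × V) ∈ W)
    (hc : c ≠ C.r) :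
    (¬ C.Used c ∧ (((false, c) : Bool × V), ((true, c) : Bool × V)) ∈ W.zip W.tail) ∨
      ∃ z, (c, z) ∈ C.F ∧ (c, z) ∈ Rev W := by
  have hne : ((true, c) : Bool × V) ≠ (true, C.r) := by simpa using hc
  obtain ⟨τ, hτ⟩ := pred_of_mem h hW.2.1 hne
  have hst := C.WP_step hW hτ
  rcases hst with ⟨_, h2, _⟩ | ⟨h1, h2, h3, h4⟩ | ⟨h1, h2, h3⟩ | ⟨_, h2, _⟩
  · simp at h2
  · left
    have : τ = (false, c) := by
      rcases τ with ⟨b, zz⟩; simp only at h1 h3; simp [h1, h3]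
    rw [this] at hτ h4
    exact ⟨by simpa using h4, hτ⟩
  · right
    refine ⟨τ.2, h3, C.F_ne h3, ?_⟩
    have : τ = (false, τ.2) := by rcases τ with ⟨b, zz⟩; simp only at h1; simp [h1]
    rw [← this]
    exact hτ
  · simp at h2

/-- Entry analysis for an in-state `(false, c)`. -/
lemma ent_false (hW : C.Walk W) {c : V} (h : ((false, c) : Bool × V) ∈ W) :
    (∃ x, (x, c) ∈ Fwd W) ∨
      ((((true, c) : Bool × V), ((false, c) : Bool × V)) ∈ W.zip W.tail ∧
        C.Used c) := by
  have hne : ((false, c) : Bool × V) ≠ (true, C.r) := by simp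
  obtain ⟨τ, hτ⟩ := pred_of_mem h hW.2.1 hne
  have hst := C.WP_step hW hτ
  rcases hst with ⟨h1, h2, h3, h4, h5⟩ | ⟨_, h2, _⟩ | ⟨_, h2, _⟩ | ⟨h1, h2, h3, h4⟩
  · left
    refine ⟨τ.2, ?_, ?_⟩
    · intro he
      have he' : τ.2 = c := he
      rw [he'] at h3
      exact C.hsimple c h3
    · have : τ = (true, τ.2) := by rcases τ with ⟨b, zz⟩; simp only at h1; simp [h1]
      rw [← this]
      exact hτ
  · simp at h2
  · simp at h2
  · right
    have : τ = (true, c) := by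
      rcases τ with ⟨b, zz⟩; simp only at h1 h3; simp [h1, h3]
    rw [this] at hτ h4
    exact ⟨hτ, h4⟩

/-- Exit analysis for an in-state `(false, c)`, given the walk ends at an out-state. -/
lemma exit_false (hW : C.Walk W) (hlast : W.getLast? = some (true, y))
    {c : V} (h : ((false, c) : Bool × V) ∈ W) :
    (¬ C.Used c ∧ (((false, c) : Bool × V), ((true, c) : Bool × V)) ∈ W.zip W.tail) ∨
      ∃ a, (a, c) ∈ C.F ∧ (a, c) ∈ Rev W := by
  have hne : ((false, c) : Bool × V) ≠ (true, y) := by simp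
  obtain ⟨τ, hτ⟩ := succ_of_mem h hlast hne
  have hst := C.WP_step hW hτ
  rcases hst with ⟨h1, h2, h3, h4, h5⟩ | ⟨h1, h2, h3, h4⟩ | ⟨h1, h2, h3⟩ | ⟨h1, h2, h3, h4⟩
  · simp at h1
  · left
    have : τ = (true, c) := by
      rcases τ with ⟨b, zz⟩; simp only at h2 h3; simp [h2, ← h3]
    rw [this] at hτ
    exact ⟨by simpa using h4, hτ⟩
  · right
    refine ⟨τ.2, h3, C.F_ne h3, ?_⟩
    have : τ = (true, τ.2) := by rcases τ with ⟨b, zz⟩; simp only at h2; simp [h2]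
    rw [← this]
    exact hτ
  · simp at h1

end Walk

end Ctx
end FPD

namespace FPD
namespace Ctx

variable {V : Type u} (C : Ctx V)
variable {W : List (Bool × V)} {y s : V} {pre suf : List V}

/- ### Suffix facts -/

lemma vT_getLast? : (C.v :: C.T).getLast? = some C.w := by
  have hgl := C.q0_getLast?
  rw [C.hverts, List.getLast?_append_of_ne_nil _ (by simp : C.u :: C.v :: C.T ≠ []),
    show (C.u :: C.v :: C.T).getLast? = (C.v :: C.T).getLast? from
      List.getLast?_cons_cons] at hgl
  exact hgl

lemma vT_sublist : (C.v :: C.T) <:+ (C.q0).verts := by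
  rw [C.hverts]
  exact ⟨C.A0 ++ [C.u], by simp⟩

lemma vT_nodup : (C.v :: C.T).Nodup :=
  (C.vT_sublist).sublist.nodup C.q0_nodup

lemma v_in_excl : C.v ∈ C.ExclS := by simp [ExclS]

lemma ssuf_sublist (hdec : C.v :: C.T = pre ++ s :: suf) :
    (s :: suf) <:+ (C.q0).verts := by
  obtain ⟨l, hl⟩ := C.vT_sublist
  exact ⟨l ++ pre, by rw [← hl, hdec]; simp⟩

lemma ssuf_nodup (hdec : C.v :: C.T = pre ++ s :: suf) : (s :: suf).Nodup := by
  have hsfx : (s :: suf) <:+ (C.v :: C.T) := ⟨pre, hdec.symm⟩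
  exact hsfx.sublist.nodup C.vT_nodup

lemma ssuf_getLast? (hdec : C.v :: C.T = pre ++ s :: suf) :
    (s :: suf).getLast? = some C.w := by
  have h := C.vT_getLast?
  rw [hdec, List.getLast?_append_of_ne_nil _ (by simp : s :: suf ≠ [])] at h
  exact h

lemma s_in_excl (hdec : C.v :: C.T = pre ++ s :: suf) : s ∈ C.ExclS := by
  show s ∈ C.v :: C.T
  rw [hdec]; simp

lemma suf_sub_excl (hdec : C.v :: C.T = pre ++ s :: suf) {b : V} (hb : b ∈ suf) :
    b ∈ C.ExclS := by
  show b ∈ C.v :: C.T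
  rw [hdec]; simp [hb]

lemma v_not_in_suf (hdec : C.v :: C.T = pre ++ s :: suf) : C.v ∉ suf := by
  intro hv
  have hnd := C.vT_nodup
  rcases pre with _ | ⟨a, t⟩
  · simp only [List.nil_append] at hdec
    have : C.v = s := (List.cons.injEq _ _ _ _ ▸ hdec).1
    rw [hdec] at hnd
    rw [this] at hv
    exact (List.nodup_cons.mp hnd).1 hv
  · simp only [List.cons_append, List.cons.injEq] at hdec
    obtain ⟨hva, hT⟩ := hdec
    have : C.v ∉ C.T := (List.nodup_cons.mp hnd).1
    apply this
    rw [hT]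
    simp [hv]

lemma SufA_mem_iff {a b : V} :
    (a, b) ∈ SufA s suf ↔ ∃ xs ys, s :: suf = xs ++ a :: b :: ys :=
  mem_zip_iff (l := s :: suf)

lemma SufA_sub_D (hdec : C.v :: C.T = pre ++ s :: suf) {a b : V}
    (h : (a, b) ∈ SufA s suf) : (a, b) ∈ C.D := by
  obtain ⟨xs, ys, he⟩ := SufA_mem_iff.mp h
  apply C.verts_chain C.hq0 a b
  apply mem_zip_iff.mpr
  refine ⟨A0 C ++ u C :: pre ++ xs, ys, ?_⟩
  rw [C.hverts, show C.u :: C.v :: C.T = [C.u] ++ (C.v :: C.T) from rfl, hdec, he]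
  simp

lemma SufA_head_in_suf {a b : V} (h : (a, b) ∈ SufA s suf) : b ∈ suf := by
  obtain ⟨xs, ys, he⟩ := SufA_mem_iff.mp h
  have := mem_tail_of_split he
  simpa using this

lemma SufA_tail_excl (hdec : C.v :: C.T = pre ++ s :: suf) {a b : V}
    (h : (a, b) ∈ SufA s suf) : a ∈ C.ExclS := by
  obtain ⟨xs, ys, he⟩ := SufA_mem_iff.mp h
  have ha : a ∈ s :: suf := by rw [he]; simp
  rcases List.mem_cons.mp ha with h1 | h1
  · rw [h1]; exact C.s_in_excl hdec
  · exact C.suf_sub_excl hdec h1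

lemma SufA_not_uv (hdec : C.v :: C.T = pre ++ s :: suf) :
    (C.u, C.v) ∉ SufA s suf := by
  intro h
  exact C.v_not_in_suf hdec (SufA_head_in_suf h)

lemma SufA_w_no_out (hdec : C.v :: C.T = pre ++ s :: suf) {b : V}
    (h : (C.w, b) ∈ SufA s suf) : False :=
  last_no_succ (C.ssuf_nodup hdec) (C.ssuf_getLast? hdec) h

lemma SufA_out_unique (hdec : C.v :: C.T = pre ++ s :: suf) {a b₁ b₂ : V}
    (h1 : (a, b₁) ∈ SufA s suf) (h2 : (a, b₂) ∈ SufA s suf) : b₁ = b₂ :=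
  succ_unique (C.ssuf_nodup hdec) h1 h2

lemma SufA_in_exists (hdec : C.v :: C.T = pre ++ s :: suf) {c : V} (hc : c ∈ suf) :
    ∃ a, (a, c) ∈ SufA s suf := by
  have hcs : c ≠ s := by
    intro h
    exact (List.nodup_cons.mp (C.ssuf_nodup hdec)).1 (h ▸ hc)
  exact pred_of_mem (by simp [hc] : c ∈ s :: suf) (by simp) hcs

lemma F_not_uv : (C.u, C.v) ∉ C.F := by
  intro h
  obtain ⟨p, hp, hne, _, hv⟩ := C.F_mem_tail h
  exact C.hvw (C.excl_on_other_path hp hne hv C.v_in_excl)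

lemma y_not_excl (hW : C.Walk W) (hlast : W.getLast? = some (true, y)) :
    y ∉ C.ExclS :=
  C.walk_state_not_excl hW (C.last_state_mem hW hlast)

/- ### The rerouted arc set -/

lemma G_sub (hW : C.Walk W) (hdec : C.v :: C.T = pre ++ s :: suf)
    (hys : (y, s) ∈ C.D) (hyuv : (y, s) ≠ (C.u, C.v)) {e : V × V}
    (h : e ∈ G C W y s suf) : e ∈ C.D ∧ e ≠ (C.u, C.v) := by
  rcases h with ((hF | hFw) | hY) | hS
  · exact ⟨C.F_sub_D (by exact hF.1), fun he => C.F_not_uv (he ▸ hF.1)⟩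
  · obtain ⟨h1, h2, _⟩ := C.Fwd_spec hW (by exact hFw)
    exact ⟨h1, h2⟩
  · rw [Set.mem_singleton_iff] at hY
    rw [hY]; exact ⟨hys, hyuv⟩
  · exact ⟨C.SufA_sub_D hdec hS, fun he => C.SufA_not_uv hdec (he ▸ hS)⟩

lemma G_w_no_out (hW : C.Walk W) (hlast : W.getLast? = some (true, y))
    (hdec : C.v :: C.T = pre ++ s :: suf) {b : V}
    (h : (C.w, b) ∈ G C W y s suf) : False := by
  rcases h with ((hF | hFw) | hY) | hS
  · exact C.F_tail_ne_w hF.1 rfl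
  · obtain ⟨_, _, _, h4, _⟩ := C.Fwd_spec hW hFw
    exact C.walk_state_not_excl hW h4 C.w_in_excl
  · rw [Set.mem_singleton_iff, Prod.mk.injEq] at hY
    exact C.y_not_excl hW hlast (hY.1 ▸ C.w_in_excl)
  · exact C.SufA_w_no_out hdec hS

lemma G_out_unique (hW : C.Walk W) (hlast : W.getLast? = some (true, y))
    (hdec : C.v :: C.T = pre ++ s :: suf) {c b₁ b₂ : V} (hc : c ≠ C.r)
    (h1 : (c, b₁) ∈ G C W y s suf) (h2 : (c, b₂) ∈ G C W y s suf) : b₁ = b₂ := by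
  -- helper: F-arcs not reversed conflict with walk presence of (true, c)
  have key : ∀ b : V, (c, b) ∈ C.F → (c, b) ∉ Rev W → ((true, c) : Bool × V) ∈ W →
      False := by
    intro b hF hnR htc
    rcases C.ent_true hW htc hc with ⟨hnu, _⟩ | ⟨z, hzF, hzR⟩
    · exact hnu (C.F_tail_used hF hc)
    · have : z = b := C.F_out_unique hzF hF hc
      exact hnR (this ▸ hzR)
  rcases h1 with ((hF1 | hFw1) | hY1) | hS1 <;> rcases h2 with ((hF2 | hFw2) | hY2) | hS2
  · exact C.F_out_unique hF1.1 hF2.1 hc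
  · exact absurd (C.Fwd_spec hW hFw2).2.2.2.1 (fun h => key b₁ hF1.1 hF1.2 h)
  · rw [Set.mem_singleton_iff, Prod.mk.injEq] at hY2
    exact absurd (hY2.1 ▸ C.last_state_mem hW hlast) (fun h => key b₁ hF1.1 hF1.2 h)
  · exact absurd (C.SufA_tail_excl hdec hS2) (C.F_tail_not_excl hF1.1)
  · exact absurd (C.Fwd_spec hW hFw1).2.2.2.1 (fun h => key b₂ hF2.1 hF2.2 h)
  · have := succ_unique hW.2.2.2 hFw1.2 hFw2.2
    exact congrArg Prod.snd this
  · rw [Set.mem_singleton_iff, Prod.mk.injEq] at hY2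
    exfalso
    apply last_no_succ hW.2.2.2 hlast (τ := (false, b₁))
    rw [← hY2.1]
    exact hFw1.2
  · exact absurd (C.SufA_tail_excl hdec hS2)
      (C.walk_state_not_excl hW (C.Fwd_spec hW hFw1).2.2.2.1)
  · rw [Set.mem_singleton_iff, Prod.mk.injEq] at hY1
    exact absurd (hY1.1 ▸ C.last_state_mem hW hlast) (fun h => key b₂ hF2.1 hF2.2 h)
  · rw [Set.mem_singleton_iff, Prod.mk.injEq] at hY1
    exfalso
    apply last_no_succ hW.2.2.2 hlast (τ := (false, b₂))
    rw [← hY1.1]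
    exact hFw2.2
  · rw [Set.mem_singleton_iff, Prod.mk.injEq] at hY1 hY2
    rw [hY1.2, hY2.2]
  · rw [Set.mem_singleton_iff, Prod.mk.injEq] at hY1
    exact absurd (C.SufA_tail_excl hdec hS2) (hY1.1 ▸ C.y_not_excl hW hlast)
  · exact absurd (C.SufA_tail_excl hdec hS1) (C.F_tail_not_excl hF2.1)
  · exact absurd (C.SufA_tail_excl hdec hS1)
      (C.walk_state_not_excl hW (C.Fwd_spec hW hFw2).2.2.2.1)
  · rw [Set.mem_singleton_iff, Prod.mk.injEq] at hY2
    exact absurd (C.SufA_tail_excl hdec hS1) (hY2.1 ▸ C.y_not_excl hW hlast)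
  · exact C.SufA_out_unique hdec hS1 hS2

lemma G_in_exists (hW : C.Walk W) (hlast : W.getLast? = some (true, y))
    (hdec : C.v :: C.T = pre ++ s :: suf) {c b : V} (hc : c ≠ C.r)
    (h : (c, b) ∈ G C W y s suf) : ∃ a, (a, c) ∈ G C W y s suf := by
  classical
  have hcw : c ≠ C.w := fun hcw => C.G_w_no_out hW hlast hdec (hcw ▸ h)
  -- helper: used vertex whose in-state is not on the walk
  have CSL2 : C.Used c → ((false, c) : Bool × V) ∉ W → ∃ a, (a, c) ∈ G C W y s suf := by
    intro hu hnw
    obtain ⟨a₀, ha₀⟩ := C.F_pred_exists hu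
    refine ⟨a₀, Or.inl (Or.inl (Or.inl ⟨ha₀, ?_⟩))⟩
    intro hrev
    exact hnw (WP_mem_left hrev.2)
  have CSL1 : C.Used c → ((false, c) : Bool × V) ∈ W →
      ((((true, c) : Bool × V), ((false, c) : Bool × V)) ∈ W.zip W.tail → False) →
      ∃ a, (a, c) ∈ G C W y s suf := by
    intro hu hw hno
    rcases C.ent_false hW hw with ⟨x, hx⟩ | ⟨hp, _⟩
    · exact ⟨x, Or.inl (Or.inl (Or.inr hx))⟩
    · exact absurd hp hno
  have FREE : ¬ C.Used c → ((true, c) : Bool × V) ∈ W → ∃ a, (a, c) ∈ G C W y s suf := by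
    intro hnu htc
    rcases C.ent_true hW htc hc with ⟨_, hp⟩ | ⟨z, hzF, _⟩
    · rcases C.ent_false hW (WP_mem_left hp) with ⟨x, hx⟩ | ⟨_, hu⟩
      · exact ⟨x, Or.inl (Or.inl (Or.inr hx))⟩
      · exact absurd hu hnu
    · exact absurd (C.F_tail_used hzF hc) hnu
  rcases h with ((hF | hFw) | hY) | hS
  · -- F \ Rev
    have hu : C.Used c := C.F_tail_used hF.1 hc
    by_cases hw : ((false, c) : Bool × V) ∈ W
    · refine CSL1 hu hw (fun hp => ?_)
      rcases C.ent_true hW (WP_mem_left hp) hc with ⟨hnu, _⟩ | ⟨z, hzF, hzR⟩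
      · exact hnu hu
      · have : z = b := C.F_out_unique hzF hF.1 hc
        exact hF.2 (this ▸ hzR)
    · exact CSL2 hu hw
  · -- Fwd
    have htc : ((true, c) : Bool × V) ∈ W := (C.Fwd_spec hW hFw).2.2.2.1
    by_cases hu : C.Used c
    · by_cases hw : ((false, c) : Bool × V) ∈ W
      · refine CSL1 hu hw (fun hp => ?_)
        have := succ_unique hW.2.2.2 hp hFw.2
        have : c = b := congrArg Prod.snd this
        exact hFw.1 this
      · exact CSL2 hu hw
    · exact FREE hu htc
  · -- (y, s)
    rw [Set.mem_singleton_iff, Prod.mk.injEq] at hY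
    obtain ⟨hcy, _⟩ := hY
    subst hcy
    have htc : ((true, c) : Bool × V) ∈ W := C.last_state_mem hW hlast
    by_cases hu : C.Used c
    · by_cases hw : ((false, c) : Bool × V) ∈ W
      · exact CSL1 hu hw (fun hp => last_no_succ hW.2.2.2 hlast hp)
      · exact CSL2 hu hw
    · exact FREE hu htc
  · -- SufA
    obtain ⟨xs, ys, he⟩ := SufA_mem_iff.mp hS
    rcases xs with _ | ⟨x₀, xs'⟩
    · have hcs : c = s := by
        simp only [List.nil_append, List.cons.injEq] at he
        exact he.1.symm
      exact ⟨y, Or.inl (Or.inr (by rw [hcs]; rfl))⟩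
    · have hcsuf : c ∈ suf := by
        have he' := he
        simp only [List.cons_append, List.cons.injEq] at he'
        rw [he'.2]
        simp
      obtain ⟨a, ha⟩ := C.SufA_in_exists hdec hcsuf
      exact ⟨a, Or.inr ha⟩

lemma G_into_w (hW : C.Walk W) (hdec : C.v :: C.T = pre ++ s :: suf)
    (hsuf : suf ≠ []) {e : V × V} (he : e ∈ inEdges C.D C.w) :
    e ∈ G C W y s suf := by
  have heE : e ∈ Eplus C.Q0 := by rw [C.hEp]; exact he
  obtain ⟨p, hp, hle⟩ := heE
  rw [DiPath.lastEdge] at hle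
  obtain ⟨xs, hxs⟩ := zip_getLast?_iff.mp (by rw [hle])
  have he2 : e.2 = C.w := he.2
  by_cases hpq : p = C.q0
  · -- e is the last edge of q₀ : it lies in SufA
    right
    have hsub : (s :: suf) <:+ p.verts := hpq ▸ C.ssuf_sublist hdec
    have hlen : 2 ≤ (s :: suf).length := by
      rcases suf with _ | ⟨a, t⟩
      · exact absurd rfl hsuf
      · simp
    obtain ⟨Z, hZ⟩ := suffix_last_two hsub hxs hlen
    apply SufA_mem_iff.mpr
    exact ⟨Z, [], by rw [hZ]⟩
  · left; left; left
    constructor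
    · exact ⟨p, hp, hpq, mem_zip_iff.mpr ⟨xs, [], by rw [hxs]⟩⟩
    · rintro ⟨hne, hmem⟩
      have : ((false, e.2) : Bool × V) ∈ W := WP_mem_left hmem
      rw [he2] at this
      exact C.walk_state_not_excl hW this C.w_in_excl

end Ctx
end FPD

namespace FPD
namespace Ctx

variable {V : Type u} (C : Ctx V)
variable {W : List (Bool × V)} {y s : V} {pre suf : List V}

/-- The finite region in which a backwards trail for `pt` lives. -/
def Kreg (W : List (Bool × V)) (y s : V) (pt : DiPath V) : Set V :=
  {a | ∃ σ ∈ W, σ.2 = a} ∪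
  {a | ∃ p ∈ C.Q0, p ≠ C.q0 ∧ a ∈ p.verts ∧
    ∃ c, (∃ σ ∈ W, σ.2 = c) ∧ c ∈ p.verts ∧ c ≠ C.r ∧ c ≠ C.w} ∪
  {a | a ∈ pt.verts} ∪ {a | a ∈ C.v :: C.T} ∪ {C.r, y, s}

lemma Kreg_finite (pt : DiPath V) : (C.Kreg W y s pt).Finite := by
  have h1 : ∀ c : V, Set.Finite {a | ∃ p ∈ C.Q0, p ≠ C.q0 ∧ a ∈ p.verts ∧
      c ∈ p.verts ∧ c ≠ C.r ∧ c ≠ C.w} := by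
    intro c
    by_cases hc : ∃ p ∈ C.Q0, p ≠ C.q0 ∧ c ∈ p.verts ∧ c ≠ C.r ∧ c ≠ C.w
    · obtain ⟨p₀, hp₀, hne₀, hc₀, hcr, hcw⟩ := hc
      apply Set.Finite.subset (List.finite_toSet p₀.verts)
      rintro a ⟨p, hp, hne, ha, hcp, hcr', hcw'⟩
      have : p = p₀ := C.path_unique hp hp₀ hcp hc₀ hcr' hcw'
      rw [this] at ha
      exact ha
    · apply Set.Finite.subset Set.finite_empty
      rintro a ⟨p, hp, hne, _, hcp, h1', h2'⟩
      exact absurd ⟨p, hp, hne, hcp, h1', h2'⟩ hc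
  have hw : Set.Finite {a : V | ∃ σ ∈ W, σ.2 = a} := by
    apply Set.Finite.subset ((W.finite_toSet).image Prod.snd)
    rintro a ⟨σ, hσ, rfl⟩
    exact ⟨σ, hσ, rfl⟩
  have htch : Set.Finite {a | ∃ p ∈ C.Q0, p ≠ C.q0 ∧ a ∈ p.verts ∧
      ∃ c, (∃ σ ∈ W, σ.2 = c) ∧ c ∈ p.verts ∧ c ≠ C.r ∧ c ≠ C.w} := by
    apply Set.Finite.subset (Set.Finite.biUnion (W.finite_toSet)
      (fun σ _ => h1 σ.2))
    rintro a ⟨p, hp, hne, ha, c, ⟨σ, hσ, rfl⟩, hcp, hcr, hcw⟩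
    exact Set.mem_biUnion hσ ⟨p, hp, hne, ha, hcp, hcr, hcw⟩
  refine Set.Finite.union (Set.Finite.union (Set.Finite.union (Set.Finite.union
    hw htch) (List.finite_toSet pt.verts)) (List.finite_toSet _)) ?_
  exact (Set.finite_singleton C.r).union ((Set.finite_singleton y).union
    (Set.finite_singleton s)) |>.subset (by intro x hx; rcases hx with h | h | h <;> simp_all)

lemma mem_Kreg_walk {pt : DiPath V} {a : V} (h : ∃ σ ∈ W, σ.2 = a) :
    a ∈ C.Kreg W y s pt := Or.inl (Or.inl (Or.inl (Or.inl h)))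

lemma mem_Kreg_touched {pt : DiPath V} {a : V}
    (h : ∃ p ∈ C.Q0, p ≠ C.q0 ∧ a ∈ p.verts ∧
      ∃ c, (∃ σ ∈ W, σ.2 = c) ∧ c ∈ p.verts ∧ c ≠ C.r ∧ c ≠ C.w) :
    a ∈ C.Kreg W y s pt := Or.inl (Or.inl (Or.inl (Or.inr h)))

lemma mem_Kreg_pt {pt : DiPath V} {a : V} (h : a ∈ pt.verts) :
    a ∈ C.Kreg W y s pt := Or.inl (Or.inl (Or.inr h))

lemma mem_Kreg_excl {pt : DiPath V} {a : V} (h : a ∈ C.v :: C.T) :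
    a ∈ C.Kreg W y s pt := Or.inl (Or.inr h)

lemma mem_Kreg_rys {pt : DiPath V} {a : V} (h : a = C.r ∨ a = y ∨ a = s) :
    a ∈ C.Kreg W y s pt := by
  right
  rcases h with h | h | h <;> simp [h]

lemma Kreg_closed (hW : C.Walk W) (hlast : W.getLast? = some (true, y))
    (hdec : C.v :: C.T = pre ++ s :: suf) {pt : DiPath V} (hpt : pt ∈ C.Q0)
    {a b : V} (hab : (a, b) ∈ G C W y s suf) (hb : b ∈ C.Kreg W y s pt)
    (hbw : b ≠ C.w) : a ∈ C.Kreg W y s pt := by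
  rcases hab with ((hF | hFw) | hY) | hS
  · -- F \ Rev
    obtain ⟨p', hp', hne', haP, hbP⟩ := C.F_mem_tail hF.1
    have hbr : b ≠ C.r := C.F_head_ne_r hF.1
    rcases hb with ((((hb1 | hb2) | hb3) | hb4) | hb5)
    · exact C.mem_Kreg_touched ⟨p', hp', hne', haP, b, hb1, hbP, hbr, hbw⟩
    · obtain ⟨p'', hp'', hne'', hbP'', c, hcW, hcP'', hcr, hcw⟩ := hb2
      have hpe : p' = p'' := C.path_unique hp' hp'' hbP hbP'' hbr hbw
      have haP'' : a ∈ p''.verts := by rw [← hpe]; exact haP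
      exact C.mem_Kreg_touched ⟨p'', hp'', hne'', haP'', c, hcW, hcP'', hcr, hcw⟩
    · have hpe : p' = pt := C.path_unique hp' hpt hbP hb3 hbr hbw
      have haP' : a ∈ pt.verts := by rw [← hpe]; exact haP
      exact C.mem_Kreg_pt haP'
    · exact absurd hb4 (C.used_not_excl ⟨p', hp', hne', hbP, hbr, hbw⟩)
    · simp only [Set.mem_insert_iff, Set.mem_singleton_iff] at hb5
      rcases hb5 with hb5 | hb5 | hb5
      · exact absurd hb5 hbr
      · subst hb5
        exact C.mem_Kreg_touched ⟨p', hp', hne', haP, b,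
          ⟨(true, b), C.last_state_mem hW hlast, rfl⟩, hbP, hbr, hbw⟩
      · subst hb5
        exact absurd (C.s_in_excl hdec)
          (C.used_not_excl ⟨p', hp', hne', hbP, hbr, hbw⟩)
  · exact C.mem_Kreg_walk ⟨(true, a), (C.Fwd_spec hW hFw).2.2.2.1, rfl⟩
  · rw [Set.mem_singleton_iff, Prod.mk.injEq] at hY
    exact C.mem_Kreg_rys (Or.inr (Or.inl hY.1))
  · obtain ⟨xs, ys, he⟩ := SufA_mem_iff.mp hS
    have ha : a ∈ s :: suf := by rw [he]; simp
    rcases List.mem_cons.mp ha with h1 | h1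
    · exact C.mem_Kreg_rys (Or.inr (Or.inr h1))
    · exact C.mem_Kreg_excl (by rw [hdec]; simp [h1])

lemma trail_aux (hW : C.Walk W) (hlast : W.getLast? = some (true, y))
    (hdec : C.v :: C.T = pre ++ s :: suf) (hys : (y, s) ∈ C.D)
    (hyuv : (y, s) ≠ (C.u, C.v)) {pt : DiPath V} (hpt : pt ∈ C.Q0) :
    ∀ n : ℕ, ∀ (z : V) (L : List V),
      (z :: L).Nodup → C.w ∉ z :: L → C.r ∉ L →
      (∀ a ∈ z :: L, a ∈ C.Kreg W y s pt) →
      List.Chain' (fun a b => (a, b) ∈ G C W y s suf) ((z :: L) ++ [C.w]) →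
      ((C.Kreg_finite (W := W) (y := y) (s := s) pt).toFinset.card <
        n + (z :: L).length) →
      ∃ M pre', M = pre' ++ z :: L ∧ M.head? = some C.r ∧ M.Nodup ∧ C.w ∉ M ∧
        (∀ a ∈ M, a ∈ C.Kreg W y s pt) ∧
        List.Chain' (fun a b => (a, b) ∈ G C W y s suf) (M ++ [C.w]) := by
  classical
  intro n
  induction n with
  | zero =>
    intro z L hnd hnw hnr hK hch hcard
    exfalso
    have hsub : (z :: L).toFinset ⊆ (C.Kreg_finite (W := W) (y := y) (s := s)
        pt).toFinset := by
      intro a ha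
      rw [Set.Finite.mem_toFinset]
      exact hK a (by simpa using ha)
    have hlen := List.toFinset_card_of_nodup hnd
    have := Finset.card_le_card hsub
    omega
  | succ n ih =>
    intro z L hnd hnw hnr hK hch hcard
    by_cases hzr : z = C.r
    · refine ⟨z :: L, [], by simp, ?_, hnd, hnw, hK, hch⟩
      rw [hzr]
      simp
    · have hout : ∃ b₀, (z, b₀) ∈ G C W y s suf := by
        rcases L with _ | ⟨c₀, L'⟩
        · exact ⟨C.w, (List.isChain_cons_cons.mp hch).1⟩
        · exact ⟨c₀, (List.isChain_cons_cons.mp hch).1⟩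
      obtain ⟨b₀, hb₀⟩ := hout
      obtain ⟨a, ha⟩ := C.G_in_exists hW hlast hdec hzr hb₀
      have haD : (a, z) ∈ C.D := (C.G_sub hW hdec hys hyuv ha).1
      have haz : a ≠ z := fun h => C.hsimple z (by rw [h] at haD; exact haD)
      have haw : a ≠ C.w := fun h => C.G_w_no_out hW hlast hdec (by rw [← h]; exact ha)
      have haK : a ∈ C.Kreg W y s pt :=
        C.Kreg_closed hW hlast hdec hpt ha (hK z (by simp))
          (fun h => hnw (by simp [h]))
      have hndw : ((z :: L) ++ [C.w]).Nodup := by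
        refine hnd.append (by simp) ?_
        intro x hx
        simp only [List.mem_singleton]
        intro hxe
        exact hnw (hxe ▸ hx)
      have hanL : a ∉ L := by
        intro haL
        have har : a ≠ C.r := fun h => hnr (h ▸ haL)
        have hmem : a ∈ (z :: L) ++ [C.w] := by simp [haL]
        obtain ⟨d, hd⟩ := succ_of_mem hmem (by rw [List.getLast?_concat]) haw
        have hdG : (a, d) ∈ G C W y s suf := chain'_iff_zip.mp hch a d hd
        have hdz : d = z := C.G_out_unique hW hlast hdec har hdG ha
        rw [hdz] at hd
        exact head_no_pred hndw (by simp) hd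
      have hnd' : (a :: z :: L).Nodup := by
        refine List.nodup_cons.mpr ⟨?_, hnd⟩
        simp only [List.mem_cons, not_or]
        exact ⟨haz, hanL⟩
      have hnw' : C.w ∉ a :: z :: L := by
        simp only [List.mem_cons, not_or]
        refine ⟨fun h => haw h.symm, fun h => hnw (by simp [h]), fun h => hnw (by simp [h])⟩
      have hnr' : C.r ∉ z :: L := by
        simp only [List.mem_cons, not_or]
        exact ⟨fun h => hzr h.symm, hnr⟩
      have hK' : ∀ x ∈ a :: z :: L, x ∈ C.Kreg W y s pt := by
        intro x hx
        rcases List.mem_cons.mp hx with rfl | hx'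
        · exact haK
        · exact hK x hx'
      have hch' : List.Chain' (fun a b => (a, b) ∈ G C W y s suf)
          ((a :: z :: L) ++ [C.w]) := List.isChain_cons_cons.mpr ⟨ha, hch⟩
      have hcard' : (C.Kreg_finite (W := W) (y := y) (s := s) pt).toFinset.card <
          n + (a :: z :: L).length := by
        simp only [List.length_cons] at hcard ⊢
        omega
      obtain ⟨M, pre', hM, hMh, hMnd, hMnw, hMK, hMch⟩ :=
        ih a (z :: L) hnd' hnw' hnr' hK' hch' hcard'
      exact ⟨M, pre' ++ [a], by rw [hM]; simp, hMh, hMnd, hMnw, hMK, hMch⟩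

lemma trail_exists (hW : C.Walk W) (hlast : W.getLast? = some (true, y))
    (hdec : C.v :: C.T = pre ++ s :: suf) (hsuf : suf ≠ [])
    (hys : (y, s) ∈ C.D) (hyuv : (y, s) ≠ (C.u, C.v)) {e : V × V}
    (he : e ∈ inEdges C.D C.w) :
    ∃ L : List V, L ≠ [] ∧ L.head? = some C.r ∧ L.getLast? = some e.1 ∧
      L.Nodup ∧ C.w ∉ L ∧
      List.Chain' (fun a b => (a, b) ∈ G C W y s suf) (L ++ [C.w]) := by
  classical
  have heE : e ∈ Eplus C.Q0 := by rw [C.hEp]; exact he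
  obtain ⟨pt, hpt, hle⟩ := heE
  rw [DiPath.lastEdge] at hle
  obtain ⟨xs, hxs⟩ := zip_getLast?_iff.mp (by rw [hle])
  have ht_mem : e.1 ∈ pt.verts := by rw [hxs]; simp
  have he2 : e = (e.1, C.w) := by
    have h2 := he.2
    rcases e with ⟨e1, e2⟩
    simp only [Prod.mk.injEq, true_and]
    exact h2
  have htw : e.1 ≠ C.w := by
    intro h
    apply C.hsimple C.w
    have h1 := he.1
    rw [he2, h] at h1
    exact h1
  have hG : (e.1, C.w) ∈ G C W y s suf := by
    rw [← he2]
    exact C.G_into_w hW hdec hsuf he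
  have hnw1 : C.w ∉ [e.1] := by
    simp only [List.mem_singleton]
    exact fun h => htw h.symm
  obtain ⟨M, pre', hM, hMh, hMnd, hMnw, _, hMch⟩ :=
    C.trail_aux hW hlast hdec hys hyuv hpt
      ((C.Kreg_finite (W := W) (y := y) (s := s) pt).toFinset.card + 1) e.1 []
      (by simp) hnw1 (by simp)
      (by
        intro a ha
        simp only [List.mem_singleton] at ha
        subst ha
        exact C.mem_Kreg_pt ht_mem)
      (by
        simp only [List.cons_append, List.nil_append]
        exact List.isChain_pair.mpr hG)
      (by simp only [List.length_cons, List.length_nil]; omega)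
  refine ⟨M, by rw [hM]; simp, hMh, ?_, hMnd, hMnw, hMch⟩
  rw [hM, List.getLast?_append_of_ne_nil _ (by simp : [e.1] ≠ [])]
  simp

lemma chain_w_unique (hW : C.Walk W) (hlast : W.getLast? = some (true, y))
    (hdec : C.v :: C.T = pre ++ s :: suf) :
    ∀ (M₁ M₂ : List V),
      List.Chain' (fun a b => (a, b) ∈ G C W y s suf) M₁ →
      List.Chain' (fun a b => (a, b) ∈ G C W y s suf) M₂ →
      M₁ ≠ [] → M₂ ≠ [] → M₁.head? = M₂.head? →
      M₁.getLast? = some C.w → M₂.getLast? = some C.w → C.r ∉ M₁ → M₁ = M₂ := by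
  intro M₁
  induction M₁ with
  | nil => intro M₂ _ _ h1 _ _ _ _ _; exact absurd rfl h1
  | cons a M₁' ih =>
    intro M₂ hc1 hc2 _ hM2 hhd hg1 hg2 hr1
    rcases M₂ with _ | ⟨a₂, M₂'⟩
    · exact absurd rfl hM2
    · simp only [List.head?_cons, Option.some.injEq] at hhd
      subst hhd
      rcases M₁' with _ | ⟨b₁, M₁''⟩
      · simp only [List.getLast?_singleton, Option.some.injEq] at hg1
        subst hg1
        rcases M₂' with _ | ⟨b₂, M₂''⟩
        · rfl
        · exact absurd (List.isChain_cons_cons.mp hc2).1 (fun h =>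
            C.G_w_no_out hW hlast hdec h)
      · have haw : a ≠ C.w := by
          intro h
          rw [h] at hc1
          exact C.G_w_no_out hW hlast hdec (List.isChain_cons_cons.mp hc1).1
        rcases M₂' with _ | ⟨b₂, M₂''⟩
        · exfalso
          simp only [List.getLast?_singleton, Option.some.injEq] at hg2
          exact haw hg2
        · have har : a ≠ C.r := fun h => hr1 (by simp [h])
          have hb : b₁ = b₂ := C.G_out_unique hW hlast hdec har
            (List.isChain_cons_cons.mp hc1).1 (List.isChain_cons_cons.mp hc2).1
          subst hb
          have heq := ih (b₁ :: M₂'') (List.isChain_cons_cons.mp hc1).2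
            (List.isChain_cons_cons.mp hc2).2 (by simp) (by simp) (by simp)
            (by rw [← List.getLast?_cons_cons]; exact hg1)
            (by rw [← List.getLast?_cons_cons]; exact hg2)
            (fun h => hr1 (by simp [h]))
          rw [heq]

end Ctx
end FPD

namespace FPD
namespace Ctx

variable {V : Type u} (C : Ctx V)
variable {W : List (Bool × V)} {y s : V} {pre suf : List V}

lemma aug_false {y s : V} (hy : C.Reach true y) (hys : (y, s) ∈ C.D)
    (hyuv : (y, s) ≠ (C.u, C.v)) (htar : C.Tar s) : False := by
  classical
  obtain ⟨W, hW, hlast⟩ := hy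
  obtain ⟨pre, suf, hdec, hsuf⟩ := htar
  have htr : ∀ e ∈ inEdges C.D C.w, ∃ L : List V, L ≠ [] ∧ L.head? = some C.r ∧
      L.getLast? = some e.1 ∧ L.Nodup ∧ C.w ∉ L ∧
      List.Chain' (fun a b => (a, b) ∈ G C W y s suf) (L ++ [C.w]) :=
    fun e he => C.trail_exists hW hlast hdec hsuf hys hyuv he
  choose L hLne hLh hLl hLnd hLnw hLch using htr
  have hpthe : ∀ e (he : e ∈ inEdges C.D C.w), ∃ q : DiPath V,
      q.verts = L e he ++ [C.w] := by
    intro e he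
    refine ⟨⟨L e he ++ [C.w], by simp, ?_⟩, rfl⟩
    refine (hLnd e he).append (by simp) ?_
    intro x hx
    simp only [List.mem_singleton]
    intro hxe
    exact (hLnw e he) (hxe ▸ hx)
  choose pth hpth using hpthe
  apply C.hnot
  refine ⟨?_, {q | ∃ e, ∃ he : e ∈ inEdges C.D C.w, q = pth e he}, ⟨?_, ?_⟩, ?_⟩
  · -- inEdges D w ⊆ inEdges (D \ uv) w
    rintro e ⟨heD, he2⟩
    refine ⟨⟨heD, ?_⟩, he2⟩
    simp only [Set.mem_singleton_iff]
    intro heuv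
    apply C.hvw
    rw [heuv] at he2
    exact he2
  · -- path properties
    rintro q ⟨e, he, rfl⟩
    have hv := hpth e he
    have hqne : (pth e he).verts ≠ [] := (pth e he).ne
    refine ⟨?_, ?_, ?_⟩
    · rw [IsPathIn, hv]
      refine List.IsChain.imp ?_ (hLch e he)
      intro a b hab
      obtain ⟨h1, h2⟩ := C.G_sub hW hdec hys hyuv hab
      exact ⟨h1, by simpa using h2⟩
    · rw [DiPath.first]
      have : (pth e he).verts.head? = some C.r := by
        rw [hv, List.head?_append_of_ne_nil _ (hLne e he)]
        exact hLh e he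
      exact head_eq_of_head? hqne this
    · rw [DiPath.last]
      have : (pth e he).verts.getLast? = some C.w := by
        rw [hv, List.getLast?_append_of_ne_nil _ (by simp : [C.w] ≠ [])]
        simp
      exact getLast_eq_of_getLast? hqne this
  · -- pairwise internal disjointness
    rintro q₁ ⟨e₁, he₁, rfl⟩ q₂ ⟨e₂, he₂, rfl⟩ hne x hx
    obtain ⟨hx1, hx2⟩ := hx
    simp only [DiPath.vertexSet, Set.mem_setOf_eq, hpth e₁ he₁, hpth e₂ he₂] at hx1 hx2
    by_contra hxns
    simp only [Set.mem_insert_iff, Set.mem_singleton_iff, not_or] at hxns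
    obtain ⟨hxr, hxw⟩ := hxns
    have hx1' : x ∈ L e₁ he₁ := by
      rcases List.mem_append.mp hx1 with h | h
      · exact h
      · simp only [List.mem_singleton] at h; exact absurd h hxw
    have hx2' : x ∈ L e₂ he₂ := by
      rcases List.mem_append.mp hx2 with h | h
      · exact h
      · simp only [List.mem_singleton] at h; exact absurd h hxw
    obtain ⟨X₁, Y₁, hXY₁⟩ := List.append_of_mem hx1'
    obtain ⟨X₂, Y₂, hXY₂⟩ := List.append_of_mem hx2'
    have hsfx₁ : (x :: (Y₁ ++ [C.w])) <:+ (L e₁ he₁ ++ [C.w]) :=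
      ⟨X₁, by rw [hXY₁]; simp⟩
    have hsfx₂ : (x :: (Y₂ ++ [C.w])) <:+ (L e₂ he₂ ++ [C.w]) :=
      ⟨X₂, by rw [hXY₂]; simp⟩
    have hrnotin : ∀ (e : V × V) (he : e ∈ inEdges C.D C.w) (X Y : List V),
        L e he = X ++ x :: Y → C.r ∉ x :: (Y ++ [C.w]) := by
      intro e he X Y hXY
      intro hmem
      rcases List.mem_cons.mp hmem with h | h
      · exact hxr h.symm
      rcases List.mem_append.mp h with hrY | h'
      · have hh := hLh e he
        rw [hXY] at hh
        have hnd := hLnd e he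
        rw [hXY] at hnd
        rcases X with _ | ⟨c, X'⟩
        · simp only [List.nil_append, List.head?_cons, Option.some.injEq] at hh
          exact hxr hh
        · simp only [List.cons_append, List.head?_cons, Option.some.injEq] at hh
          subst hh
          simp only [List.cons_append, List.nodup_cons] at hnd
          exact hnd.1 (by simp [hrY])
      · simp only [List.mem_singleton] at h'
        exact C.hwr h'.symm
    have hM : x :: (Y₁ ++ [C.w]) = x :: (Y₂ ++ [C.w]) := by
      refine C.chain_w_unique hW hlast hdec _ _ ?_ ?_ (by simp) (by simp) rfl ?_ ?_
        (hrnotin e₁ he₁ X₁ Y₁ hXY₁)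
      · exact (hLch e₁ he₁).suffix hsfx₁
      · exact (hLch e₂ he₂).suffix hsfx₂
      · rw [show x :: (Y₁ ++ [C.w]) = (x :: Y₁) ++ [C.w] by simp]
        exact List.getLast?_concat
      · rw [show x :: (Y₂ ++ [C.w]) = (x :: Y₂) ++ [C.w] by simp]
        exact List.getLast?_concat
    have hY : Y₁ = Y₂ := by
      have := List.cons.injEq x (Y₁ ++ [C.w]) x (Y₂ ++ [C.w]) ▸ hM
      have h2 : Y₁ ++ [C.w] = Y₂ ++ [C.w] := this.2
      have := congrArg List.dropLast h2
      simpa using this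
    have he1t : (x :: Y₁).getLast? = some e₁.1 := by
      have := hLl e₁ he₁
      rw [hXY₁, List.getLast?_append_of_ne_nil _ (by simp : x :: Y₁ ≠ [])] at this
      exact this
    have he2t : (x :: Y₂).getLast? = some e₂.1 := by
      have := hLl e₂ he₂
      rw [hXY₂, List.getLast?_append_of_ne_nil _ (by simp : x :: Y₂ ≠ [])] at this
      exact this
    have hee : e₁ = e₂ := by
      rw [hY] at he1t
      have h1 : e₁.1 = e₂.1 := Option.some.inj (he1t.symm.trans he2t)
      have h2 : e₁ = (e₁.1, C.w) := by
        have := he₁.2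
        rcases e₁ with ⟨a, b⟩
        simp only [Prod.mk.injEq, true_and]
        exact this
      have h3 : e₂ = (e₂.1, C.w) := by
        have := he₂.2
        rcases e₂ with ⟨a, b⟩
        simp only [Prod.mk.injEq, true_and]
        exact this
      rw [h2, h3, h1]
    subst hee
    exact hne rfl
  · -- Eplus = inEdges D w
    ext e'
    constructor
    · rintro ⟨q, ⟨e, he, rfl⟩, hq⟩
      rw [DiPath.lastEdge, hpth e he] at hq
      obtain ⟨Z, hZ⟩ := getLast?_split (hLl e he)
      rw [hZ] at hq
      have : ((Z ++ [e.1] ++ [C.w]).zip (Z ++ [e.1] ++ [C.w]).tail).getLast?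
          = some (e.1, C.w) := zip_getLast?_iff.mpr ⟨Z, by simp⟩
      rw [this] at hq
      have he2 : e = (e.1, C.w) := by
        have := he.2
        rcases e with ⟨a, b⟩
        simp only [Prod.mk.injEq, true_and]
        exact this
      rw [← Option.some.inj hq, ← he2]
      exact he
    · intro he'
      refine ⟨pth e' he', ⟨e', he', rfl⟩, ?_⟩
      rw [DiPath.lastEdge, hpth e' he']
      obtain ⟨Z, hZ⟩ := getLast?_split (hLl e' he')
      rw [hZ]
      have : ((Z ++ [e'.1] ++ [C.w]).zip (Z ++ [e'.1] ++ [C.w]).tail).getLast?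
          = some (e'.1, C.w) := zip_getLast?_iff.mpr ⟨Z, by simp⟩
      rw [this]
      have he2 : e' = (e'.1, C.w) := by
        have := he'.2
        rcases e' with ⟨a, b⟩
        simp only [Prod.mk.injEq, true_and]
        exact this
      rw [← he2]

end Ctx
end FPD

namespace FPD
namespace Ctx

variable {V : Type u} (C : Ctx V)

/-- The marker vertices: last residually-enterable vertex of a system path. -/
def MarkM (z : V) : Prop :=
  ∃ p ∈ C.Q0, p ≠ C.q0 ∧ ∃ as bs, p.verts = as ++ z :: bs ∧
    C.Reach false z ∧ ∀ b ∈ bs, ¬ C.Reach false b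

/-- The separator. -/
def SV : Set V :=
  insert C.v ({z | C.MarkM z} ∪ {z | z = C.w ∧ (C.r, C.w) ∈ C.D})

/-- The fan linking the separator from the root. -/
def PF : Set (DiPath V) :=
  {q | q.verts = C.A0 ++ [C.u, C.v]} ∪
  {q | ∃ p ∈ C.Q0, p ≠ C.q0 ∧ ∃ as z bs, p.verts = as ++ z :: bs ∧
    C.Reach false z ∧ (∀ b ∈ bs, ¬ C.Reach false b) ∧ q.verts = as ++ [z]} ∪
  {q | q.verts = [C.r, C.w] ∧ (C.r, C.w) ∈ C.D}

lemma reach_in_ne_r {z : V} (h : C.Reach false z) : z ≠ C.r :=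
  fun he => C.not_reach_in_r (he ▸ h)

lemma tar_v : C.Tar C.v := ⟨[], C.T, rfl, C.hT⟩

lemma v_ne_r : C.v ≠ C.r := fun h => C.r_ne_v h.symm

lemma w_in_T : C.w ∈ C.T := by
  have h := C.vT_getLast?
  have : C.w ∈ C.v :: C.T := List.mem_of_mem_getLast? (by rw [h]; simp)
  rcases List.mem_cons.mp this with h1 | h1
  · exact absurd h1.symm C.hvw
  · exact h1

lemma q0trunc_prefix : (C.A0 ++ [C.u, C.v]) <+: (C.q0).verts := by
  refine ⟨C.T, ?_⟩
  rw [C.hverts]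
  simp

lemma w_not_in_q0trunc : C.w ∉ C.A0 ++ [C.u, C.v] := by
  intro h
  have hnd := C.q0_nodup
  rw [C.hverts, show C.A0 ++ C.u :: C.v :: C.T = (C.A0 ++ [C.u, C.v]) ++ C.T by
    simp] at hnd
  exact (List.nodup_append'.mp hnd).2.2 h C.w_in_T

lemma w_not_in_trunc {p : DiPath V} (hp : p ∈ C.Q0) {as bs : List V} {z : V}
    (hd : p.verts = as ++ z :: bs) (hz : z ≠ C.w) : C.w ∉ as ++ [z] := by
  intro h
  have hgl := C.verts_getLast? hp
  rw [hd, List.getLast?_append_of_ne_nil _ (by simp : z :: bs ≠ [])] at hgl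
  have hwzb : C.w ∈ z :: bs := List.mem_of_mem_getLast? (by rw [hgl]; simp)
  have hnd := p.nodup
  rw [hd] at hnd
  have hdisj := (List.nodup_append'.mp hnd).2.2
  rcases List.mem_append.mp h with h1 | h1
  · exact hdisj h1 hwzb
  · simp only [List.mem_singleton] at h1
    exact hz h1.symm

lemma mem_both {p₁ p₂ : DiPath V} (h1 : p₁ ∈ C.Q0) (h2 : p₂ ∈ C.Q0)
    (hne : p₁ ≠ p₂) {x : V} (hx1 : x ∈ p₁.verts) (hx2 : x ∈ p₂.verts) :
    x = C.r ∨ x = C.w := by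
  have := C.hQ0.2 p₁ h1 p₂ h2 hne ⟨hx1, hx2⟩
  simpa using this

lemma marker_unique {p : DiPath V} (hp : p ∈ C.Q0) {as₁ z₁ bs₁ as₂ z₂ bs₂}
    (hd1 : p.verts = as₁ ++ z₁ :: bs₁) (hr1 : C.Reach false z₁)
    (hm1 : ∀ b ∈ bs₁, ¬ C.Reach false b)
    (hd2 : p.verts = as₂ ++ z₂ :: bs₂) (hr2 : C.Reach false z₂)
    (hm2 : ∀ b ∈ bs₂, ¬ C.Reach false b) : z₁ = z₂ ∧ as₁ = as₂ := by
  have hz : z₁ = z₂ := by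
    by_contra hne
    rcases two_split p.nodup hd1 hd2 hne with ⟨_, hb⟩ | ⟨_, hb⟩
    · exact hm1 z₂ hb hr2
    · exact hm2 z₁ hb hr1
  subst hz
  exact ⟨rfl, (nodup_split_unique p.nodup hd1 hd2).1⟩

lemma marker_ne_r {z : V} (h : C.MarkM z) : z ≠ C.r := by
  obtain ⟨p, _, _, as, bs, _, hr, _⟩ := h
  exact C.reach_in_ne_r hr

lemma marker_not_excl {z : V} (h : C.MarkM z) : z ∉ C.ExclS := by
  obtain ⟨p, _, _, as, bs, _, hr, _⟩ := h
  exact C.reach_not_excl hr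

lemma SV_ne_r : C.SV ⊆ {x | x ≠ C.r} := by
  rintro x hx
  rcases hx with h | h | h
  · rw [h]; exact C.v_ne_r
  · exact C.marker_ne_r h
  · obtain ⟨h1, _⟩ := h
    rw [h1]
    exact fun he => C.hwr he

/- ### The separation lemma -/

lemma separation_aux :
    ∀ l : List V, l ≠ [] →
      List.Chain' (fun a b => (a, b) ∈ C.D) l → l.head? = some C.r →
      (∀ x ∈ l, x ∉ C.SV) →
      ∃ g, l.getLast? = some g ∧ C.Reach true g ∧ g ∉ C.ExclS := by
  intro l
  induction l using List.reverseRecOn with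
  | nil => intro h; exact absurd rfl h
  | append_singleton l' a ih =>
    intro _ hch hh hsv
    have hanSV : a ∉ C.SV := hsv a (by simp)
    have hanv : a ≠ C.v := fun h => hanSV (h ▸ Set.mem_insert _ _)
    rcases l' with _ | ⟨c, l''⟩
    · have ha : a = C.r := by simpa using hh
      refine ⟨a, by simp, ?_, ?_⟩
      · rw [ha]; exact C.reach_out_r
      · rw [ha]; exact C.r_not_excl
    · have hl'ne : c :: l'' ≠ [] := by simp
      have hmemL : ∀ x ∈ c :: l'', x ∈ (c :: l'') ++ [a] := by
        intro x hx
        exact List.mem_append.mpr (Or.inl hx)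
      obtain ⟨g, hg, hRg, hgE⟩ := ih hl'ne
        (hch.prefix (List.prefix_append _ _))
        (by rw [List.head?_append_of_ne_nil _ hl'ne] at hh; exact hh)
        (fun x hx => hsv x (hmemL x hx))
      have hgl : g ∈ c :: l'' := List.mem_of_mem_getLast? (by rw [hg]; simp)
      have hgnSV : g ∉ C.SV := hsv g (hmemL g hgl)
      have hga : (g, a) ∈ C.D := by
        have h3 := (List.isChain_append.mp hch).2.2
        exact h3 g (by rw [hg]; rfl) a (by simp)
      have hguv : (g, a) ≠ (C.u, C.v) := by
        intro h
        exact hanv (congrArg Prod.snd h)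
      by_cases haE : a ∈ C.ExclS
      · exfalso
        by_cases haw : a = C.w
        · -- entering w
          have hgaw : (g, C.w) ∈ C.D := by rw [haw] at hga; exact hga
          have hEp : ((g, C.w) : V × V) ∈ Eplus C.Q0 := by
            rw [C.hEp]; exact ⟨hgaw, rfl⟩
          obtain ⟨p₁, hp₁, hle⟩ := hEp
          rw [DiPath.lastEdge] at hle
          obtain ⟨xs, hxs⟩ := zip_getLast?_iff.mp hle
          by_cases hp₁q : p₁ = C.q0
          · -- g would be in the protected suffix
            rw [hp₁q] at hxs
            have hlen : 2 ≤ (C.v :: C.T).length := by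
              rcases hT : C.T with _ | ⟨b, t⟩
              · exact absurd hT C.hT
              · simp
            obtain ⟨Z, hZ⟩ := suffix_last_two C.vT_sublist hxs hlen
            apply hgE
            show g ∈ C.v :: C.T
            rw [hZ]
            simp
          · rcases xs with _ | ⟨c₀, xs'⟩
            · -- p₁ = [r, w], so (r, w) ∈ D and a = w ∈ SV
              have hh₁ := C.verts_head? hp₁
              rw [hxs] at hh₁
              simp only [List.nil_append, List.head?_cons, Option.some.injEq] at hh₁
              apply hanSV
              right; right
              refine ⟨haw, ?_⟩
              rw [← hh₁]
              exact hgaw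
            · have hgr : g ≠ C.r := by
                intro h
                have hh₁ := C.verts_head? hp₁
                rw [hxs] at hh₁
                simp only [List.cons_append, List.head?_cons, Option.some.injEq] at hh₁
                have hnd := p₁.nodup
                rw [hxs] at hnd
                simp only [List.cons_append, List.nodup_cons] at hnd
                apply hnd.1
                rw [hh₁, ← h]
                simp
              have hgw : g ≠ C.w := by
                intro h
                have hnd := p₁.nodup
                rw [hxs, h] at hnd
                have := (List.nodup_append.mp (by simpa using hnd : ((c₀ :: xs')
                  ++ [C.w, C.w]).Nodup)).2.1
                simp at this
              have hgU : C.Used g := ⟨p₁, hp₁, hp₁q, by rw [hxs]; simp, hgr, hgw⟩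
              have hRin : C.Reach false g := C.reach_R4 hRg hgU
              obtain ⟨as, m, bs, hdm, hRm, hmax⟩ :=
                exists_last_sat (l := p₁.verts) (P := C.Reach false)
                  ⟨g, by rw [hxs]; simp, hRin⟩
              have hmSV : m ∈ C.SV :=
                Or.inr (Or.inl ⟨p₁, hp₁, hp₁q, as, bs, hdm, hRm, hmax⟩)
              have hgm : g ≠ m := fun h => hgnSV (h ▸ hmSV)
              have hxs' : p₁.verts = (c₀ :: xs') ++ g :: [C.w] := by
                rw [hxs]
              rcases two_split p₁.nodup hxs' hdm hgm with ⟨_, hb⟩ | ⟨_, hb⟩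
              · simp only [List.mem_singleton] at hb
                rw [hb] at hRm
                exact C.reach_not_excl hRm C.w_in_excl
              · exact hmax g hb hRin
        · -- entering the protected suffix strictly after v
          have havT : a ∈ C.v :: C.T := haE
          obtain ⟨pre₀, suf₀, hsp⟩ := List.append_of_mem havT
          have hsuf₀ : suf₀ ≠ [] := by
            rintro rfl
            have hgl2 := C.vT_getLast?
            rw [hsp] at hgl2
            rw [show pre₀ ++ a :: ([] : List V) = pre₀ ++ [a] from rfl,
              List.getLast?_concat] at hgl2
            exact haw (Option.some.inj hgl2)
          exact C.aug_false hRg hga hguv ⟨pre₀, suf₀, hsp, hsuf₀⟩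
      · -- a stays in the residual region
        have hRina : C.Reach false a := C.reach_R1 hRg hga hguv haE
        by_cases hua : C.Used a
        · obtain ⟨p', hp', hne', haP, har, haw⟩ := hua
          obtain ⟨as, m, bs, hdm, hRm, hmax⟩ :=
            exists_last_sat (P := C.Reach false) ⟨a, haP, hRina⟩
          have hmSV : m ∈ C.SV :=
            Or.inr (Or.inl ⟨p', hp', hne', as, bs, hdm, hRm, hmax⟩)
          have ham : a ≠ m := fun h => hanSV (h ▸ hmSV)
          obtain ⟨asₐ, bsₐ, hda⟩ := List.append_of_mem haP
          rcases two_split p'.nodup hda hdm ham with ⟨haas, _⟩ | ⟨_, hb⟩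
          · exact ⟨a, List.getLast?_concat,
              C.back_prop hp' hne' as m bs hdm hRm a haas, haE⟩
          · exact absurd hRina (hmax a hb)
        · exact ⟨a, List.getLast?_concat, C.reach_R2 hRina hua, haE⟩

end Ctx
end FPD

namespace FPD
namespace Ctx

variable {V : Type u} (C : Ctx V)

lemma A0_ne : C.A0 ≠ [] := by
  intro h
  apply C.hur
  have hh := C.q0_head?
  rw [C.hverts, h] at hh
  simpa using hh

lemma q0trunc_head? : (C.A0 ++ [C.u, C.v]).head? = some C.r := by
  have hh := C.q0_head?
  rw [C.hverts, List.head?_append_of_ne_nil _ C.A0_ne] at hh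
  rw [List.head?_append_of_ne_nil _ C.A0_ne]
  exact hh

lemma q0trunc_getLast? : (C.A0 ++ [C.u, C.v]).getLast? = some C.v := by
  rw [show C.A0 ++ [C.u, C.v] = (C.A0 ++ [C.u]) ++ [C.v] by simp,
    List.getLast?_concat]

lemma q0trunc_nodup : (C.A0 ++ [C.u, C.v]).Nodup :=
  C.q0trunc_prefix.sublist.nodup C.q0_nodup

lemma q0trunc_chain :
    List.Chain' (fun a b => (a, b) ∈ C.D) (C.A0 ++ [C.u, C.v]) := by
  have h := (C.path_props C.hq0).1
  rw [IsPathIn] at h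
  exact h.prefix C.q0trunc_prefix

/-- The distinguished fan path through `uv`. -/
def qv : DiPath V := ⟨C.A0 ++ [C.u, C.v], by simp, C.q0trunc_nodup⟩

lemma qv_mem : C.qv ∈ C.PF := Or.inl (Or.inl rfl)

lemma qv_lastEdge : (C.qv).lastEdge = some (C.u, C.v) := by
  rw [DiPath.lastEdge]
  exact zip_getLast?_iff.mpr ⟨C.A0, rfl⟩

lemma marker_as_ne {p : DiPath V} (hp : p ∈ C.Q0) {as z bs}
    (hd : p.verts = as ++ z :: bs) (hr : C.Reach false z) : as ≠ [] := by
  rintro rfl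
  apply C.reach_in_ne_r hr
  have hh := C.verts_head? hp
  rw [hd] at hh
  simpa using hh

lemma marker_trunc_prefix {p : DiPath V} {as z bs} (hd : p.verts = as ++ z :: bs) :
    (as ++ [z]) <+: p.verts := ⟨bs, by rw [hd]; simp⟩

lemma marker_trunc_head? {p : DiPath V} (hp : p ∈ C.Q0) {as z bs}
    (hd : p.verts = as ++ z :: bs) (hr : C.Reach false z) :
    (as ++ [z]).head? = some C.r := by
  have hane := C.marker_as_ne hp hd hr
  have hh := C.verts_head? hp
  rw [hd, List.head?_append_of_ne_nil _ hane] at hh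
  rw [List.head?_append_of_ne_nil _ hane]
  exact hh

lemma marker_z_ne_w {z : V} (hr : C.Reach false z) : z ≠ C.w :=
  fun h => C.reach_not_excl hr (h ▸ C.w_in_excl)

lemma rw_nodup (h : (C.r, C.w) ∈ C.D) : ([C.r, C.w] : List V).Nodup := by
  simp only [List.nodup_cons, List.mem_singleton, List.nodup_nil, and_true,
    List.not_mem_nil, not_false_iff]
  intro he
  exact C.hwr he.symm

/-- members of the fan are paths in `D` starting at `r`. -/
lemma PF_paths : ∀ q ∈ C.PF, IsPathIn C.D q ∧ q.first = C.r := by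
  rintro q ((hq | hq) | hq)
  · constructor
    · rw [IsPathIn, hq]
      exact C.q0trunc_chain
    · rw [DiPath.first]
      apply head_eq_of_head?
      rw [hq]
      exact C.q0trunc_head?
  · obtain ⟨p, hp, hne, as, z, bs, hd, hr, hmax, hqv⟩ := hq
    constructor
    · rw [IsPathIn, hqv]
      have h := (C.path_props hp).1
      rw [IsPathIn] at h
      exact h.prefix (marker_trunc_prefix hd)
    · rw [DiPath.first]
      apply head_eq_of_head?
      rw [hqv]
      exact C.marker_trunc_head? hp hd hr
  · obtain ⟨hqv, hrw⟩ := hq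
    constructor
    · rw [IsPathIn, hqv]
      exact List.isChain_pair.mpr hrw
    · rw [DiPath.first]
      apply head_eq_of_head?
      rw [hqv]
      simp

lemma r_mem_fan {q : DiPath V} (hq : q ∈ C.PF) : C.r ∈ q.verts := by
  have h := (C.PF_paths q hq).2
  rw [DiPath.first] at h
  rw [← h]
  exact List.head_mem _

lemma w_notin_q0trunc' {x : V} (h1 : x ∈ C.A0 ++ [C.u, C.v]) : x ≠ C.w := by
  intro he
  rw [he] at h1
  exact C.w_not_in_q0trunc h1

/-- pairwise intersections of the fan. -/
lemma PF_pair : ∀ p ∈ C.PF, ∀ q ∈ C.PF, p ≠ q →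
    p.vertexSet ∩ q.vertexSet = {C.r} := by
  have hsub : ∀ p ∈ C.PF, ∀ q ∈ C.PF, p ≠ q →
      ∀ x, x ∈ p.verts → x ∈ q.verts → x = C.r := by
    rintro p ((hp | hp) | hp) q ((hq | hq) | hq) hne x hxp hxq
    · exact absurd (dipath_eq ((hp.trans hq.symm) : p.verts = q.verts)) hne
    · -- q0trunc vs marker
      obtain ⟨p', hp', hne', as, z, bs, hd, hr, hmax, hqv⟩ := hq
      rw [hp] at hxp
      rw [hqv] at hxq
      have hx0 : x ∈ (C.q0).verts := C.q0trunc_prefix.sublist.mem hxp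
      have hxp' : x ∈ p'.verts := (marker_trunc_prefix hd).sublist.mem hxq
      rcases C.mem_both C.hq0 hp' (fun h => hne' h.symm) hx0 hxp' with h | h
      · exact h
      · exact absurd (h ▸ hxp) C.w_not_in_q0trunc
    · -- q0trunc vs [r,w]
      obtain ⟨hqv, _⟩ := hq
      rw [hp] at hxp
      rw [hqv] at hxq
      rcases (by simpa using hxq : x = C.r ∨ x = C.w) with h | h
      · exact h
      · exact absurd (h ▸ hxp) C.w_not_in_q0trunc
    · -- marker vs q0trunc (symmetric)
      obtain ⟨p', hp', hne', as, z, bs, hd, hr, hmax, hqv⟩ := hp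
      rw [hqv] at hxp
      rw [hq] at hxq
      have hx0 : x ∈ (C.q0).verts := C.q0trunc_prefix.sublist.mem hxq
      have hxp' : x ∈ p'.verts := (marker_trunc_prefix hd).sublist.mem hxp
      rcases C.mem_both hp' C.hq0 hne' hxp' hx0 with h | h
      · exact h
      · exact absurd (h ▸ hxq) C.w_not_in_q0trunc
    · -- marker vs marker
      obtain ⟨p₁, hp₁, hne₁, as₁, z₁, bs₁, hd₁, hr₁, hmax₁, hqv₁⟩ := hp
      obtain ⟨p₂, hp₂, hne₂, as₂, z₂, bs₂, hd₂, hr₂, hmax₂, hqv₂⟩ := hq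
      by_cases hpp : p₁ = p₂
      · exfalso
        rw [hpp] at hd₁
        obtain ⟨hz, has⟩ := C.marker_unique hp₂ hd₁ hr₁ hmax₁ hd₂ hr₂ hmax₂
        apply hne
        apply dipath_eq
        rw [hqv₁, hqv₂, hz, has]
      · rw [hqv₁] at hxp
        rw [hqv₂] at hxq
        have hx₁ : x ∈ p₁.verts := (marker_trunc_prefix hd₁).sublist.mem hxp
        have hx₂ : x ∈ p₂.verts := (marker_trunc_prefix hd₂).sublist.mem hxq
        rcases C.mem_both hp₁ hp₂ hpp hx₁ hx₂ with h | h
        · exact h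
        · exact absurd hxp (h ▸ C.w_not_in_trunc hp₁ hd₁ (C.marker_z_ne_w hr₁))
    · -- marker vs [r,w]
      obtain ⟨p', hp', hne', as, z, bs, hd, hr, hmax, hqv⟩ := hp
      obtain ⟨hqv₂, _⟩ := hq
      rw [hqv] at hxp
      rw [hqv₂] at hxq
      rcases (by simpa using hxq : x = C.r ∨ x = C.w) with h | h
      · exact h
      · exact absurd hxp (h ▸ C.w_not_in_trunc hp' hd (C.marker_z_ne_w hr))
    · -- [r,w] vs q0trunc
      obtain ⟨hqv, _⟩ := hp
      rw [hqv] at hxp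
      rw [hq] at hxq
      rcases (by simpa using hxp : x = C.r ∨ x = C.w) with h | h
      · exact h
      · exact absurd (h ▸ hxq) C.w_not_in_q0trunc
    · -- [r,w] vs marker
      obtain ⟨hqv₁, _⟩ := hp
      obtain ⟨p', hp', hne', as, z, bs, hd, hr, hmax, hqv⟩ := hq
      rw [hqv₁] at hxp
      rw [hqv] at hxq
      rcases (by simpa using hxp : x = C.r ∨ x = C.w) with h | h
      · exact h
      · exact absurd hxq (h ▸ C.w_not_in_trunc hp' hd (C.marker_z_ne_w hr))
    · exact absurd (dipath_eq ((hp.1.trans hq.1.symm) : p.verts = q.verts)) hne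
  intro p hp q hq hne
  apply Set.eq_of_subset_of_subset
  · rintro x ⟨hx1, hx2⟩
    exact hsub p hp q hq hne x hx1 hx2
  · rintro x hx
    rw [Set.mem_singleton_iff] at hx
    subst hx
    exact ⟨C.r_mem_fan hp, C.r_mem_fan hq⟩

lemma PF_vplus : Vplus C.PF = C.SV := by
  ext x
  constructor
  · rintro ⟨q, hq, rfl⟩
    rcases hq with (hq | hq) | hq
    · left
      rw [DiPath.last]
      apply getLast_eq_of_getLast?
      rw [hq]
      exact C.q0trunc_getLast?
    · obtain ⟨p, hp, hne, as, z, bs, hd, hr, hmax, hqv⟩ := hq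
      right; left
      have : q.last = z := by
        rw [DiPath.last]
        apply getLast_eq_of_getLast?
        rw [hqv]
        exact List.getLast?_concat
      rw [this]
      exact ⟨p, hp, hne, as, bs, hd, hr, hmax⟩
    · obtain ⟨hqv, hrw⟩ := hq
      right; right
      have : q.last = C.w := by
        rw [DiPath.last]
        apply getLast_eq_of_getLast?
        rw [hqv]
        simp
      exact ⟨this, hrw⟩
  · rintro (hx | hx | hx)
    · refine ⟨C.qv, C.qv_mem, ?_⟩
      rw [hx, DiPath.last]
      apply getLast_eq_of_getLast?
      exact C.q0trunc_getLast?
    · obtain ⟨p, hp, hne, as, bs, hd, hr, hmax⟩ := hx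
      have hnd : (as ++ [x]).Nodup := (marker_trunc_prefix hd).sublist.nodup p.nodup
      refine ⟨⟨as ++ [x], by simp, hnd⟩, Or.inl (Or.inr
        ⟨p, hp, hne, as, x, bs, hd, hr, hmax, rfl⟩), ?_⟩
      rw [DiPath.last]
      apply getLast_eq_of_getLast?
      exact List.getLast?_concat
    · obtain ⟨hxw, hrw⟩ := hx
      refine ⟨⟨[C.r, C.w], by simp, C.rw_nodup hrw⟩, Or.inr ⟨rfl, hrw⟩, ?_⟩
      rw [hxw, DiPath.last]
      apply getLast_eq_of_getLast?
      simp

theorem main : ∃ S ⊆ ({x | x ≠ C.r} : Set V), C.v ∈ S ∧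
    ∃ P, Fan C.D C.r P ∧ Vplus P = S ∧
      (∀ p : DiPath V, IsPathIn C.D p → p.first = C.r →
        p.last ∈ Nminus C.D C.v \ {C.u} → ∃ s ∈ S, s ∈ p.verts) ∧
      ∃ p ∈ P, p.lastEdge = some (C.u, C.v) := by
  refine ⟨C.SV, C.SV_ne_r, Set.mem_insert _ _, C.PF, ⟨C.PF_paths, C.PF_pair⟩,
    C.PF_vplus, ?_, C.qv, C.qv_mem, C.qv_lastEdge⟩
  intro p hpath hfirst hlast
  by_contra hno
  push_neg at hno
  obtain ⟨g, hg, hRg, _⟩ := C.separation_aux p.verts p.ne hpath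
    (by rw [← hfirst, DiPath.first, List.head?_eq_head])
    (fun x hx hxSV => hno x hxSV hx)
  have hgp : g = p.last := by
    rw [DiPath.last]
    exact (getLast_eq_of_getLast? p.ne hg).symm
  obtain ⟨hgv, hgu⟩ := hlast
  have hgv' : (g, C.v) ∈ C.D := by rw [hgp]; exact hgv
  have hguv : (g, C.v) ≠ (C.u, C.v) := by
    intro h
    apply hgu
    rw [← hgp]
    exact congrArg Prod.fst h
  exact C.aug_false hRg hgv' hguv C.tar_v

end Ctx
end FPD

/-- If `in_D(w) ∈ 𝒢_D(w)` but `in_D(w) ∉ 𝒢_{D−uv}(w)` for an edge `uv` with `u ≠ r`,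
`v ≠ w`, then there is a set `S ∋ v` linked from `r` by a path-system `P` that
separates `N⁻_D(v) − u` from `r`; in particular `uv` is the last edge of a path of `P`. -/
theorem flame_property_destruction (D : Set (V × V)) (r : V)
    (hsimple : NoLoops D) (hroot : IsRoot D r)
    (w : V) (hw : w ≠ r) (hflame : inEdges D w ∈ GSet D r w)
    (u v : V) (he : (u, v) ∈ D) (hu : u ≠ r) (hvw : v ≠ w)
    (hnot : inEdges D w ∉ GSet (D \ {(u, v)}) r w) :
    ∃ S ⊆ ({x | x ≠ r} : Set V), v ∈ S ∧
      ∃ P, Fan D r P ∧ Vplus P = S ∧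
        (∀ p : DiPath V, IsPathIn D p → p.first = r → p.last ∈ Nminus D v \ {u} →
          ∃ s ∈ S, s ∈ p.verts) ∧
        ∃ p ∈ P, p.lastEdge = some (u, v) := by
  classical
  obtain ⟨hsub, Q0, hQ0, hEp⟩ := hflame
  -- some system path must use the edge uv
  have hq0ex : ∃ p ∈ Q0, ((u, v) : V × V) ∈ p.verts.zip p.verts.tail := by
    by_contra hno
    push_neg at hno
    apply hnot
    refine ⟨?_, Q0, ⟨?_, hQ0.2⟩, hEp⟩
    · rintro e ⟨heD, he2⟩
      refine ⟨⟨heD, ?_⟩, he2⟩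
      simp only [Set.mem_singleton_iff]
      intro heuv
      apply hvw
      rw [heuv] at he2
      exact he2
    · intro p hp
      obtain ⟨hpath, hf, hl⟩ := hQ0.1 p hp
      refine ⟨?_, hf, hl⟩
      rw [IsPathIn] at hpath ⊢
      rw [FPD.chain'_iff_zip] at hpath ⊢
      intro a b hm
      refine ⟨hpath a b hm, ?_⟩
      simp only [Set.mem_singleton_iff]
      intro heq
      apply hno p hp
      rw [← heq]
      exact hm
  obtain ⟨q0, hq0m, huvq⟩ := hq0ex
  obtain ⟨A0, T0, hsplit⟩ := FPD.mem_zip_iff.mp huvq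
  have hT0 : T0 ≠ [] := by
    intro hT
    apply hvw
    have hgl : q0.verts.getLast? = some w := by
      have hl := (hQ0.1 q0 hq0m).2.2
      rw [DiPath.last] at hl
      rw [← hl, List.getLast?_eq_getLast]
    rw [hsplit, hT] at hgl
    rw [show A0 ++ u :: v :: ([] : List V) = (A0 ++ [u]) ++ [v] by simp,
      List.getLast?_concat] at hgl
    exact Option.some.inj hgl
  exact (FPD.Ctx.main ⟨D, r, u, v, w, Q0, q0, A0, T0, hsimple, hroot, he, hu,
    hvw, hw, hnot, hQ0, hEp, hq0m, hsplit, hT0⟩)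
end
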